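/- arXiv:1911.05416 — 3 statements merged into one kernel-verified Lean document; each statement's English description precedes it below -/
import Mathlib

section
/- For every positive integer n and all non-atomic Borel probability measures μ_1, …, μ_n on [0,1], there exists a contiguous 1/3-envy-free allocation; that is, there exist cut points 0 = y_0 ≤ y_1 ≤ … ≤ y_n = 1 and a permutation π of {1,…,n} such that for all agents i and j, μ_i([y_{π(i)−1}, y_{π(i)}]) ≥ μ_i([y_{j−1}, y_j]) − 1/3. -/
open MeasureTheory Set ProbabilityTheory

lemma cdf_continuous (μ : Measure ℝ) [IsProbabilityMeasure μ] (h : ∀ x, μ {x} = 0) :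
    Continuous (cdf μ) := by
  rw [continuous_iff_continuousAt]
  intro x
  have hm : Monotone (cdf μ) := monotone_cdf μ
  rw [hm.continuousAt_iff_leftLim_eq_rightLim]
  have hr : Function.rightLim (cdf μ) x = cdf μ x := (cdf μ).rightLim_eq x
  have hs : (cdf μ).measure {x} = ENNReal.ofReal (cdf μ x - Function.leftLim (cdf μ) x) :=
    (cdf μ).measure_singleton x
  rw [measure_cdf, h x] at hs
  have h1 : cdf μ x - Function.leftLim (cdf μ) x ≤ 0 := by
    rwa [Eq.comm, ENNReal.ofReal_eq_zero] at hs
  have h2 : Function.leftLim (cdf μ) x ≤ cdf μ x := hm.leftLim_le le_rfl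
  rw [hr]
  linarith

lemma icc_val (μ : Measure ℝ) [IsProbabilityMeasure μ] (h : ∀ x, μ {x} = 0)
    {s t : ℝ} (hst : s ≤ t) :
    (μ (Icc s t)).toReal = cdf μ t - cdf μ s := by
  have h1 : Icc s t = Iic t \ Iio s := by
    ext u; simp [mem_Icc, mem_diff, not_lt, and_comm]
  have h2 : μ (Iio s) = μ (Iic s) := by
    rw [← Iic_diff_right, measure_diff_null (h s)]
  have h3 : μ (Icc s t) = μ (Iic t) - μ (Iic s) := by
    have hsub : Iio s ⊆ Iic t := fun u hu => le_trans (le_of_lt hu) hst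
    rw [h1, measure_diff hsub measurableSet_Iio.nullMeasurableSet (measure_ne_top μ _), h2]
  rw [h3, cdf_eq_real, cdf_eq_real, measureReal_def, measureReal_def,
    ENNReal.toReal_sub_of_le (measure_mono (Iic_subset_Iic.2 hst)) (measure_ne_top μ _)]

lemma exists_cut (k : ℕ) (a : ℝ) (ha : a ≤ 1) (μ : Fin (k+1) → Measure ℝ)
    (hp : ∀ i, IsProbabilityMeasure (μ i)) (hna : ∀ i x, μ i {x} = 0) :
    ∃ (x : ℝ) (i₀ : Fin (k+1)), a ≤ x ∧ x ≤ 1 ∧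
      (∀ i, (μ i (Icc a x)).toReal ≤ 1/3) ∧
      (1/3 ≤ (μ i₀ (Icc a x)).toReal ∨ x = 1) := by
  classical
  haveI := hp
  set F : Fin (k+1) → ℝ → ℝ := fun i t => cdf (μ i) t - cdf (μ i) a with hF
  have hgc : ∀ i, Continuous (F i) := fun i =>
    (cdf_continuous (μ i) (hna i)).sub continuous_const
  have hgm : ∀ i, Monotone (F i) := fun i s t hst => by
    have := monotone_cdf (μ i) hst; simp only [hF]; linarith
  have hicc : ∀ (i) {t : ℝ}, a ≤ t → (μ i (Icc a t)).toReal = F i t :=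
    fun i t hat => icc_val (μ i) (hna i) hat
  set S : Fin (k+1) → Set ℝ := fun i => Icc a 1 ∩ (F i) ⁻¹' Ici (1/3) with hS
  have hcl : ∀ i, IsClosed (S i) := fun i =>
    isClosed_Icc.inter (isClosed_Ici.preimage (hgc i))
  have hbdd : ∀ i, BddBelow (S i) := fun i => ⟨a, fun t ht => ht.1.1⟩
  set T : Fin (k+1) → ℝ := fun i => if h : (S i).Nonempty then sInf (S i) else 1 with hT
  have hTpos : ∀ i, (S i).Nonempty → T i = sInf (S i) := fun i h => dif_pos h
  have hTneg : ∀ i, ¬(S i).Nonempty → T i = 1 := fun i h => dif_neg h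
  have c1 : ∀ i, T i ∈ Icc a 1 := by
    intro i
    by_cases h : (S i).Nonempty
    · rw [hTpos i h]
      exact ((hcl i).csInf_mem h (hbdd i)).1
    · rw [hTneg i h]
      exact ⟨ha, le_rfl⟩
  have c2 : ∀ i, F i (T i) ≤ 1/3 := by
    intro i
    by_cases h : (S i).Nonempty
    · rw [hTpos i h]
      set c := sInf (S i) with hc
      by_contra hgt
      push_neg at hgt
      have hac : a ≤ c := (c1 i).1.trans_eq (hTpos i h)
      have hac' : a < c := by
        rcases lt_or_eq_of_le hac with h' | h'
        · exact h'
        · exfalso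
          have : F i a = 0 := by simp [hF]
          rw [← h', this] at hgt; norm_num at hgt
      have hU : IsOpen ((F i) ⁻¹' Ioi (1/3)) := isOpen_Ioi.preimage (hgc i)
      obtain ⟨δ, hδ, hball⟩ := Metric.isOpen_iff.1 hU c hgt
      set t := max a (c - δ/2) with ht
      have htc : t < c := max_lt hac' (by linarith)
      have htball : t ∈ Metric.ball c δ := by
        rw [Real.ball_eq_Ioo]
        constructor
        · have : c - δ/2 ≤ t := le_max_right _ _
          linarith
        · linarith
      have htS : t ∈ S i := by
        have hc1 : c ≤ 1 := le_of_eq_of_le (hTpos i h).symm (c1 i).2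
        refine ⟨⟨le_max_left _ _, htc.le.trans hc1⟩, ?_⟩
        exact le_of_lt (Set.mem_Ioi.mp (Set.mem_preimage.mp (hball htball)))
      exact absurd (csInf_le (hbdd i) htS) (not_le.2 htc)
    · rw [hTneg i h]
      by_contra hgt
      push_neg at hgt
      exact h ⟨1, ⟨ha, le_rfl⟩, hgt.le⟩
  obtain ⟨i₀, -, hmin⟩ := Finset.exists_min_image Finset.univ T ⟨0, Finset.mem_univ 0⟩
  refine ⟨T i₀, i₀, (c1 i₀).1, (c1 i₀).2, ?_, ?_⟩
  · intro i
    rw [hicc i (c1 i₀).1]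
    exact le_trans (hgm i (hmin i (Finset.mem_univ i))) (c2 i)
  · by_cases h : (S i₀).Nonempty
    · left
      rw [hicc i₀ (c1 i₀).1, hTpos i₀ h]
      exact ((hcl i₀).csInf_mem h (hbdd i₀)).2
    · right; exact hTneg i₀ h

lemma claim : ∀ (m : ℕ) (a : ℝ), a ≤ 1 →
    ∀ (μ : Fin (m+1) → Measure ℝ),
    (∀ i, IsProbabilityMeasure (μ i)) →
    (∀ i x, μ i {x} = 0) →
    ∃ (y : Fin (m+2) → ℝ) (σ : Equiv.Perm (Fin (m+1))),
      Monotone y ∧ y 0 = a ∧ y (Fin.last (m+1)) = 1 ∧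
      ∀ i, 1/3 ≤ (μ i (Icc (y (σ i).castSucc) (y (σ i).succ))).toReal ∨
           ∀ j : Fin (m+1), (μ i (Icc (y j.castSucc) (y j.succ))).toReal ≤ 1/3 := by
  intro m
  induction m with
  | zero =>
    intro a ha μ hp hna
    refine ⟨![a, 1], 1, ?_, rfl, rfl, ?_⟩
    · intro s t hst
      fin_cases s <;> fin_cases t <;> simp_all
    · intro i
      have hi : i = 0 := Fin.fin_one_eq_zero i
      subst hi
      rcases le_total (1/3 : ℝ) ((μ 0 (Icc (![a,1] ((0:Fin 1).castSucc)) (![a,1] ((0:Fin 1).succ)))).toReal) with h | h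
      · exact Or.inl h
      · refine Or.inr fun j => ?_
        have hj : j = 0 := Fin.fin_one_eq_zero j
        subst hj; exact h
  | succ m IH =>
    intro a ha μ hp hna
    obtain ⟨x, i₀, hax, hx1, hle, hstar⟩ := exists_cut (m+1) a ha μ hp hna
    obtain ⟨y', σ', hy'mono, hy'0, hy'last, hy'cond⟩ :=
      IH x hx1 (fun r => μ (i₀.succAbove r)) (fun r => hp _) (fun r => hna _)
    set y : Fin (m+3) → ℝ := Fin.cons a y' with hy
    set σ : Equiv.Perm (Fin (m+2)) :=
      (finSuccEquiv' i₀).trans ((Equiv.optionCongr σ').trans (finSuccEquiv (m+1)).symm) with hσ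
    have hσ₀ : σ i₀ = 0 := by
      simp [hσ, finSuccEquiv'_at, finSuccEquiv_symm_none]
    have hσs : ∀ r, σ (i₀.succAbove r) = (σ' r).succ := by
      intro r
      simp [hσ, finSuccEquiv'_succAbove, finSuccEquiv_symm_some]
    have hy0 : y 0 = a := Fin.cons_zero _ _
    have hysucc : ∀ k : Fin (m+2), y k.succ = y' k := fun k => Fin.cons_succ _ _ _
    have hycs : ∀ r : Fin (m+1), y (Fin.succ r).castSucc = y' r.castSucc := by
      intro r
      rw [← Fin.succ_castSucc, hysucc]
    have hy1 : y (Fin.succ (0 : Fin (m+1))).castSucc = x := by rw [hycs, Fin.castSucc_zero, hy'0]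
    have hymono : Monotone y := by
      have : ∀ k : Fin (m+2), y k.castSucc ≤ y k.succ := by
        intro k
        induction k using Fin.cases with
        | zero =>
          rw [Fin.castSucc_zero, hy0, hysucc, hy'0]; exact hax
        | succ r =>
          rw [hycs, hysucc]
          exact hy'mono (Fin.castSucc_lt_succ (i := r)).le
      intro s t hst
      exact Fin.monotone_iff_le_succ.mpr this hst
    have hylast : y (Fin.last (m+2)) = 1 := by
      rw [← Fin.succ_last, hysucc, hy'last]
    have hpiece0 : Icc (y ((0 : Fin (m+2)).castSucc)) (y ((0 : Fin (m+2)).succ)) = Icc a x := by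
      rw [Fin.castSucc_zero, hy0, Fin.succ_zero_eq_one]
      have : (1 : Fin (m+3)) = Fin.succ 0 := (Fin.succ_zero_eq_one).symm
      rw [this, hysucc, hy'0]
    have hpieceS : ∀ r : Fin (m+1),
        Icc (y ((Fin.succ r).castSucc)) (y ((Fin.succ r).succ)) =
          Icc (y' r.castSucc) (y' r.succ) := by
      intro r
      rw [hycs, hysucc]
    refine ⟨y, σ, hymono, hy0, hylast, ?_⟩
    intro i
    by_cases hi : i = i₀
    · subst hi
      rw [hσ₀, hpiece0]
      rcases hstar with h13 | hxeq
      · exact Or.inl h13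
      · refine Or.inr fun j => ?_
        induction j using Fin.cases with
        | zero => rw [hpiece0]; exact hle i
        | succ r =>
          rw [hpieceS]
          have hconst : ∀ k, y' k = 1 := by
            intro k
            refine le_antisymm (hy'last ▸ hy'mono (Fin.le_last k)) ?_
            have := hy'mono (Fin.zero_le k)
            rw [hy'0, hxeq] at this
            exact this
          rw [hconst, hconst, Icc_self, hna i 1]
          norm_num
    · obtain ⟨r, rfl⟩ := Fin.exists_succAbove_eq hi
      rw [hσs r, hpieceS]
      rcases hy'cond r with h13 | hq
      · exact Or.inl h13
      · refine Or.inr fun j => ?_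
        induction j using Fin.cases with
        | zero => rw [hpiece0]; exact hle _
        | succ r' => rw [hpieceS]; exact hq r'

lemma inter_null (μ : Measure ℝ) (hna : ∀ x, μ {x} = 0) {N : ℕ} (y : Fin (N+1) → ℝ)
    (hy : Monotone y) {k l : Fin N} (h : k < l) :
    μ (Icc (y k.castSucc) (y k.succ) ∩ Icc (y l.castSucc) (y l.succ)) = 0 := by
  have hsub : Icc (y k.castSucc) (y k.succ) ∩ Icc (y l.castSucc) (y l.succ) ⊆ {y k.succ} := by
    intro u hu
    have h3 : y k.succ ≤ y l.castSucc := hy (Fin.succ_le_castSucc_iff.mpr h)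
    exact le_antisymm hu.1.2 (h3.trans hu.2.1)
  exact measure_mono_null hsub (hna _)

/-- For every positive integer `n` and all non-atomic Borel probability
measures `μ 1, …, μ n` on `[0,1]`, there exists a contiguous `1/3`-envy-free allocation:
cut points `0 = y 0 ≤ y 1 ≤ … ≤ y n = 1` and a permutation `π` of the agents such that
for all agents `i, j`, `μ i [y (π i - 1), y (π i)] ≥ μ i [y (π j - 1), y (π j)] - 1/3`. -/
theorem contiguous_one_third_envy_free_exists
    (n : ℕ) (hn : 0 < n) (μ : Fin n → MeasureTheory.Measure ℝ)
    (hμ : ∀ i, μ i (Set.Icc (0 : ℝ) 1) = 1)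
    (htotal : ∀ i, MeasureTheory.IsProbabilityMeasure (μ i))
    (hna : ∀ (i : Fin n) (x : ℝ), μ i {x} = 0) :
    ∃ (y : Fin (n + 1) → ℝ) (π : Equiv.Perm (Fin n)),
      Monotone y ∧ y 0 = 0 ∧ y (Fin.last n) = 1 ∧
      ∀ i j : Fin n,
        (μ i (Set.Icc (y (π i).castSucc) (y (π i).succ))).toReal ≥
          (μ i (Set.Icc (y (π j).castSucc) (y (π j).succ))).toReal - 1 / 3 := by
  obtain ⟨m, rfl⟩ : ∃ m, n = m + 1 := ⟨n - 1, (Nat.succ_pred_eq_of_pos hn).symm⟩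
  obtain ⟨y, σ, hmono, h0, hlast, hcond⟩ := claim m 0 zero_le_one μ htotal hna
  refine ⟨y, σ, hmono, h0, hlast, ?_⟩
  intro i j
  haveI := htotal i
  set Pi := Icc (y (σ i).castSucc) (y (σ i).succ) with hPi
  set Pj := Icc (y (σ j).castSucc) (y (σ j).succ) with hPj
  have hnn : (0:ℝ) ≤ (μ i Pi).toReal := ENNReal.toReal_nonneg
  rcases hcond i with h13 | hq
  · by_cases hij : σ i = σ j
    · rw [hPi, hPj, hij]; linarith [ENNReal.toReal_nonneg (a := μ i (Icc (y (σ j).castSucc) (y (σ j).succ)))]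
    · have hinter : μ i (Pi ∩ Pj) = 0 := by
        rcases lt_or_gt_of_ne hij with h | h
        · exact inter_null (μ i) (hna i) y hmono h
        · rw [Set.inter_comm]
          exact inter_null (μ i) (hna i) y hmono h
      have hsum : μ i Pi + μ i Pj ≤ 1 := by
        rw [← measure_union_add_inter Pi (measurableSet_Icc : MeasurableSet Pj), hinter, add_zero]
        exact (measure_mono (Set.subset_univ _)).trans (by simp)
      have htr : (μ i Pi).toReal + (μ i Pj).toReal ≤ 1 := by
        rw [← ENNReal.toReal_add (measure_ne_top _ _) (measure_ne_top _ _)]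
        have := ENNReal.toReal_mono (by norm_num) hsum
        simpa using this
      linarith
  · have h1 := hq (σ j)
    linarith
end

section
/- Let M ≥ 3 and k ≥ 1 be integers and let v_1,…,v_n be normalized piecewise constant valuations on [0,1] such that each density f_i has at most k value-blocks (maximal intervals on which f_i is constant and positive) and every breakpoint of f_i and every value taken by f_i is a rational number whose numerator and denominator are both at most M. If there exists a contiguous M^{−20kn}-envy-free allocation with permutation π, then there exists a contiguous exactly envy-free allocation with the same permutation π. -/
/-- `a * Q` is an integer. -/
def IsIntMul (Q : ℕ) (a : ℚ) : Prop := ∃ z : ℤ, a * Q = z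

namespace IsIntMul

lemma zero (Q : ℕ) : IsIntMul Q 0 := ⟨0, by simp⟩

lemma add {Q a b} (ha : IsIntMul Q a) (hb : IsIntMul Q b) : IsIntMul Q (a + b) := by
  obtain ⟨z, hz⟩ := ha; obtain ⟨w, hw⟩ := hb
  exact ⟨z + w, by push_cast [← hz, ← hw]; ring⟩

lemma neg {Q a} (ha : IsIntMul Q a) : IsIntMul Q (-a) := by
  obtain ⟨z, hz⟩ := ha; exact ⟨-z, by push_cast [← hz]; ring⟩

lemma sub {Q a b} (ha : IsIntMul Q a) (hb : IsIntMul Q b) : IsIntMul Q (a - b) := by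
  simpa [sub_eq_add_neg] using ha.add hb.neg

lemma mul {Q1 Q2 a b} (ha : IsIntMul Q1 a) (hb : IsIntMul Q2 b) :
    IsIntMul (Q1 * Q2) (a * b) := by
  obtain ⟨z, hz⟩ := ha; obtain ⟨w, hw⟩ := hb
  exact ⟨z * w, by push_cast [← hz, ← hw]; ring⟩

lemma of_dvd {Q Q' a} (h : Q ∣ Q') (ha : IsIntMul Q a) (hQ : 0 < Q) : IsIntMul Q' a := by
  obtain ⟨z, hz⟩ := ha
  obtain ⟨d, rfl⟩ := h
  exact ⟨z * d, by push_cast [← hz]; ring⟩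

lemma den (a : ℚ) : IsIntMul a.den a := ⟨a.num, by
  rw [mul_comm]; exact_mod_cast Rat.den_mul_eq_num a⟩

lemma of_den_dvd {Q : ℕ} {a : ℚ} (h : a.den ∣ Q) (hQ : 0 < Q) : IsIntMul Q a :=
  (den a).of_dvd h a.pos

lemma intCast (Q : ℕ) (z : ℤ) : IsIntMul Q z := ⟨z * Q, by push_cast; ring⟩

lemma int_mul {Q a} (z : ℤ) (ha : IsIntMul Q a) : IsIntMul Q (z * a) := by
  obtain ⟨w, hw⟩ := ha; exact ⟨z * w, by push_cast [← hw]; ring⟩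

lemma sum {ι : Type*} {s : Finset ι} {Q : ℕ} {g : ι → ℚ}
    (h : ∀ i ∈ s, IsIntMul Q (g i)) : IsIntMul Q (∑ i ∈ s, g i) := by
  classical
  induction s using Finset.induction_on with
  | empty => simpa using zero Q
  | insert _ _ hx ih =>
    rw [Finset.sum_insert hx]
    exact (h _ (Finset.mem_insert_self _ _)).add
      (ih fun i hi => h i (Finset.mem_insert_of_mem hi))

lemma prod {ι : Type*} {s : Finset ι} {Q : ι → ℕ} {g : ι → ℚ}
    (h : ∀ i ∈ s, IsIntMul (Q i) (g i)) : IsIntMul (∏ i ∈ s, Q i) (∏ i ∈ s, g i) := by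
  classical
  induction s using Finset.induction_on with
  | empty => exact ⟨1, by simp⟩
  | insert _ _ hx ih =>
    rw [Finset.prod_insert hx, Finset.prod_insert hx]
    exact (h _ (Finset.mem_insert_self _ _)).mul
      (ih fun i hi => h i (Finset.mem_insert_of_mem hi))

lemma one_le_abs {Q : ℕ} {a : ℚ} (h : IsIntMul Q a) (ha : a ≠ 0) (hQ : 0 < Q) :
    1 ≤ |a| * Q := by
  obtain ⟨z, hz⟩ := h
  have hz0 : z ≠ 0 := by
    rintro rfl
    simp only [Int.cast_zero] at hz
    rcases mul_eq_zero.1 hz with h | h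
    · exact ha h
    · exact absurd h (by exact_mod_cast hQ.ne')
  have : (1 : ℚ) ≤ |(z : ℚ)| := by
    rw [← Int.cast_abs]; exact_mod_cast Int.one_le_abs hz0
  calc (1:ℚ) ≤ |(z:ℚ)| := this
  _ = |a * Q| := by rw [hz]
  _ = |a| * Q := by rw [abs_mul, abs_of_nonneg (by positivity : (0:ℚ) ≤ (Q:ℚ))]

end IsIntMul

section Det
open Matrix
variable {V : Type*} [Fintype V] [DecidableEq V]

lemma det_isIntMul (B : Matrix V V ℚ) (Q : V → ℕ) (hQ : ∀ τ, 0 < Q τ)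
    (h : ∀ τ j, IsIntMul (Q τ) (B τ j)) : IsIntMul (∏ τ, Q τ) B.det := by
  rw [Matrix.det_apply']
  refine IsIntMul.sum fun σ _ => ?_
  have : (∏ τ, Q τ) = ∏ i, Q (σ i) := (Equiv.prod_comp σ (fun τ => Q τ)).symm
  rw [this]
  exact IsIntMul.int_mul _ (IsIntMul.prod fun i _ => h (σ i) i)

lemma det_abs_le_prod_colsum (B : Matrix V V ℚ) :
    |B.det| ≤ ∏ j, ∑ τ, |B τ j| := by
  classical
  rw [Matrix.det_apply']
  calc |∑ σ : Equiv.Perm V, ((Equiv.Perm.sign σ : ℤ) : ℚ) * ∏ i, B (σ i) i|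
      ≤ ∑ σ : Equiv.Perm V, |((Equiv.Perm.sign σ : ℤ) : ℚ) * ∏ i, B (σ i) i| :=
        Finset.abs_sum_le_sum_abs _ _
    _ = ∑ σ : Equiv.Perm V, ∏ i, |B (σ i) i| := by
        refine Finset.sum_congr rfl fun σ _ => ?_
        rw [abs_mul, Finset.abs_prod]
        have : |((Equiv.Perm.sign σ : ℤ) : ℚ)| = 1 := by
          rcases Int.units_eq_one_or (Equiv.Perm.sign σ) with h | h <;> simp [h]
        rw [this, one_mul]
    _ = ∑ g ∈ (Finset.univ : Finset (Equiv.Perm V)).image (fun σ : Equiv.Perm V => fun v => σ v),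
          ∏ i, |B (g i) i| := by
        rw [Finset.sum_image]
        intro σ _ τ _ hst
        exact Equiv.coe_fn_injective hst
    _ ≤ ∑ g ∈ Fintype.piFinset (fun _ : V => (Finset.univ : Finset V)),
          ∏ i, |B (g i) i| := by
        refine Finset.sum_le_sum_of_subset_of_nonneg ?_ ?_
        · intro g _
          simp only [Fintype.mem_piFinset]
          intros; exact Finset.mem_univ _
        · intro g _ _; positivity
    _ = ∏ j, ∑ τ, |B τ j| := by
        rw [Finset.prod_univ_sum]
end Det

section LP
open Matrix
variable {V R : Type*} [Fintype V] [DecidableEq V] [Fintype R] [Nonempty V]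

noncomputable def dotR (a : V → ℚ) (x : V → ℝ) : ℝ := ∑ j, (a j : ℝ) * x j

lemma dotR_add (a : V → ℚ) (x u : V → ℝ) : dotR a (x + u) = dotR a x + dotR a u := by
  simp only [dotR, Pi.add_apply, mul_add, Finset.sum_add_distrib]

lemma dotR_sub (a : V → ℚ) (x u : V → ℝ) : dotR a (x - u) = dotR a x - dotR a u := by
  simp only [dotR, Pi.sub_apply, mul_sub, Finset.sum_sub_distrib]

lemma dotR_smul (a : V → ℚ) (d : ℝ) (u : V → ℝ) : dotR a (d • u) = d * dotR a u := by
  simp only [dotR, Pi.smul_apply, smul_eq_mul, Finset.mul_sum]; congr 1; ext j; ring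

theorem lp_key (A : R → V → ℚ) (b : R → ℚ)
    (P : Set (V → ℝ)) (hPdef : P = {x | ∀ r, dotR (A r) x ≤ b r})
    (hPc : IsCompact P) (x₀ : V → ℝ) (hx₀ : x₀ ∈ P) (t0 : V) :
    ∃ xs ∈ P, (∀ z ∈ P, xs t0 ≤ z t0) ∧
      ∃ Sel : V → R, ∃ xq : V → ℚ,
        (∀ j, xs j = (xq j : ℝ)) ∧
        ∃ dB N : ℚ,
          dB = (Matrix.of fun τ j => A (Sel τ) j).det ∧
          N = ((Matrix.of fun τ j => A (Sel τ) j).updateCol t0 (fun τ => b (Sel τ))).det ∧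
          dB ≠ 0 ∧ xq t0 = dB⁻¹ * N := by
  classical
  set D := Fintype.card V with hD
  have hD0 : 0 < D := Fintype.card_pos
  -- enumeration of coordinates with t0 first
  set e1 : Fin D ≃ V := (Fintype.equivFin V).symm with he1
  set e : Fin D ≃ V := e1.trans (Equiv.swap (e1 ⟨0, hD0⟩) t0) with he
  have he0 : e ⟨0, hD0⟩ = t0 := by
    simp [he, Equiv.swap_apply_left]
  -- iterated coordinate minimization
  let S : ℕ → Set (V → ℝ) := fun m => Nat.rec P
    (fun m' Sm' => if h : m' < D then
        {x | x ∈ Sm' ∧ ∀ z ∈ Sm', x (e ⟨m', h⟩) ≤ z (e ⟨m', h⟩)}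
      else Sm') m
  have hS0 : S 0 = P := rfl
  have hSsucc : ∀ m (h : m < D), S (m+1) =
      {x | x ∈ S m ∧ ∀ z ∈ S m, x (e ⟨m, h⟩) ≤ z (e ⟨m, h⟩)} := by
    intro m h; simp only [S]; rw [dif_pos h]
  have hSsucc' : ∀ m, ¬ (m < D) → S (m+1) = S m := by
    intro m h; simp only [S]; rw [dif_neg h]
  have hbasic : ∀ m, S m ⊆ P ∧ IsCompact (S m) ∧ (S m).Nonempty := by
    intro m
    induction m with
    | zero => exact ⟨le_refl _, hPc, ⟨x₀, hx₀⟩⟩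
    | succ m ih =>
      obtain ⟨hsub, hcomp, hne⟩ := ih
      by_cases h : m < D
      · rw [hSsucc m h]
        set c := e ⟨m, h⟩
        obtain ⟨w, hw, hwmin⟩ := hcomp.exists_isMinOn hne
          ((continuous_apply c).continuousOn)
        refine ⟨fun x hx => hsub hx.1, ?_, ⟨w, hw, fun z hz => hwmin hz⟩⟩
        · have : {x | x ∈ S m ∧ ∀ z ∈ S m, x c ≤ z c}
              = S m ∩ (⋂ z ∈ S m, {x | x c ≤ z c}) := by
            ext x; simp [Set.mem_iInter]
          rw [this]
          exact hcomp.inter_right (isClosed_biInter fun z _ =>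
            isClosed_le (continuous_apply c) continuous_const)
      · rw [hSsucc' m h]; exact ⟨hsub, hcomp, hne⟩
  -- invariant
  have hinv : ∀ m, ∀ x ∈ S m, ∀ u : V → ℝ, x + u ∈ P → x - u ∈ P →
      (x + u ∈ S m ∧ x - u ∈ S m ∧ ∀ l : Fin D, (l : ℕ) < m → u (e l) = 0) := by
    intro m
    induction m with
    | zero => exact fun x hx u h1 h2 => ⟨h1, h2, fun l hl => absurd hl (by omega)⟩
    | succ m ih =>
      intro x hx u h1 h2
      by_cases h : m < D
      · rw [hSsucc m h] at hx ⊢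
        obtain ⟨hxm, hxmin⟩ := hx
        obtain ⟨hp, hm, hl⟩ := ih x hxm u h1 h2
        have e1 : u (e ⟨m, h⟩) = 0 := by
          have a1 := hxmin _ hp
          have a2 := hxmin _ hm
          simp only [Pi.add_apply, Pi.sub_apply] at a1 a2
          linarith
        have hx2 : ∀ l : Fin D, (l : ℕ) < m + 1 → u (e l) = 0 := by
          intro l hlm
          rcases Nat.lt_succ_iff_lt_or_eq.1 hlm with h' | h'
          · exact hl l h'
          · have : l = ⟨m, h⟩ := Fin.ext h'
            rw [this]; exact e1
        refine ⟨⟨hp, fun z hz => ?_⟩, ⟨hm, fun z hz => ?_⟩, hx2⟩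
        · simp only [Pi.add_apply, e1, add_zero]; exact hxmin z hz
        · simp only [Pi.sub_apply, e1, sub_zero]; exact hxmin z hz
      · rw [hSsucc' m h] at hx ⊢
        obtain ⟨hp, hm, hl⟩ := ih x hx u h1 h2
        exact ⟨hp, hm, fun l hlm => hl l (lt_of_lt_of_le l.2 (le_of_not_gt h))⟩
  -- the minimizer
  obtain ⟨hsubP, hcompD, ⟨xs, hxs⟩⟩ := hbasic D
  have hxsP : xs ∈ P := hsubP hxs
  have hSmono : ∀ m m', m ≤ m' → S m' ⊆ S m := by
    intro m m' hmm'
    induction m' with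
    | zero => rw [Nat.le_zero.1 hmm']
    | succ m' ih =>
      rcases Nat.le_succ_iff.1 hmm' with h | h
      · refine le_trans ?_ (ih h)
        by_cases hlt : m' < D
        · rw [hSsucc m' hlt]; exact fun x hx => hx.1
        · rw [hSsucc' m' hlt]
      · rw [h]
  have hmin : ∀ z ∈ P, xs t0 ≤ z t0 := by
    have h1 : xs ∈ S 1 := hSmono 1 D hD0 hxs
    have key := hSsucc 0 hD0
    rw [Nat.zero_add] at key
    rw [key] at h1
    rw [← hS0]
    intro z hz
    have := h1.2 z hz
    rwa [he0] at this
  -- active rows span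
  have hspan0 : ∀ u : V → ℝ,
      (∀ r, dotR (A r) xs = b r → dotR (A r) u = 0) → u = 0 := by
    intro u hu
    -- find δ > 0 keeping xs ± δ u in P
    set g : R → ℝ := fun r => if dotR (A r) xs = b r then 1
      else (b r - dotR (A r) xs) / (|dotR (A r) u| + 1) with hg
    have hgpos : ∀ r, 0 < g r := by
      intro r
      simp only [hg]
      by_cases h : dotR (A r) xs = b r
      · simp [h]
      · rw [if_neg h]
        have hle : dotR (A r) xs ≤ b r := by
          rw [hPdef] at hxsP; exact hxsP r
        have : dotR (A r) xs < b r := lt_of_le_of_ne hle h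
        apply div_pos (by linarith) (by positivity)
    set δ : ℝ := if hR : (Finset.univ : Finset R).Nonempty
      then min 1 (Finset.univ.inf' hR g) else 1 with hδ
    have hδpos : 0 < δ := by
      rw [hδ]
      split
      · rename_i hR
        exact lt_min one_pos ((Finset.lt_inf'_iff hR).2 fun r _ => hgpos r)
      · exact one_pos
    have hδg : ∀ r, δ ≤ g r := by
      intro r
      rw [hδ]
      rw [dif_pos ⟨r, Finset.mem_univ r⟩]
      exact le_trans (min_le_right _ _) (Finset.inf'_le g (Finset.mem_univ r))
    have hmem : ∀ (s : ℝ), |s| = δ → xs + s • u ∈ P := by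
      intro s hs
      rw [hPdef]
      intro r
      rw [dotR_add, dotR_smul]
      by_cases h : dotR (A r) xs = b r
      · rw [hu r h, mul_zero, add_zero, h]
      · have hle : dotR (A r) xs ≤ b r := by rw [hPdef] at hxsP; exact hxsP r
        have h1 : s * dotR (A r) u ≤ δ * |dotR (A r) u| := by
          calc s * dotR (A r) u ≤ |s * dotR (A r) u| := le_abs_self _
          _ = δ * |dotR (A r) u| := by rw [abs_mul, hs]
        have h2 : δ * |dotR (A r) u| ≤ g r * |dotR (A r) u| := by
          apply mul_le_mul_of_nonneg_right (hδg r) (abs_nonneg _)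
        have h3 : g r * |dotR (A r) u| < b r - dotR (A r) xs := by
          simp only [hg]
          rw [if_neg h]
          rw [div_mul_eq_mul_div, div_lt_iff₀ (by positivity)]
          have hlt : dotR (A r) xs < b r := lt_of_le_of_ne hle h
          nlinarith [abs_nonneg (dotR (A r) u)]
        linarith
    have hplus : xs + δ • u ∈ P := hmem δ (abs_of_pos hδpos)
    have hminus : xs - δ • u ∈ P := by
      have := hmem (-δ) (by rw [abs_neg, abs_of_pos hδpos])
      rwa [neg_smul, ← sub_eq_add_neg] at this
    obtain ⟨-, -, hzero⟩ := hinv D xs hxs (δ • u) hplus hminus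
    funext j
    have : (δ • u) (e (e.symm j)) = 0 := hzero (e.symm j) (e.symm j).2
    rw [Equiv.apply_symm_apply] at this
    simp only [Pi.smul_apply, smul_eq_mul] at this
    have := (mul_eq_zero.1 this).resolve_left (ne_of_gt hδpos)
    simpa using this
  -- row vectors and active set
  set ρ : R → (V → ℝ) := fun r j => (A r j : ℝ) with hρ
  set Ract : Set R := {r | dotR (A r) xs = b r} with hRact
  have hspan : Submodule.span ℝ (ρ '' Ract) = ⊤ := by
    by_contra hne
    obtain ⟨φ, hφ0, hφmap⟩ := Submodule.exists_dual_map_eq_bot_of_lt_top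
      (lt_top_iff_ne_top.2 hne) inferInstance
    have hφv : ∀ v ∈ Submodule.span ℝ (ρ '' Ract), φ v = 0 := by
      intro v hv
      have h2 : φ v ∈ Submodule.map φ (Submodule.span ℝ (ρ '' Ract)) :=
        Submodule.mem_map_of_mem hv
      rw [hφmap] at h2
      simpa using h2
    set u : V → ℝ := fun j => φ (Pi.single j 1) with hu
    have hexp : ∀ v : V → ℝ, φ v = ∑ j, v j * u j := by
      intro v
      conv_lhs => rw [← (Pi.basisFun ℝ V).sum_repr v]
      rw [map_sum]
      refine Finset.sum_congr rfl fun j _ => ?_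
      rw [_root_.map_smul, Pi.basisFun_repr, smul_eq_mul]
      congr 1
      simp [hu, Pi.basisFun_apply]
    have hu0 : u = 0 := by
      apply hspan0
      intro r hr
      have : ρ r ∈ Submodule.span ℝ (ρ '' Ract) :=
        Submodule.subset_span ⟨r, hr, rfl⟩
      have h3 := hφv _ this
      rw [hexp] at h3
      rw [← h3]
      rfl
    refine hφ0 (LinearMap.ext fun v => ?_)
    rw [hexp, hu0]
    simp
  obtain ⟨bset, hbsub, hbspan, hbli⟩ := exists_linearIndependent ℝ (ρ '' Ract)
  rw [hspan] at hbspan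
  have hbfin : bset.Finite := hbli.setFinite
  haveI := hbfin.fintype
  obtain ⟨hbasis, hbasis_eq⟩ : ∃ Bb : Module.Basis ↥bset ℝ (V → ℝ), ∀ i, Bb i = ↑i :=
    ⟨Module.Basis.mk hbli (by rw [Subtype.range_coe, hbspan]), fun i => Module.Basis.mk_apply _ _ i⟩
  have hcard : Fintype.card ↥bset = Fintype.card V := by
    rw [← Module.finrank_eq_card_basis hbasis, Module.finrank_fintype_fun_eq_card]
  have gEquiv : ↥bset ≃ V := Fintype.equivOfCardEq hcard
  have hsel : ∀ τ : V, ∃ r : R, r ∈ Ract ∧ ρ r = ((gEquiv.symm τ : ↥bset) : V → ℝ) := by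
    intro τ
    have : ((gEquiv.symm τ : ↥bset) : V → ℝ) ∈ ρ '' Ract := hbsub (gEquiv.symm τ).2
    obtain ⟨r, hr1, hr2⟩ := this
    exact ⟨r, hr1, hr2⟩
  choose Sel hSelAct hSelρ using hsel
  set B : Matrix V V ℚ := Matrix.of (fun τ j => A (Sel τ) j) with hB
  set Bℝ : Matrix V V ℝ := (Rat.castHom ℝ).mapMatrix B with hBR
  have hBRentry : ∀ τ j, Bℝ τ j = (A (Sel τ) j : ℝ) := fun τ j => rfl
  have hrowsli : LinearIndependent ℝ (fun τ : V => ((gEquiv.symm τ : ↥bset) : V → ℝ)) := by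
    have h1 := (hbasis.reindex gEquiv).linearIndependent
    have h2 : ⇑(hbasis.reindex gEquiv) = fun τ : V => ((gEquiv.symm τ : ↥bset) : V → ℝ) := by
      funext τ
      rw [Module.Basis.reindex_apply, hbasis_eq]
    rwa [h2] at h1
  have hdetB : B.det ≠ 0 := by
    intro h0
    have hdR : Bℝ.det = 0 := by
      rw [hBR, ← RingHom.map_det, h0, map_zero]
    have hdRT : Bℝ.transpose.det = 0 := by rw [Matrix.det_transpose]; exact hdR
    obtain ⟨v, hv0, hvmul⟩ := Matrix.exists_mulVec_eq_zero_iff.2 hdRT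
    have : ∀ g : V → ℝ, (∑ τ, g τ • (fun j => (A (Sel τ) j : ℝ))) = 0 → ∀ τ, g τ = 0 := by
      have := Fintype.linearIndependent_iff.1 hrowsli
      intro g hg
      apply this g
      rw [← hg]
      refine Finset.sum_congr rfl fun τ _ => ?_
      rw [← hSelρ τ]
    apply hv0
    funext τ
    refine this v ?_ τ
    funext j
    have h5 := congrFun hvmul j
    simp only [Matrix.mulVec, dotProduct, Matrix.transpose_apply,
      Pi.zero_apply] at h5
    simp only [Finset.sum_apply, Pi.smul_apply, smul_eq_mul, Pi.zero_apply]
    rw [← h5]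
    exact Finset.sum_congr rfl fun τ' _ => mul_comm _ _
  set bq : V → ℚ := fun τ => b (Sel τ) with hbq
  set xq : V → ℚ := (B.det)⁻¹ • B.cramer bq with hxq
  have hsolve : B.mulVec xq = bq := by
    rw [hxq, Matrix.mulVec_smul, Matrix.mulVec_cramer, smul_smul,
      inv_mul_cancel₀ hdetB, one_smul]
  have hxscast : ∀ j, xs j = (xq j : ℝ) := by
    have hBxs : Bℝ.mulVec xs = fun τ => (bq τ : ℝ) := by
      funext τ
      have h1 : dotR (A (Sel τ)) xs = b (Sel τ) := hSelAct τ
      simp only [Matrix.mulVec, dotProduct]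
      rw [← h1]
      rfl
    have hBxq : Bℝ.mulVec (fun j => (xq j : ℝ)) = fun τ => (bq τ : ℝ) := by
      funext τ
      have := congrFun hsolve τ
      simp only [Matrix.mulVec, dotProduct] at this ⊢
      rw [← this]
      push_cast
      rfl
    by_contra hne
    push_neg at hne
    obtain ⟨j0, hj0⟩ := hne
    have hv0 : (xs - fun j => (xq j : ℝ)) ≠ 0 := by
      intro h
      apply hj0
      have := congrFun h j0
      simp only [Pi.sub_apply, Pi.zero_apply, sub_eq_zero] at this
      exact this
    have hvmul : Bℝ.mulVec (xs - fun j => (xq j : ℝ)) = 0 := by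
      rw [Matrix.mulVec_sub, hBxs, hBxq, sub_self]
    have : Bℝ.det = 0 := Matrix.exists_mulVec_eq_zero_iff.1 ⟨_, hv0, hvmul⟩
    rw [hBR, ← RingHom.map_det] at this
    simp only [Rat.coe_castHom, Rat.cast_eq_zero] at this
    exact hdetB this
  refine ⟨xs, hxsP, hmin, Sel, xq, hxscast, B.det, B.cramer bq t0, rfl, ?_, hdetB, ?_⟩
  · rw [Matrix.cramer_apply]
  · rw [hxq]
    simp [smul_eq_mul]

theorem lp_min_small (A : R → V → ℚ) (b : R → ℚ) (Q : R → ℕ) (W Qm : ℚ)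
    (hQpos : ∀ r, 0 < Q r) (hQm : ∀ r, (Q r : ℚ) ≤ Qm)
    (hAQ : ∀ r j, IsIntMul (Q r) (A r j)) (hbQ : ∀ r, IsIntMul (Q r) (b r))
    (hW : ∀ r, ∑ j, |A r j| ≤ W) (hW1 : 1 ≤ W) (hQm1 : 1 ≤ Qm)
    (P : Set (V → ℝ)) (hPdef : P = {x | ∀ r, dotR (A r) x ≤ b r})
    (hPc : IsCompact P) (x₀ : V → ℝ) (hx₀ : x₀ ∈ P) (t0 : V) :
    ∃ xs ∈ P, (∀ z ∈ P, xs t0 ≤ z t0) ∧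
      (xs t0 ≤ 0 ∨
        (((W ^ (Fintype.card V) * Qm ^ (Fintype.card V) : ℚ) : ℝ))⁻¹ ≤ xs t0) := by
  classical
  obtain ⟨xs, hxsP, hmin, Sel, xq, hcast, dB, N, hdB, hN, hdB0, hxqt⟩ :=
    lp_key A b P hPdef hPc x₀ hx₀ t0
  refine ⟨xs, hxsP, hmin, ?_⟩
  set D := Fintype.card V with hD
  by_cases hsign : xq t0 ≤ 0
  · left
    rw [hcast t0]
    exact_mod_cast hsign
  · right
    push_neg at hsign
    have hWpos : (0:ℚ) < W := lt_of_lt_of_le one_pos hW1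
    have hQmpos : (0:ℚ) < Qm := lt_of_lt_of_le one_pos hQm1
    -- integrality of N
    set B : Matrix V V ℚ := Matrix.of (fun τ j => A (Sel τ) j) with hBdef
    have hNint : IsIntMul (∏ τ, Q (Sel τ)) N := by
      rw [hN]
      apply det_isIntMul _ (fun τ => Q (Sel τ)) (fun τ => hQpos _)
      intro τ j
      rw [Matrix.updateCol_apply]
      split
      · exact hbQ (Sel τ)
      · exact hAQ (Sel τ) j
    have hprodpos : (0:ℚ) < (∏ τ, Q (Sel τ) : ℕ) := by
      have : 0 < ∏ τ, Q (Sel τ) := Finset.prod_pos fun τ _ => hQpos _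
      exact_mod_cast this
    have hN0 : N ≠ 0 := by
      intro h
      rw [h, mul_zero] at hxqt
      rw [hxqt] at hsign
      exact lt_irrefl _ hsign
    have hNabs : 1 ≤ |N| * (∏ τ, Q (Sel τ) : ℕ) :=
      hNint.one_le_abs hN0 (Finset.prod_pos fun τ _ => hQpos _)
    have hprodle : ((∏ τ, Q (Sel τ) : ℕ) : ℚ) ≤ Qm ^ D := by
      push_cast
      calc (∏ τ, (Q (Sel τ) : ℚ)) ≤ ∏ _τ : V, Qm :=
        Finset.prod_le_prod (fun τ _ => by positivity) (fun τ _ => hQm _)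
      _ = Qm ^ D := by rw [Finset.prod_const, Finset.card_univ]
    have hNlow : (Qm ^ D)⁻¹ ≤ |N| := by
      rw [inv_le_iff_one_le_mul₀ (by positivity)]
      calc (1:ℚ) ≤ |N| * (∏ τ, Q (Sel τ) : ℕ) := hNabs
      _ ≤ |N| * Qm ^ D := by
          apply mul_le_mul_of_nonneg_left hprodle (abs_nonneg _)
    have hdBabs : |dB| ≤ W ^ D := by
      have h1 : |dB| = |B.transpose.det| := by rw [Matrix.det_transpose, hdB]
      rw [h1]
      calc |B.transpose.det| ≤ ∏ j, ∑ τ, |B.transpose τ j| :=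
        det_abs_le_prod_colsum _
      _ = ∏ j : V, ∑ τ, |A (Sel j) τ| := by
          refine Finset.prod_congr rfl fun j _ => ?_
          refine Finset.sum_congr rfl fun τ _ => ?_
          rfl
      _ ≤ ∏ _j : V, W := Finset.prod_le_prod
          (fun j _ => Finset.sum_nonneg fun τ _ => abs_nonneg _)
          (fun j _ => hW _)
      _ = W ^ D := by rw [Finset.prod_const, Finset.card_univ]
    have hdBpos : (0:ℚ) < |dB| := abs_pos.2 hdB0
    have key : ((W ^ D * Qm ^ D : ℚ))⁻¹ ≤ xq t0 := by
      have habs : xq t0 = |dB|⁻¹ * |N| := by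
        have : |xq t0| = |dB|⁻¹ * |N| := by
          rw [hxqt, abs_mul, abs_inv]
        rw [← this, abs_of_pos hsign]
      rw [habs, inv_mul_eq_div, le_div_iff₀ hdBpos]
      have hc : ((W ^ D * Qm ^ D : ℚ))⁻¹ * |dB| ≤ ((W ^ D * Qm ^ D : ℚ))⁻¹ * W ^ D := by
        apply mul_le_mul_of_nonneg_left hdBabs (by positivity)
      have hc2 : ((W ^ D * Qm ^ D : ℚ))⁻¹ * W ^ D = (Qm ^ D)⁻¹ := by
        field_simp
      calc ((W ^ D * Qm ^ D : ℚ))⁻¹ * |dB| ≤ (Qm ^ D)⁻¹ := by rw [← hc2]; exact hc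
      _ ≤ |N| := hNlow
    rw [hcast t0]
    exact_mod_cast key

end LP

open MeasureTheory intervalIntegral

section Step
variable {p : ℕ} (c : Fin (p + 1) → ℚ) (h : Fin p → ℚ)

/-- cumulative integral of the step function with breakpoints `c` and values `h`. -/
noncomputable def Phi (x : ℝ) : ℝ :=
  ∑ l : Fin p, (h l : ℝ) *
    (max (min x ((c l.succ : ℚ) : ℝ)) ((c l.castSucc : ℚ) : ℝ) - ((c l.castSucc : ℚ) : ℝ))

/-- the constant coefficient of `Phi` on cell `j`. -/
def Kq (j : Fin p) : ℚ :=
  (∑ l ∈ Finset.univ.filter (· < j), h l * (c l.succ - c l.castSucc)) - h j * c j.castSucc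

variable (hmono : Monotone c) (hc0 : c 0 = 0) (hclast : c (Fin.last p) = 1)

section Facts
include hmono

lemma creal_mono {a b : Fin (p+1)} (hab : a ≤ b) : ((c a : ℚ) : ℝ) ≤ ((c b : ℚ) : ℝ) := by
  exact_mod_cast hmono hab

include hc0 in
lemma creal_nonneg (a : Fin (p+1)) : (0:ℝ) ≤ ((c a : ℚ) : ℝ) := by
  have := hmono (Fin.zero_le a)
  rw [hc0] at this
  exact_mod_cast this

include hclast in
lemma creal_le_one (a : Fin (p+1)) : ((c a : ℚ) : ℝ) ≤ 1 := by
  have := hmono (Fin.le_last a)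
  rw [hclast] at this
  exact_mod_cast this

lemma csucc_le_ccast {l j : Fin p} (hlj : l < j) :
    ((c l.succ : ℚ) : ℝ) ≤ ((c j.castSucc : ℚ) : ℝ) := by
  refine creal_mono c hmono ?_
  rw [Fin.le_def]
  simp only [Fin.val_succ, Fin.coe_castSucc]
  exact hlj

lemma ccast_le_csucc (j : Fin p) : ((c j.castSucc : ℚ) : ℝ) ≤ ((c j.succ : ℚ) : ℝ) := by
  refine creal_mono c hmono ?_
  rw [Fin.le_def]
  simp only [Fin.val_succ, Fin.coe_castSucc]
  omega

/-- increment of `Phi` within a single cell. -/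
lemma Phi_cell_diff (j : Fin p) (v : ℝ)
    (hv1 : ((c j.castSucc : ℚ) : ℝ) ≤ v) (hv2 : v ≤ ((c j.succ : ℚ) : ℝ)) :
    Phi c h v = Phi c h ((c j.castSucc : ℚ) : ℝ) + (h j : ℝ) * (v - ((c j.castSucc : ℚ) : ℝ)) := by
  set m : ℝ := ((c j.castSucc : ℚ) : ℝ) with hm
  have key : Phi c h v - Phi c h m = (h j : ℝ) * (v - m) := by
    rw [Phi, Phi, ← Finset.sum_sub_distrib]
    rw [Finset.sum_eq_single j]
    · have h1 : min v ((c j.succ : ℚ) : ℝ) = v := min_eq_left hv2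
      have h2 : max v m = v := max_eq_left hv1
      have h3 : min m ((c j.succ : ℚ) : ℝ) = m :=
        min_eq_left (le_trans hv1 hv2 |>.trans (le_refl _) |> fun _ => (ccast_le_csucc c hmono j))
      have h4 : max m m = m := max_self m
      rw [h1, h2, h3, h4]
      ring
    · intro l _ hlj
      rcases lt_or_gt_of_ne hlj with hlt | hgt
      · -- l < j : both clamps saturate at c l.succ
        have hs : ((c l.succ : ℚ) : ℝ) ≤ m := csucc_le_ccast c hmono hlt
        have e1 : min v ((c l.succ : ℚ) : ℝ) = ((c l.succ : ℚ) : ℝ) :=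
          min_eq_right (le_trans hs hv1)
        have e2 : min m ((c l.succ : ℚ) : ℝ) = ((c l.succ : ℚ) : ℝ) := min_eq_right hs
        rw [e1, e2]
        ring
      · -- j < l : both clamps collapse to c l.castSucc
        have hs : ((c j.succ : ℚ) : ℝ) ≤ ((c l.castSucc : ℚ) : ℝ) := csucc_le_ccast c hmono hgt
        have hlc : ((c l.castSucc : ℚ) : ℝ) ≤ ((c l.succ : ℚ) : ℝ) := ccast_le_csucc c hmono l
        have e1 : max (min v ((c l.succ : ℚ) : ℝ)) ((c l.castSucc : ℚ) : ℝ)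
            = ((c l.castSucc : ℚ) : ℝ) := by
          apply max_eq_right
          exact le_trans (min_le_left _ _) (le_trans hv2 hs)
        have e2 : max (min m ((c l.succ : ℚ) : ℝ)) ((c l.castSucc : ℚ) : ℝ)
            = ((c l.castSucc : ℚ) : ℝ) := by
          apply max_eq_right
          exact le_trans (min_le_left _ _) (le_trans (le_trans hv1 hv2) hs)
        rw [e1, e2]
        ring
    · intro hj
      exact absurd (Finset.mem_univ j) hj
  linarith [key]

include hc0 in
/-- value of `Phi` at the left endpoint of cell `j`. -/
lemma Phi_at_ccast (j : Fin p) :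
    Phi c h ((c j.castSucc : ℚ) : ℝ)
      = ((∑ l ∈ Finset.univ.filter (· < j), h l * (c l.succ - c l.castSucc) : ℚ) : ℝ) := by
  rw [Phi]
  push_cast
  rw [Finset.sum_filter]
  refine Finset.sum_congr rfl fun l _ => ?_
  by_cases hlj : l < j
  · rw [if_pos hlj]
    have hs : ((c l.succ : ℚ) : ℝ) ≤ ((c j.castSucc : ℚ) : ℝ) := csucc_le_ccast c hmono hlj
    have e1 : min ((c j.castSucc : ℚ) : ℝ) ((c l.succ : ℚ) : ℝ) = ((c l.succ : ℚ) : ℝ) :=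
      min_eq_right hs
    have e2 : max ((c l.succ : ℚ) : ℝ) ((c l.castSucc : ℚ) : ℝ) = ((c l.succ : ℚ) : ℝ) :=
      max_eq_left (ccast_le_csucc c hmono l)
    rw [e1, e2]
  · rw [if_neg hlj]
    push_neg at hlj
    have hcc : ((c j.castSucc : ℚ) : ℝ) ≤ ((c l.castSucc : ℚ) : ℝ) := by
      refine creal_mono c hmono ?_
      rw [Fin.le_def]
      simp only [Fin.coe_castSucc]
      exact_mod_cast hlj
    have e1 : min ((c j.castSucc : ℚ) : ℝ) ((c l.succ : ℚ) : ℝ) = ((c j.castSucc : ℚ) : ℝ) :=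
      min_eq_left (le_trans hcc (ccast_le_csucc c hmono l))
    rw [e1]
    have e2 : max ((c j.castSucc : ℚ) : ℝ) ((c l.castSucc : ℚ) : ℝ) = ((c l.castSucc : ℚ) : ℝ) :=
      max_eq_right hcc
    rw [e2]
    ring

include hc0 in
/-- affine formula for `Phi` on cell `j`. -/
lemma Phi_affine (j : Fin p) (x : ℝ)
    (hx1 : ((c j.castSucc : ℚ) : ℝ) ≤ x) (hx2 : x ≤ ((c j.succ : ℚ) : ℝ)) :
    Phi c h x = ((Kq c h j : ℚ) : ℝ) + (h j : ℝ) * x := by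
  rw [Phi_cell_diff c h hmono j x hx1 hx2, Phi_at_ccast c h hmono hc0 j, Kq]
  push_cast
  ring

end Facts
end Step

section Integrals
variable {p : ℕ} (c : Fin (p + 1) → ℚ) (h : Fin p → ℚ) (f : ℝ → ℝ)
variable (hmono : Monotone c) (hc0 : c 0 = 0) (hclast : c (Fin.last p) = 1)
variable (hstep : ∀ (j : Fin p) (x : ℝ),
  ((c j.castSucc : ℚ) : ℝ) < x → x < ((c j.succ : ℚ) : ℝ) → f x = (h j : ℝ))

include hstep in
/-- integral over a subinterval of one cell. -/
lemma cell_integral (j : Fin p) (u v : ℝ)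
    (h1 : ((c j.castSucc : ℚ) : ℝ) ≤ u) (h2 : u ≤ v) (h3 : v ≤ ((c j.succ : ℚ) : ℝ)) :
    IntervalIntegrable f volume u v ∧ ∫ x in u..v, f x = (h j : ℝ) * (v - u) := by
  have hae : ∀ᵐ x ∂(volume : Measure ℝ), x ≠ ((c j.succ : ℚ) : ℝ) := by
    rw [MeasureTheory.ae_iff]
    have : {x : ℝ | ¬ x ≠ ((c j.succ : ℚ) : ℝ)} = {((c j.succ : ℚ) : ℝ)} := by
      ext x; simp
    rw [this]
    exact Real.volume_singleton
  have hcong : ∀ᵐ x ∂(volume : Measure ℝ), x ∈ Set.uIoc u v → f x = (h j : ℝ) := by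
    refine hae.mono fun x hx hxm => ?_
    rw [Set.uIoc_of_le h2] at hxm
    obtain ⟨hxu, hxv⟩ := hxm
    refine hstep j x (lt_of_le_of_lt h1 hxu) ?_
    exact lt_of_le_of_ne (le_trans hxv h3) hx
  constructor
  · rw [intervalIntegrable_iff]
    have hconst : MeasureTheory.IntegrableOn (fun _ => (h j : ℝ)) (Set.uIoc u v) volume := by
      exact MeasureTheory.integrableOn_const (by rw [Set.uIoc_of_le h2]; exact measure_Ioc_lt_top.ne)
    refine hconst.congr_fun_ae ?_
    exact (MeasureTheory.ae_restrict_iff' measurableSet_uIoc).2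
      (hcong.mono fun x hx hxm => (hx hxm).symm)
  · rw [intervalIntegral.integral_congr_ae hcong, intervalIntegral.integral_const,
      smul_eq_mul, mul_comm]

include hmono hc0 hstep in
/-- cumulative integral equals `Phi` up to any point in `[0, c j]`. -/
lemma integral_eq_Phi_aux :
    ∀ (j : Fin (p+1)) (v : ℝ), 0 ≤ v → v ≤ ((c j : ℚ) : ℝ) →
      IntervalIntegrable f volume 0 v ∧ ∫ x in (0:ℝ)..v, f x = Phi c h v := by
  intro j
  induction j using Fin.induction with
  | zero =>
    intro v hv0 hv1
    rw [hc0] at hv1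
    norm_num at hv1
    have hv : v = 0 := le_antisymm hv1 hv0
    subst hv
    constructor
    · exact IntervalIntegrable.refl
    · rw [intervalIntegral.integral_same]
      symm
      rw [Phi]
      apply Finset.sum_eq_zero
      intro l _
      have e1 : min (0:ℝ) ((c l.succ : ℚ) : ℝ) = 0 :=
        min_eq_left (creal_nonneg c hmono hc0 _)
      have e2 : max (0:ℝ) ((c l.castSucc : ℚ) : ℝ) = ((c l.castSucc : ℚ) : ℝ) :=
        max_eq_right (creal_nonneg c hmono hc0 _)
      rw [e1, e2]
      ring
  | succ j ih =>
    intro v hv0 hv1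
    by_cases hcase : v ≤ ((c j.castSucc : ℚ) : ℝ)
    · exact ih v hv0 hcase
    · push_neg at hcase
      set m : ℝ := ((c j.castSucc : ℚ) : ℝ) with hm
      have hm0 : 0 ≤ m := creal_nonneg c hmono hc0 _
      obtain ⟨hint1, hval1⟩ := ih m hm0 (le_refl _)
      obtain ⟨hint2, hval2⟩ := cell_integral c h f hstep j m v (le_refl _)
        (le_of_lt hcase) hv1
      refine ⟨hint1.trans hint2, ?_⟩
      rw [← intervalIntegral.integral_add_adjacent_intervals hint1 hint2, hval1, hval2]
      rw [Phi_cell_diff c h hmono j v (le_of_lt hcase) hv1]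

include hmono hc0 hclast hstep in
/-- the integral between two points of `[0,1]` is the increment of `Phi`. -/
lemma integral_eq_Phi (u v : ℝ) (hu0 : 0 ≤ u) (huv : u ≤ v) (hv1 : v ≤ 1) :
    ∫ x in u..v, f x = Phi c h v - Phi c h u := by
  have hc1 : ((c (Fin.last p) : ℚ) : ℝ) = 1 := by rw [hclast]; norm_num
  obtain ⟨hiu, hvu⟩ := integral_eq_Phi_aux c h f hmono hc0 hstep (Fin.last p) u hu0
    (by rw [hc1]; exact le_trans huv hv1)
  obtain ⟨hiv, hvv⟩ := integral_eq_Phi_aux c h f hmono hc0 hstep (Fin.last p) v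
    (le_trans hu0 huv) (by rw [hc1]; exact hv1)
  rw [← hvv, ← hvu, ← intervalIntegral.integral_interval_sub_left hiv hiu]

end Integrals

section Book
variable {p : ℕ} (c : Fin (p + 1) → ℚ) (h : Fin p → ℚ)

/-- master denominator of an agent. -/
def Qden : ℕ := ∏ l ∈ Finset.univ.filter (fun l => 0 < h l),
    ((h l).den * ((c l.castSucc).den * (c l.succ).den))

lemma Qden_pos : 0 < Qden c h :=
  Finset.prod_pos fun l _ => Nat.mul_pos (h l).pos (Nat.mul_pos (c l.castSucc).pos (c l.succ).pos)

lemma h_isIntMul (hh0 : ∀ j, 0 ≤ h j) (j : Fin p) : IsIntMul (Qden c h) (h j) := by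
  rcases eq_or_lt_of_le (hh0 j) with h0 | hpos
  · rw [← h0]; exact IsIntMul.zero _
  · refine IsIntMul.of_den_dvd ?_ (Qden_pos c h)
    calc (h j).den ∣ (h j).den * ((c j.castSucc).den * (c j.succ).den) := dvd_mul_right _ _
    _ ∣ Qden c h := Finset.dvd_prod_of_mem _
        (Finset.mem_filter.2 ⟨Finset.mem_univ _, hpos⟩)

lemma hc_isIntMul (hh0 : ∀ j, 0 ≤ h j) (j : Fin p) :
    IsIntMul (Qden c h) (h j * c j.castSucc) := by
  rcases eq_or_lt_of_le (hh0 j) with h0 | hpos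
  · rw [← h0, zero_mul]; exact IsIntMul.zero _
  · have hd : (h j).den * (c j.castSucc).den ∣ Qden c h := by
      calc (h j).den * (c j.castSucc).den
          ∣ (h j).den * ((c j.castSucc).den * (c j.succ).den) :=
            mul_dvd_mul_left _ (dvd_mul_right _ _)
      _ ∣ Qden c h := Finset.dvd_prod_of_mem _
          (Finset.mem_filter.2 ⟨Finset.mem_univ _, hpos⟩)
    exact ((IsIntMul.den (h j)).mul (IsIntMul.den (c j.castSucc))).of_dvd hd
      (Nat.mul_pos (h j).pos (c j.castSucc).pos)

lemma K_isIntMul (hh0 : ∀ j, 0 ≤ h j) (j : Fin p) : IsIntMul (Qden c h) (Kq c h j) := by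
  refine IsIntMul.sub ?_ (hc_isIntMul c h hh0 j)
  refine IsIntMul.sum fun l hl => ?_
  rcases eq_or_lt_of_le (hh0 l) with h0 | hpos
  · rw [← h0, zero_mul]; exact IsIntMul.zero _
  · have hmem : l ∈ Finset.univ.filter (fun l => 0 < h l) :=
      Finset.mem_filter.2 ⟨Finset.mem_univ _, hpos⟩
    rw [mul_sub]
    refine IsIntMul.sub ?_ ?_
    · have hd : (h l).den * (c l.succ).den ∣ Qden c h := by
        calc (h l).den * (c l.succ).den
            ∣ (h l).den * ((c l.castSucc).den * (c l.succ).den) :=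
              mul_dvd_mul_left _ (dvd_mul_left _ _)
        _ ∣ Qden c h := Finset.dvd_prod_of_mem _ hmem
      exact ((IsIntMul.den (h l)).mul (IsIntMul.den (c l.succ))).of_dvd hd
        (Nat.mul_pos (h l).pos (c l.succ).pos)
    · have hd : (h l).den * (c l.castSucc).den ∣ Qden c h := by
        calc (h l).den * (c l.castSucc).den
            ∣ (h l).den * ((c l.castSucc).den * (c l.succ).den) :=
              mul_dvd_mul_left _ (dvd_mul_right _ _)
        _ ∣ Qden c h := Finset.dvd_prod_of_mem _ hmem
      exact ((IsIntMul.den (h l)).mul (IsIntMul.den (c l.castSucc))).of_dvd hd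
        (Nat.mul_pos (h l).pos (c l.castSucc).pos)

lemma Qden_le (M k : ℕ) (hM : 1 ≤ M)
    (hcM : ∀ j, (c j).den ≤ M) (hhM : ∀ j, (h j).den ≤ M)
    (hcard : (Finset.univ.filter fun j => 0 < h j).card ≤ k) :
    Qden c h ≤ M ^ (3 * k) := by
  calc Qden c h ≤ (M ^ 3) ^ (Finset.univ.filter fun j => 0 < h j).card := by
        refine Finset.prod_le_pow_card _ _ _ fun l _ => ?_
        calc (h l).den * ((c l.castSucc).den * (c l.succ).den)
            ≤ M * (M * M) := Nat.mul_le_mul (hhM l)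
              (Nat.mul_le_mul (hcM _) (hcM _))
        _ = M ^ 3 := by ring
  _ ≤ (M ^ 3) ^ k := Nat.pow_le_pow_right (Nat.one_le_pow 3 M (by omega)) hcard
  _ = M ^ (3 * k) := by rw [← pow_mul]

lemma h_le_M (M : ℕ) (j : Fin p) (hh0 : 0 ≤ h j) (hhM : (h j).num.natAbs ≤ M) :
    h j ≤ (M : ℚ) := by
  have h1 : h j * (h j).den = (h j).num := by
    rw [mul_comm]; exact_mod_cast Rat.den_mul_eq_num (h j)
  have h2 : h j ≤ h j * (h j).den := by
    refine le_mul_of_one_le_right hh0 ?_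
    exact_mod_cast (h j).pos
  have h3 : ((h j).num : ℚ) ≤ (M : ℚ) := by
    have : (h j).num ≤ (M : ℤ) := le_trans (Int.le_natAbs) (by exact_mod_cast hhM)
    exact_mod_cast this
  calc h j ≤ h j * (h j).den := h2
  _ = ((h j).num : ℚ) := h1
  _ ≤ (M : ℚ) := h3

end Book


section Helpers
variable {V : Type*} [Fintype V] [DecidableEq V]

def indQ (a j : V) : ℚ := if j = a then 1 else 0

lemma dotR_indQ (q : ℚ) (a : V) (x : V → ℝ) :
    dotR (fun j => q * indQ a j) x = q * x a := by
  rw [dotR]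
  rw [Finset.sum_eq_single a]
  · simp [indQ]
  · intro j _ hj
    simp [indQ, hj]
  · intro ha
    exact absurd (Finset.mem_univ a) ha

lemma dotR_addf (g1 g2 : V → ℚ) (x : V → ℝ) :
    dotR (fun j => g1 j + g2 j) x = dotR g1 x + dotR g2 x := by
  rw [dotR, dotR, dotR, ← Finset.sum_add_distrib]
  refine Finset.sum_congr rfl fun j _ => ?_
  push_cast
  ring

lemma dotR_subf (g1 g2 : V → ℚ) (x : V → ℝ) :
    dotR (fun j => g1 j - g2 j) x = dotR g1 x - dotR g2 x := by
  rw [dotR, dotR, dotR, ← Finset.sum_sub_distrib]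
  refine Finset.sum_congr rfl fun j _ => ?_
  push_cast
  ring

lemma dotR_negf (g : V → ℚ) (x : V → ℝ) :
    dotR (fun j => - g j) x = - dotR g x := by
  rw [dotR, dotR, ← Finset.sum_neg_distrib]
  refine Finset.sum_congr rfl fun j _ => ?_
  push_cast
  ring

lemma sum_abs_indQ (q : ℚ) (a : V) : ∑ j, |q * indQ a j| = |q| := by
  rw [Finset.sum_eq_single a]
  · simp [indQ]
  · intro j _ hj
    simp [indQ, hj]
  · intro ha
    exact absurd (Finset.mem_univ a) ha

lemma isIntMul_indQ (Q : ℕ) (q : ℚ) (hq : IsIntMul Q q) (a j : V) :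
    IsIntMul Q (q * indQ a j) := by
  by_cases hj : j = a
  · simp only [indQ, if_pos hj, mul_one]
    exact hq
  · simp only [indQ, if_neg hj, mul_zero]
    exact IsIntMul.zero _

lemma isIntMul_one (Q : ℕ) : IsIntMul Q 1 := ⟨Q, by push_cast; ring⟩

end Helpers

section CellExists
variable {p : ℕ}

lemma exists_cell (c : Fin (p + 1) → ℚ) (hmono : Monotone c) (hc0 : c 0 = 0)
    (hclast : c (Fin.last p) = 1) (x : ℝ) (hx0 : 0 ≤ x) (hx1 : x ≤ 1) :
    ∃ j : Fin p, ((c j.castSucc : ℚ) : ℝ) ≤ x ∧ x ≤ ((c j.succ : ℚ) : ℝ) := by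
  have hp : 0 < p := by
    rcases Nat.eq_zero_or_pos p with h0 | h0
    · subst h0
      have : (0 : Fin 1) = Fin.last 0 := rfl
      rw [this, hclast] at hc0
      norm_num at hc0
    · exact h0
  set T : Finset (Fin p) := Finset.univ.filter
    (fun j : Fin p => ((c j.castSucc : ℚ) : ℝ) ≤ x) with hT
  have hTne : T.Nonempty := by
    refine ⟨⟨0, hp⟩, Finset.mem_filter.2 ⟨Finset.mem_univ _, ?_⟩⟩
    have : (⟨0, hp⟩ : Fin p).castSucc = (0 : Fin (p+1)) := by
      apply Fin.ext; simp
    rw [this, hc0]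
    exact_mod_cast hx0
  set js := T.max' hTne with hjs
  have hjsmem : js ∈ T := T.max'_mem hTne
  have hjsle : ((c js.castSucc : ℚ) : ℝ) ≤ x := (Finset.mem_filter.1 hjsmem).2
  by_cases hcase : x ≤ ((c js.succ : ℚ) : ℝ)
  · exact ⟨js, hjsle, hcase⟩
  · push_neg at hcase
    exfalso
    by_cases hlast : (js : ℕ) + 1 = p
    · have : js.succ = Fin.last p := by
        apply Fin.ext; simp [hlast]
      rw [this, hclast] at hcase
      norm_num at hcase
      linarith
    · have hlt : (js : ℕ) + 1 < p := lt_of_le_of_ne js.2 hlast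
      set j' : Fin p := ⟨(js : ℕ) + 1, hlt⟩ with hj'
      have hcc : j'.castSucc = js.succ := by
        apply Fin.ext; simp [hj']
      have hj'T : j' ∈ T := by
        refine Finset.mem_filter.2 ⟨Finset.mem_univ _, ?_⟩
        rw [hcc]
        exact le_of_lt hcase
      have := T.le_max' j' hj'T
      rw [← hjs] at this
      have : (j' : ℕ) ≤ (js : ℕ) := this
      simp [hj'] at this
end CellExists


set_option maxHeartbeats 1000000
/-- Let `M ≥ 3`, `k ≥ 1` and let `v 1, …, v n` be normalized piecewise
constant valuations on `[0,1]` such that each density has at most `k` value-blocks and all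
breakpoints and step values are rationals with numerator and denominator at most `M`.
If there exists a contiguous `M^(-20kn)`-envy-free allocation with permutation `π`, then
there exists a contiguous exactly envy-free allocation with the same permutation `π`. -/
theorem envy_free_from_approx_envy_free_piecewise_constant
    (n M k : ℕ) (hM : 3 ≤ M) (hk : 1 ≤ k) (hn : 0 < n)
    (f : Fin n → ℝ → ℝ)
    (hnn : ∀ i x, 0 ≤ f i x)
    (hpc : ∀ i : Fin n, ∃ (p : ℕ) (c : Fin (p + 1) → ℚ) (h : Fin p → ℚ),
      Monotone c ∧ c 0 = 0 ∧ c (Fin.last p) = 1 ∧ (∀ j, 0 ≤ h j) ∧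
      (∀ (j : Fin p) (x : ℝ),
        (c j.castSucc : ℝ) < x → x < (c j.succ : ℝ) → f i x = (h j : ℝ)) ∧
      (∀ j, (c j).num.natAbs ≤ M ∧ (c j).den ≤ M) ∧
      (∀ j, (h j).num.natAbs ≤ M ∧ (h j).den ≤ M) ∧
      (Finset.univ.filter fun j => 0 < h j).card ≤ k)
    (hnorm : ∀ i, (∫ x in (0 : ℝ)..1, f i x) = 1)
    (y : Fin (n + 1) → ℝ) (π : Equiv.Perm (Fin n))
    (hy : Monotone y) (hy0 : y 0 = 0) (hy1 : y (Fin.last n) = 1)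
    (hEF : ∀ i j : Fin n,
      (∫ x in (y (π i).castSucc)..(y (π i).succ), f i x) ≥
        (∫ x in (y (π j).castSucc)..(y (π j).succ), f i x) - ((M : ℝ) ^ (20 * k * n))⁻¹) :
    ∃ y' : Fin (n + 1) → ℝ,
      Monotone y' ∧ y' 0 = 0 ∧ y' (Fin.last n) = 1 ∧
      (∀ i j : Fin n,
        (∫ x in (y' (π i).castSucc)..(y' (π i).succ), f i x) ≥
          (∫ x in (y' (π j).castSucc)..(y' (π j).succ), f i x)) := by
  classical
  choose p c h hmono hc0 hclast hh0 hstep hcM hhM hcard using hpc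
  set ε : ℝ := ((M : ℝ) ^ (20 * k * n))⁻¹ with hε
  have hM1 : (3:ℝ) ≤ (M:ℝ) := by exact_mod_cast hM
  have hy01 : ∀ s : Fin (n+1), 0 ≤ y s ∧ y s ≤ 1 := by
    intro s
    constructor
    · rw [← hy0]; exact hy (Fin.zero_le s)
    · rw [← hy1]; exact hy (Fin.le_last s)
  have hcell : ∀ (i : Fin n) (s : Fin (n+1)), ∃ j : Fin (p i),
      ((c i j.castSucc : ℚ) : ℝ) ≤ y s ∧ y s ≤ ((c i j.succ : ℚ) : ℝ) :=
    fun i s => exists_cell (c i) (hmono i) (hc0 i) (hclast i) (y s) (hy01 s).1 (hy01 s).2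
  choose J hJ1 hJ2 using hcell
  set t0 : Fin (n+2) := Fin.last (n+1) with ht0
  set idx : Fin (n+1) → Fin (n+2) := Fin.castSucc with hidx
  set co : Fin n → Fin (n+1) → ℚ := fun i s => h i (J i s) with hco
  set Kc : Fin n → Fin (n+1) → ℚ := fun i s => Kq (c i) (h i) (J i s) with hKc
  -- the rows of the linear program
  set A : ((Fin n × Fin n) ⊕ ((Fin n × Fin (n+1)) × Bool) ⊕ (Fin n) ⊕ (Bool × Bool) ⊕ Bool)
      → Fin (n+2) → ℚ := fun r =>
    match r with
    | .inl (i, a) => fun j => co i a.succ * indQ (idx a.succ) j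
        - co i a.castSucc * indQ (idx a.castSucc) j
        - co i (π i).succ * indQ (idx (π i).succ) j
        + co i (π i).castSucc * indQ (idx (π i).castSucc) j
        - 1 * indQ t0 j
    | .inr (.inl ((i, s), true)) => fun j => 1 * indQ (idx s) j
    | .inr (.inl ((i, s), false)) => fun j => -(1 * indQ (idx s) j)
    | .inr (.inr (.inl s)) => fun j => 1 * indQ (idx s.castSucc) j - 1 * indQ (idx s.succ) j
    | .inr (.inr (.inr (.inl (true, true)))) => fun j => 1 * indQ (idx 0) j
    | .inr (.inr (.inr (.inl (true, false)))) => fun j => -(1 * indQ (idx 0) j)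
    | .inr (.inr (.inr (.inl (false, true)))) => fun j => 1 * indQ (idx (Fin.last n)) j
    | .inr (.inr (.inr (.inl (false, false)))) => fun j => -(1 * indQ (idx (Fin.last n)) j)
    | .inr (.inr (.inr (.inr true))) => fun j => 1 * indQ t0 j
    | .inr (.inr (.inr (.inr false))) => fun j => -(1 * indQ t0 j)
    with hA
  set bb : ((Fin n × Fin n) ⊕ ((Fin n × Fin (n+1)) × Bool) ⊕ (Fin n) ⊕ (Bool × Bool) ⊕ Bool)
      → ℚ := fun r =>
    match r with
    | .inl (i, a) => -(Kc i a.succ - Kc i a.castSucc - Kc i (π i).succ + Kc i (π i).castSucc)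
    | .inr (.inl ((i, s), true)) => c i (J i s).succ
    | .inr (.inl ((i, s), false)) => -(c i (J i s).castSucc)
    | .inr (.inr (.inl _)) => 0
    | .inr (.inr (.inr (.inl (true, true)))) => 0
    | .inr (.inr (.inr (.inl (true, false)))) => 0
    | .inr (.inr (.inr (.inl (false, true)))) => 1
    | .inr (.inr (.inr (.inl (false, false)))) => -1
    | .inr (.inr (.inr (.inr true))) => 1
    | .inr (.inr (.inr (.inr false))) => 2
    with hbb
  set Qr : ((Fin n × Fin n) ⊕ ((Fin n × Fin (n+1)) × Bool) ⊕ (Fin n) ⊕ (Bool × Bool) ⊕ Bool)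
      → ℕ := fun r =>
    match r with
    | .inl (i, _) => Qden (c i) (h i)
    | .inr (.inl ((i, s), true)) => (c i (J i s).succ).den
    | .inr (.inl ((i, s), false)) => (c i (J i s).castSucc).den
    | _ => 1
    with hQr
  -- dot product evaluations
  have hdotEF : ∀ (i a : Fin n) (x : Fin (n+2) → ℝ),
      dotR (A (.inl (i,a))) x = (co i a.succ : ℝ) * x (idx a.succ)
        - (co i a.castSucc : ℝ) * x (idx a.castSucc)
        - (co i (π i).succ : ℝ) * x (idx (π i).succ)
        + (co i (π i).castSucc : ℝ) * x (idx (π i).castSucc) - x t0 := by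
    intro i a x
    simp only [hA]
    rw [dotR_subf, dotR_addf, dotR_subf, dotR_subf,
      dotR_indQ, dotR_indQ, dotR_indQ, dotR_indQ, dotR_indQ]
    push_cast
    ring
  have hdotCT : ∀ (i : Fin n) (s : Fin (n+1)) (x : Fin (n+2) → ℝ),
      dotR (A (.inr (.inl ((i,s), true)))) x = x (idx s) := by
    intro i s x
    simp only [hA]
    rw [dotR_indQ]
    push_cast; ring
  have hdotCF : ∀ (i : Fin n) (s : Fin (n+1)) (x : Fin (n+2) → ℝ),
      dotR (A (.inr (.inl ((i,s), false)))) x = - x (idx s) := by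
    intro i s x
    simp only [hA]
    rw [dotR_negf, dotR_indQ]
    push_cast; ring
  have hdotOrd : ∀ (s : Fin n) (x : Fin (n+2) → ℝ),
      dotR (A (.inr (.inr (.inl s)))) x = x (idx s.castSucc) - x (idx s.succ) := by
    intro s x
    simp only [hA]
    rw [dotR_subf, dotR_indQ, dotR_indQ]
    push_cast; ring
  have hdotP1 : ∀ (x : Fin (n+2) → ℝ),
      dotR (A (.inr (.inr (.inr (.inl (true, true)))))) x = x (idx 0) := by
    intro x; simp only [hA]; rw [dotR_indQ]; push_cast; ring
  have hdotP2 : ∀ (x : Fin (n+2) → ℝ),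
      dotR (A (.inr (.inr (.inr (.inl (true, false)))))) x = - x (idx 0) := by
    intro x; simp only [hA]; rw [dotR_negf, dotR_indQ]; push_cast; ring
  have hdotP3 : ∀ (x : Fin (n+2) → ℝ),
      dotR (A (.inr (.inr (.inr (.inl (false, true)))))) x = x (idx (Fin.last n)) := by
    intro x; simp only [hA]; rw [dotR_indQ]; push_cast; ring
  have hdotP4 : ∀ (x : Fin (n+2) → ℝ),
      dotR (A (.inr (.inr (.inr (.inl (false, false)))))) x = - x (idx (Fin.last n)) := by
    intro x; simp only [hA]; rw [dotR_negf, dotR_indQ]; push_cast; ring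
  have hdotT1 : ∀ (x : Fin (n+2) → ℝ),
      dotR (A (.inr (.inr (.inr (.inr true))))) x = x t0 := by
    intro x; simp only [hA]; rw [dotR_indQ]; push_cast; ring
  have hdotT2 : ∀ (x : Fin (n+2) → ℝ),
      dotR (A (.inr (.inr (.inr (.inr false))))) x = - x t0 := by
    intro x; simp only [hA]; rw [dotR_negf, dotR_indQ]; push_cast; ring
  set P : Set (Fin (n+2) → ℝ) := {x | ∀ r, dotR (A r) x ≤ (bb r : ℝ)} with hP
  -- closedness and compactness
  have hPclosed : IsClosed P := by
    have hrepr : P = ⋂ r, {x : Fin (n+2) → ℝ | dotR (A r) x ≤ (bb r : ℝ)} := by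
      ext x; simp [hP, Set.mem_iInter]
    rw [hrepr]
    refine isClosed_iInter fun r => ?_
    have hcont : Continuous fun x : Fin (n+2) → ℝ => dotR (A r) x := by
      unfold dotR
      exact continuous_finset_sum _ fun j _ => (continuous_const.mul (continuous_apply j))
    exact isClosed_le hcont continuous_const
  have i0 : Fin n := ⟨0, hn⟩
  have hPsub : P ⊆ Set.Icc (fun _ => (-2:ℝ)) (fun _ => 2) := by
    intro x hx
    rw [hP] at hx
    rw [Set.mem_Icc]
    constructor <;> rw [Pi.le_def] <;> intro j <;>
      refine Fin.lastCases ?_ (fun s => ?_) j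
    · have h2 := hx (.inr (.inr (.inr (.inr false))))
      rw [hdotT2 x] at h2
      simp only [hbb] at h2
      push_cast at h2
      linarith
    · have h2 := hx (.inr (.inl ((i0, s), false)))
      rw [hdotCF i0 s x] at h2
      simp only [hbb] at h2
      have h3 : (0:ℝ) ≤ ((c i0 (J i0 s).castSucc : ℚ) : ℝ) :=
        creal_nonneg (c i0) (hmono i0) (hc0 i0) _
      push_cast at h2
      simp only [hidx] at *
      linarith
    · have h2 := hx (.inr (.inr (.inr (.inr true))))
      rw [hdotT1 x] at h2
      simp only [hbb] at h2
      push_cast at h2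
      linarith
    · have h2 := hx (.inr (.inl ((i0, s), true)))
      rw [hdotCT i0 s x] at h2
      simp only [hbb] at h2
      have h3 : ((c i0 (J i0 s).succ : ℚ) : ℝ) ≤ 1 :=
        creal_le_one (c i0) (hmono i0) (hclast i0) _
      push_cast at h2
      simp only [hidx] at *
      linarith
  have hPcomp : IsCompact P :=
    IsCompact.of_isClosed_subset isCompact_Icc hPclosed hPsub
  -- feasibility structure of points of P
  have hfeas : ∀ x, x ∈ P →
      (∀ (s : Fin (n+1)) (i : Fin n),
        ((c i (J i s).castSucc : ℚ):ℝ) ≤ x (idx s) ∧ x (idx s) ≤ ((c i (J i s).succ : ℚ):ℝ))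
      ∧ Monotone (fun s => x (idx s)) ∧ x (idx 0) = 0 ∧ x (idx (Fin.last n)) = 1 := by
    intro x hx
    rw [hP] at hx
    refine ⟨fun s i => ⟨?_, ?_⟩, ?_, ?_, ?_⟩
    · have h2 := hx (.inr (.inl ((i,s), false)))
      rw [hdotCF i s x] at h2
      simp only [hbb] at h2
      push_cast at h2
      linarith
    · have h2 := hx (.inr (.inl ((i,s), true)))
      rw [hdotCT i s x] at h2
      simp only [hbb] at h2
      exact h2
    · rw [Fin.monotone_iff_le_succ]
      intro s
      have h2 := hx (.inr (.inr (.inl s)))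
      rw [hdotOrd s x] at h2
      simp only [hbb] at h2
      push_cast at h2
      linarith
    · have h1 := hx (.inr (.inr (.inr (.inl (true, true)))))
      have h2 := hx (.inr (.inr (.inr (.inl (true, false)))))
      rw [hdotP1 x] at h1
      rw [hdotP2 x] at h2
      simp only [hbb] at h1 h2
      push_cast at h1 h2
      linarith
    · have h1 := hx (.inr (.inr (.inr (.inl (false, true)))))
      have h2 := hx (.inr (.inr (.inr (.inl (false, false)))))
      rw [hdotP3 x] at h1
      rw [hdotP4 x] at h2
      simp only [hbb] at h1 h2
      push_cast at h1 h2
      linarith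
  -- bridges between Phi and integrals
  have hPhiInt : ∀ (i : Fin n) (u v : ℝ), 0 ≤ u → u ≤ v → v ≤ 1 →
      ∫ x in u..v, f i x = Phi (c i) (h i) v - Phi (c i) (h i) u :=
    fun i => integral_eq_Phi (c i) (h i) (f i) (hmono i) (hc0 i) (hclast i) (hstep i)
  have hPhiAff : ∀ (i : Fin n) (s : Fin (n+1)) (z : ℝ),
      ((c i (J i s).castSucc : ℚ):ℝ) ≤ z → z ≤ ((c i (J i s).succ : ℚ):ℝ) →
      (co i s : ℝ) * z = Phi (c i) (h i) z - ((Kc i s : ℚ) : ℝ) := by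
    intro i s z h1 h2
    rw [Phi_affine (c i) (h i) (hmono i) (hc0 i) (J i s) z h1 h2]
    simp only [hco, hKc]
    ring
  -- the defining point
  set x₀ : Fin (n+2) → ℝ := Fin.snoc y ε with hx₀def
  have hx₀idx : ∀ s : Fin (n+1), x₀ (idx s) = y s := by
    intro s
    simp only [hx₀def, hidx]
    exact Fin.snoc_castSucc _ _ _
  have hx₀t0 : x₀ t0 = ε := by
    simp only [hx₀def, ht0]
    exact Fin.snoc_last _ _
  have hεpos : 0 < ε := by
    rw [hε]
    have : (0:ℝ) < (M:ℝ) ^ (20*k*n) := by positivity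
    positivity
  have hε1 : ε ≤ 1 := by
    rw [hε]
    have h1 : (1:ℝ) ≤ (M:ℝ) ^ (20*k*n) := one_le_pow₀ (by linarith)
    rw [inv_le_one_iff₀]
    right; exact h1
  have hx₀P : x₀ ∈ P := by
    rw [hP]
    intro r
    rcases r with ⟨i,a⟩ | ⟨⟨i,s⟩,b⟩ | s | ⟨b1,b2⟩ | b
    · -- EF row
      rw [hdotEF i a x₀]
      simp only [hbb]
      rw [hx₀idx, hx₀idx, hx₀idx, hx₀idx, hx₀t0]
      rw [hPhiAff i a.succ _ (hJ1 i a.succ) (hJ2 i a.succ),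
        hPhiAff i a.castSucc _ (hJ1 i a.castSucc) (hJ2 i a.castSucc),
        hPhiAff i (π i).succ _ (hJ1 i (π i).succ) (hJ2 i (π i).succ),
        hPhiAff i (π i).castSucc _ (hJ1 i (π i).castSucc) (hJ2 i (π i).castSucc)]
      have hIa : ∫ t in (y a.castSucc)..(y a.succ), f i t
          = Phi (c i) (h i) (y a.succ) - Phi (c i) (h i) (y a.castSucc) :=
        hPhiInt i _ _ (hy01 _).1 (hy (Fin.castSucc_lt_succ : a.castSucc < a.succ).le) (hy01 _).2
      have hIo : ∫ t in (y (π i).castSucc)..(y (π i).succ), f i t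
          = Phi (c i) (h i) (y (π i).succ) - Phi (c i) (h i) (y (π i).castSucc) :=
        hPhiInt i _ _ (hy01 _).1 (hy (Fin.castSucc_lt_succ : (π i).castSucc < (π i).succ).le) (hy01 _).2
      have hEF2 := hEF i (π.symm a)
      rw [Equiv.apply_symm_apply] at hEF2
      push_cast
      linarith [hEF2, hIa, hIo]
    · -- cell rows
      cases b
      · rw [hdotCF i s x₀]
        simp only [hbb]
        rw [hx₀idx]
        push_cast
        linarith [hJ1 i s]
      · rw [hdotCT i s x₀]
        simp only [hbb]
        rw [hx₀idx]
        exact hJ2 i s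
    · -- order rows
      rw [hdotOrd s x₀]
      simp only [hbb]
      rw [hx₀idx, hx₀idx]
      push_cast
      linarith [hy (Fin.castSucc_lt_succ : s.castSucc < s.succ).le]
    · -- pin rows
      cases b1 <;> cases b2
      · rw [hdotP4 x₀]
        simp only [hbb]
        rw [hx₀idx, hy1]
        push_cast
        linarith
      · rw [hdotP3 x₀]
        simp only [hbb]
        rw [hx₀idx, hy1]
        push_cast
        linarith
      · rw [hdotP2 x₀]
        simp only [hbb]
        rw [hx₀idx, hy0]
        push_cast
        linarith
      · rw [hdotP1 x₀]
        simp only [hbb]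
        rw [hx₀idx, hy0]
        push_cast
        linarith
    · -- t rows
      cases b
      · rw [hdotT2 x₀]
        simp only [hbb]
        rw [hx₀t0]
        push_cast
        linarith
      · rw [hdotT1 x₀]
        simp only [hbb]
        rw [hx₀t0]
        push_cast
        linarith
  -- envy bound for feasible points
  have hEnvyRow : ∀ x, x ∈ P → ∀ (i a : Fin n),
      (∫ t in (x (idx a.castSucc))..(x (idx a.succ)), f i t)
        - (∫ t in (x (idx (π i).castSucc))..(x (idx (π i).succ)), f i t) ≤ x t0 := by
    intro x hx i a
    obtain ⟨hcellx, hmonx, hx0', hx1'⟩ := hfeas x hx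
    have hx01 : ∀ s, 0 ≤ x (idx s) ∧ x (idx s) ≤ 1 := fun s =>
      ⟨by rw [← hx0']; exact hmonx (Fin.zero_le s),
       by rw [← hx1']; exact hmonx (Fin.le_last s)⟩
    have hx' := hx
    rw [hP] at hx'
    have hrow := hx' (.inl (i,a))
    rw [hdotEF i a x] at hrow
    simp only [hbb] at hrow
    rw [hPhiAff i a.succ _ (hcellx a.succ i).1 (hcellx a.succ i).2,
      hPhiAff i a.castSucc _ (hcellx a.castSucc i).1 (hcellx a.castSucc i).2,
      hPhiAff i (π i).succ _ (hcellx (π i).succ i).1 (hcellx (π i).succ i).2,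
      hPhiAff i (π i).castSucc _ (hcellx (π i).castSucc i).1 (hcellx (π i).castSucc i).2]
      at hrow
    have hI1 : ∫ t in (x (idx a.castSucc))..(x (idx a.succ)), f i t
        = Phi (c i) (h i) (x (idx a.succ)) - Phi (c i) (h i) (x (idx a.castSucc)) :=
      hPhiInt i _ _ (hx01 _).1 (hmonx (Fin.castSucc_lt_succ : a.castSucc < a.succ).le) (hx01 _).2
    have hI2 : ∫ t in (x (idx (π i).castSucc))..(x (idx (π i).succ)), f i t
        = Phi (c i) (h i) (x (idx (π i).succ)) - Phi (c i) (h i) (x (idx (π i).castSucc)) :=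
      hPhiInt i _ _ (hx01 _).1 (hmonx (Fin.castSucc_lt_succ : (π i).castSucc < (π i).succ).le) (hx01 _).2
    push_cast at hrow
    rw [hI1, hI2]
    linarith
  -- helper for sums of five absolute values
  have habs5 : ∀ q1 q2 q3 q4 q5 : ℚ,
      |q1 - q2 - q3 + q4 - q5| ≤ |q1| + |q2| + |q3| + |q4| + |q5| := by
    intro q1 q2 q3 q4 q5
    apply abs_le.2
    constructor <;>
      linarith [le_abs_self q1, neg_abs_le q1, le_abs_self q2, neg_abs_le q2,
        le_abs_self q3, neg_abs_le q3, le_abs_self q4, neg_abs_le q4,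
        le_abs_self q5, neg_abs_le q5]
  have hM3q : (3:ℚ) ≤ (M:ℚ) := by exact_mod_cast hM
  -- LP data hypotheses
  have hQpos : ∀ r, 0 < Qr r := by
    intro r
    rcases r with ⟨i,a⟩ | ⟨⟨i,s⟩,b⟩ | s | ⟨b1,b2⟩ | b
    · simp only [hQr]; exact Qden_pos (c i) (h i)
    · cases b <;> simp only [hQr] <;> exact Rat.pos _
    · simp only [hQr]; norm_num
    · cases b1 <;> cases b2 <;> simp only [hQr] <;> norm_num
    · cases b <;> simp only [hQr] <;> norm_num
  have hQm : ∀ r, ((Qr r : ℕ) : ℚ) ≤ (M:ℚ)^(3*k) := by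
    have hMk : ∀ m : ℕ, m ≤ M^(3*k) → ((m : ℕ) : ℚ) ≤ (M:ℚ)^(3*k) := by
      intro m hm
      push_cast
      exact_mod_cast hm
    have hden : ∀ q : ℚ, q.den ≤ M → ((q.den : ℕ) : ℚ) ≤ (M:ℚ)^(3*k) := by
      intro q hq
      refine hMk _ (le_trans hq ?_)
      calc M = M^1 := (pow_one M).symm
      _ ≤ M^(3*k) := Nat.pow_le_pow_right (by omega) (by omega)
    intro r
    rcases r with ⟨i,a⟩ | ⟨⟨i,s⟩,b⟩ | s | ⟨b1,b2⟩ | b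
    · simp only [hQr]
      exact hMk _ (Qden_le (c i) (h i) M k (by omega)
        (fun j => (hcM i j).2) (fun j => (hhM i j).2) (hcard i))
    · cases b <;> simp only [hQr]
      · exact hden _ (hcM i _).2
      · exact hden _ (hcM i _).2
    · simp only [hQr]
      refine hMk 1 (Nat.one_le_pow _ _ (by omega))
    · cases b1 <;> cases b2 <;> simp only [hQr] <;>
        exact hMk 1 (Nat.one_le_pow _ _ (by omega))
    · cases b <;> simp only [hQr] <;>
        exact hMk 1 (Nat.one_le_pow _ _ (by omega))
  have hAQ : ∀ r j, IsIntMul (Qr r) (A r j) := by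
    intro r j
    rcases r with ⟨i,a⟩ | ⟨⟨i,s⟩,b⟩ | s | ⟨b1,b2⟩ | b
    · simp only [hA, hQr, hco]
      refine IsIntMul.sub (IsIntMul.add (IsIntMul.sub (IsIntMul.sub ?_ ?_) ?_) ?_) ?_
      · exact isIntMul_indQ _ _ (h_isIntMul (c i) (h i) (hh0 i) _) _ j
      · exact isIntMul_indQ _ _ (h_isIntMul (c i) (h i) (hh0 i) _) _ j
      · exact isIntMul_indQ _ _ (h_isIntMul (c i) (h i) (hh0 i) _) _ j
      · exact isIntMul_indQ _ _ (h_isIntMul (c i) (h i) (hh0 i) _) _ j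
      · exact isIntMul_indQ _ _ (isIntMul_one _) _ j
    · cases b <;> simp only [hA, hQr]
      · exact (isIntMul_indQ _ _ (isIntMul_one _) _ j).neg
      · exact isIntMul_indQ _ _ (isIntMul_one _) _ j
    · simp only [hA, hQr]
      exact IsIntMul.sub (isIntMul_indQ _ _ (isIntMul_one _) _ j)
        (isIntMul_indQ _ _ (isIntMul_one _) _ j)
    · cases b1 <;> cases b2 <;> simp only [hA, hQr]
      · exact (isIntMul_indQ _ _ (isIntMul_one _) _ j).neg
      · exact isIntMul_indQ _ _ (isIntMul_one _) _ j
      · exact (isIntMul_indQ _ _ (isIntMul_one _) _ j).neg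
      · exact isIntMul_indQ _ _ (isIntMul_one _) _ j
    · cases b <;> simp only [hA, hQr]
      · exact (isIntMul_indQ _ _ (isIntMul_one _) _ j).neg
      · exact isIntMul_indQ _ _ (isIntMul_one _) _ j
  have hbQ : ∀ r, IsIntMul (Qr r) (bb r) := by
    intro r
    rcases r with ⟨i,a⟩ | ⟨⟨i,s⟩,b⟩ | s | ⟨b1,b2⟩ | b
    · simp only [hbb, hQr, hKc]
      exact (IsIntMul.add (IsIntMul.sub (IsIntMul.sub
        (K_isIntMul (c i) (h i) (hh0 i) _) (K_isIntMul (c i) (h i) (hh0 i) _))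
        (K_isIntMul (c i) (h i) (hh0 i) _)) (K_isIntMul (c i) (h i) (hh0 i) _)).neg
    · cases b <;> simp only [hbb, hQr]
      · exact (IsIntMul.den _).neg
      · exact IsIntMul.den _
    · simp only [hbb, hQr]
      exact IsIntMul.zero _
    · cases b1 <;> cases b2 <;> simp only [hbb, hQr]
      · exact ⟨-1, by norm_num⟩
      · exact ⟨1, by norm_num⟩
      · exact ⟨0, by norm_num⟩
      · exact ⟨0, by norm_num⟩
    · cases b <;> simp only [hbb, hQr]
      · exact ⟨2, by norm_num⟩
      · exact ⟨1, by norm_num⟩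
  have hcoM : ∀ (i : Fin n) (s : Fin (n+1)), |co i s| ≤ (M:ℚ) := by
    intro i s
    rw [hco, abs_of_nonneg (hh0 i _)]
    exact h_le_M (h i) M _ (hh0 i _) (hhM i _).1
  have h0M : (0:ℚ) ≤ (M:ℚ) := by positivity
  have hM3' : (0:ℚ) ≤ (M:ℚ) - 3 := by linarith
  have hcube : 4*(M:ℚ) + 1 ≤ (M:ℚ)^3 := by
    nlinarith [mul_nonneg (mul_nonneg h0M h0M) hM3', mul_nonneg h0M hM3', hM3q]
  have hsum_abs : ∀ (a : Fin (n+2)), ∑ j, |1 * indQ a j| ≤ (M:ℚ)^3 := by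
    intro a
    rw [sum_abs_indQ, abs_one]
    linarith
  have hsum_negabs : ∀ (a : Fin (n+2)), ∑ j, |(-(1 * indQ a j))| ≤ (M:ℚ)^3 := by
    intro a
    have he : ∑ j, |(-(1 * indQ a j))| = ∑ j, |1 * indQ a j| := by
      refine Finset.sum_congr rfl fun j _ => ?_
      rw [abs_neg]
    rw [he]
    exact hsum_abs a
  have hW : ∀ r, ∑ j, |A r j| ≤ (M:ℚ)^3 := by
    intro r
    rcases r with ⟨i,a⟩ | ⟨⟨i,s⟩,b⟩ | s | ⟨b1,b2⟩ | b
    · calc ∑ j, |A (.inl (i,a)) j|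
          ≤ ∑ j, (|co i a.succ * indQ (idx a.succ) j|
            + |co i a.castSucc * indQ (idx a.castSucc) j|
            + |co i (π i).succ * indQ (idx (π i).succ) j|
            + |co i (π i).castSucc * indQ (idx (π i).castSucc) j|
            + |1 * indQ t0 j|) := by
            refine Finset.sum_le_sum fun j _ => ?_
            simp only [hA]
            exact habs5 _ _ _ _ _
      _ = |co i a.succ| + |co i a.castSucc| + |co i (π i).succ|
            + |co i (π i).castSucc| + |(1:ℚ)| := by
            rw [Finset.sum_add_distrib, Finset.sum_add_distrib,
              Finset.sum_add_distrib, Finset.sum_add_distrib,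
              sum_abs_indQ, sum_abs_indQ, sum_abs_indQ, sum_abs_indQ, sum_abs_indQ]
      _ ≤ (M:ℚ) + M + M + M + 1 := by
            have k1 := hcoM i a.succ
            have k2 := hcoM i a.castSucc
            have k3 := hcoM i (π i).succ
            have k4 := hcoM i (π i).castSucc
            rw [abs_one]
            linarith
      _ ≤ (M:ℚ)^3 := by linarith
    · cases b <;> simp only [hA]
      · exact hsum_negabs _
      · exact hsum_abs _
    · calc ∑ j, |A (.inr (.inr (.inl s))) j|
          ≤ ∑ j, (|1 * indQ (idx s.castSucc) j| + |1 * indQ (idx s.succ) j|) := by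
            refine Finset.sum_le_sum fun j _ => ?_
            simp only [hA]
            exact abs_sub _ _
      _ = |(1:ℚ)| + |(1:ℚ)| := by
            rw [Finset.sum_add_distrib, sum_abs_indQ, sum_abs_indQ]
      _ ≤ (M:ℚ)^3 := by rw [abs_one]; linarith
    · cases b1 <;> cases b2 <;> simp only [hA]
      · exact hsum_negabs _
      · exact hsum_abs _
      · exact hsum_negabs _
      · exact hsum_abs _
    · cases b <;> simp only [hA]
      · exact hsum_negabs _
      · exact hsum_abs _
  have hW1 : (1:ℚ) ≤ (M:ℚ)^3 := by nlinarith
  have hQm1 : (1:ℚ) ≤ (M:ℚ)^(3*k) := one_le_pow₀ (by linarith)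
  -- run the LP
  obtain ⟨xs, hxsP, hxsmin, halt⟩ := lp_min_small A bb Qr ((M:ℚ)^3) ((M:ℚ)^(3*k))
    hQpos hQm hAQ hbQ hW hW1 hQm1 P hP hPcomp x₀ hx₀P t0
  have hts : xs t0 ≤ ε := by
    have := hxsmin x₀ hx₀P
    rwa [hx₀t0] at this
  have htle : xs t0 ≤ 0 := by
    rcases halt with h0 | hbig
    · exact h0
    · exfalso
      rw [Fintype.card_fin] at hbig
      have hcast : ((((M:ℚ)^3)^(n+2) * ((M:ℚ)^(3*k))^(n+2) : ℚ) : ℝ)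
          = (M:ℝ)^(3*(n+2) + 3*k*(n+2)) := by
        push_cast
        rw [← pow_mul, ← pow_mul, ← pow_add]
      rw [hcast] at hbig
      have hexp : 3*(n+2) + 3*k*(n+2) < 20*k*n := by
        have h1 : 1*1 ≤ k*n := Nat.mul_le_mul hk hn
        have h2 : 1*n ≤ k*n := Nat.mul_le_mul_right n hk
        have h3 : k*1 ≤ k*n := Nat.mul_le_mul_left k hn
        nlinarith
      have hMgt1 : (1:ℝ) < M := by linarith
      have hlt : (M:ℝ)^(3*(n+2)+3*k*(n+2)) < (M:ℝ)^(20*k*n) :=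
        pow_lt_pow_right₀ hMgt1 hexp
      have hinv : ε < ((M:ℝ)^(3*(n+2)+3*k*(n+2)))⁻¹ := by
        rw [hε]
        exact inv_strictAnti₀ (by positivity) hlt
      linarith
  -- final allocation
  obtain ⟨hcellxs, hmonxs, hxs0, hxs1⟩ := hfeas xs hxsP
  refine ⟨fun s => xs (idx s), hmonxs, hxs0, hxs1, ?_⟩
  intro i j
  have hrow := hEnvyRow xs hxsP i (π j)
  dsimp only
  linarith
end

section
/- Let M ≥ 3 be an integer and let v_1,…,v_n be normalized piecewise constant valuations on [0,1] such that every breakpoint of every density f_i and every value taken by f_i is an integer multiple of 1/M. If there exists a contiguous M^{−4n}-envy-free allocation with permutation π, then there exists a contiguous exactly envy-free allocation with the same permutation π. -/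
open Finset

/-- Column version of a crude Hadamard-type bound. -/
lemma abs_det_le_prod_sum_col {N : ℕ} (A : Matrix (Fin N) (Fin N) ℝ) :
    |A.det| ≤ ∏ i, ∑ j, |A j i| := by
  classical
  rw [Matrix.det_apply]
  refine le_trans (Finset.abs_sum_le_sum_abs _ _) ?_
  have h1 : ∀ σ : Equiv.Perm (Fin N),
      |Equiv.Perm.sign σ • ∏ i, A (σ i) i| = ∏ i, |A (σ i) i| := by
    intro σ
    rcases Int.units_eq_one_or (Equiv.Perm.sign σ) with h | h <;>
      simp [h, Finset.abs_prod]
  calc ∑ σ : Equiv.Perm (Fin N), |Equiv.Perm.sign σ • ∏ i, A (σ i) i|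
      = ∑ σ : Equiv.Perm (Fin N), ∏ i, |A (σ i) i| := by
        exact Finset.sum_congr rfl fun σ _ => h1 σ
    _ = ∑ g ∈ Finset.univ.image (fun σ : Equiv.Perm (Fin N) => ⇑σ), ∏ i, |A (g i) i| := by
        rw [Finset.sum_image]
        intro x _ y _ h
        exact Equiv.coe_fn_injective h
    _ ≤ ∑ g : Fin N → Fin N, ∏ i, |A (g i) i| := by
        apply Finset.sum_le_sum_of_subset_of_nonneg (Finset.subset_univ _)
        intro g _ _
        exact Finset.prod_nonneg fun i _ => abs_nonneg _
    _ = ∏ i, ∑ j, |A j i| := by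
        rw [Finset.prod_univ_sum]
        rw [Fintype.piFinset_univ]

lemma abs_det_le_prod_sum_row {N : ℕ} (A : Matrix (Fin N) (Fin N) ℝ) :
    |A.det| ≤ ∏ i, ∑ j, |A i j| := by
  have := abs_det_le_prod_sum_col A.transpose
  rw [Matrix.det_transpose] at this
  simpa [Matrix.transpose_apply] using this

/-- If a set does not span, there is a nonzero vector orthogonal to it. -/
lemma perp_of_span_ne_top {N : ℕ} (S : Set (Fin N → ℝ))
    (h : Submodule.span ℝ S ≠ ⊤) :
    ∃ d : Fin N → ℝ, d ≠ 0 ∧ ∀ w ∈ S, ∑ c, w c * d c = 0 := by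
  obtain ⟨x, hx⟩ : ∃ x, x ∉ Submodule.span ℝ S := by
    by_contra hc
    push_neg at hc
    exact h (eq_top_iff.2 fun x _ => hc x)
  have hclosed : IsClosed ((Submodule.span ℝ S : Submodule ℝ (Fin N → ℝ)) : Set (Fin N → ℝ)) :=
    Submodule.closed_of_finiteDimensional _
  obtain ⟨φ, u, hφx, hφ⟩ := geometric_hahn_banach_point_closed
    (Submodule.span ℝ S).convex hclosed hx
  have hker : ∀ w ∈ Submodule.span ℝ S, φ w = 0 := by
    intro w hw
    by_contra hne
    have hall : ∀ t : ℝ, u < t * φ w := by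
      intro t
      have h2 := hφ (t • w) (Submodule.smul_mem _ t hw)
      simpa [map_smul, smul_eq_mul] using h2
    have h2 := hall ((u - 1) / φ w)
    rw [div_mul_cancel₀ _ hne] at h2
    linarith
  set d : Fin N → ℝ := fun c => φ (fun j => if c = j then 1 else 0) with hd
  have hφeq : ∀ w : Fin N → ℝ, φ w = ∑ c, w c * d c := by
    intro w
    conv_lhs => rw [pi_eq_sum_univ w]
    rw [map_sum]
    exact Finset.sum_congr rfl fun c _ => by simp [hd, map_smul, smul_eq_mul]
  refine ⟨d, ?_, ?_⟩
  · intro h0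
    have hz : ∀ w : Fin N → ℝ, φ w = 0 := by
      intro w; rw [hφeq, h0]; simp
    have h00 := hφ 0 (Submodule.zero_mem _)
    rw [hz 0] at h00
    rw [hz x] at hφx
    linarith
  · intro w hw
    rw [← hφeq]
    exact hker w (Submodule.subset_span hw)
open Finset

section
variable {N : ℕ} {R : Type*} [Fintype R] (w : R → (Fin N → ℝ)) (b : R → ℝ)

/-- One improvement step: if the tight rows at a feasible point do not span,
we can move to a new feasible point keeping all tight rows tight and making
at least one more row tight. -/
lemma exists_step (C : ℝ)
    (hbd : ∀ z : Fin N → ℝ, (∀ r, ∑ c, w r c * z c ≤ b r) → ∀ c, |z c| ≤ C)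
    (z : Fin N → ℝ) (hz : ∀ r, ∑ c, w r c * z c ≤ b r)
    (hns : Submodule.span ℝ (w '' {r | ∑ c, w r c * z c = b r}) ≠ ⊤) :
    ∃ z' : Fin N → ℝ, (∀ r, ∑ c, w r c * z' c ≤ b r) ∧
      (∀ r, ∑ c, w r c * z c = b r → ∑ c, w r c * z' c = b r) ∧
      (Finset.univ.filter (fun r => ∑ c, w r c * z' c < b r)) ⊂
        (Finset.univ.filter (fun r => ∑ c, w r c * z c < b r)) := by
  classical
  obtain ⟨d, hd0, hdperp⟩ := perp_of_span_ne_top _ hns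
  have hdp : ∀ r, (∑ c, w r c * z c = b r) → ∑ c, w r c * d c = 0 := by
    intro r hr
    exact hdperp (w r) ⟨r, hr, rfl⟩
  have expand : ∀ (r : R) (δ : ℝ),
      ∑ c, w r c * (z c + δ * d c) = (∑ c, w r c * z c) + δ * ∑ c, w r c * d c := by
    intro r δ
    rw [Finset.mul_sum, ← Finset.sum_add_distrib]
    exact Finset.sum_congr rfl fun c _ => by ring
  set G : Finset R := Finset.univ.filter (fun r => 0 < ∑ c, w r c * d c) with hG
  have hGne : G.Nonempty := by
    by_contra hGe
    rw [Finset.not_nonempty_iff_eq_empty] at hGe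
    have hnone : ∀ r, ∑ c, w r c * d c ≤ 0 := by
      intro r
      by_contra hpos
      push_neg at hpos
      have : r ∈ G := by simp [hG, hpos]
      simp [hGe] at this
    obtain ⟨c0, hc0⟩ : ∃ c0, d c0 ≠ 0 := by
      by_contra hall
      push_neg at hall
      exact hd0 (funext hall)
    set δ : ℝ := (2 * C + 1) / |d c0| with hδ
    have hδpos : 0 < δ := by
      apply div_pos
      · have := hbd z hz c0
        have := abs_nonneg (z c0)
        linarith
      · exact abs_pos.2 hc0
    have hfeas : ∀ r, ∑ c, w r c * (z c + δ * d c) ≤ b r := by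
      intro r
      rw [expand]
      have := hnone r
      nlinarith [hz r]
    have hb2 := hbd _ hfeas c0
    have h3 : δ * |d c0| ≤ |z c0 + δ * d c0| + |z c0| := by
      have h4 := abs_add_le (z c0 + δ * d c0) (-(z c0))
      rw [abs_neg] at h4
      have h5 : z c0 + δ * d c0 + -(z c0) = δ * d c0 := by ring
      rw [h5, abs_mul, abs_of_pos hδpos] at h4
      linarith
    have h4 : δ * |d c0| = 2 * C + 1 := by
      rw [hδ, div_mul_cancel₀]
      exact ne_of_gt (abs_pos.2 hc0)
    have h5 := hbd z hz c0
    linarith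
  set δ : ℝ := G.inf' hGne (fun r => (b r - ∑ c, w r c * z c) / (∑ c, w r c * d c)) with hδ
  have hδpos : 0 < δ := by
    rw [hδ, Finset.lt_inf'_iff]
    intro r hr
    rw [hG, Finset.mem_filter] at hr
    apply div_pos
    · rcases lt_or_eq_of_le (hz r) with h | h
      · linarith
      · exfalso
        have := hdp r h
        linarith [hr.2]
    · exact hr.2
  refine ⟨fun c => z c + δ * d c, ?_, ?_, ?_⟩
  · intro r
    rw [expand]
    by_cases hr : 0 < ∑ c, w r c * d c
    · have hrG : r ∈ G := by simp [hG, hr]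
      have hle : δ ≤ (b r - ∑ c, w r c * z c) / (∑ c, w r c * d c) :=
        Finset.inf'_le _ hrG
      have h2 : δ * (∑ c, w r c * d c) ≤ b r - ∑ c, w r c * z c := by
        rw [← le_div_iff₀ hr]
        exact hle
      linarith
    · push_neg at hr
      nlinarith [hz r]
  · intro r hr
    rw [expand, hdp r hr, hr]
    ring
  · obtain ⟨r0, hr0G, hr0⟩ := Finset.exists_mem_eq_inf' hGne
      (fun r => (b r - ∑ c, w r c * z c) / (∑ c, w r c * d c))
    rw [hG, Finset.mem_filter] at hr0G
    have hr0pos := hr0G.2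
    have hr0tight : ∑ c, w r0 c * (z c + δ * d c) = b r0 := by
      rw [expand, hδ, hr0, div_mul_cancel₀]
      · ring
      · exact ne_of_gt hr0pos
    constructor
    · intro r hr
      rw [Finset.mem_filter] at hr ⊢
      refine ⟨Finset.mem_univ _, ?_⟩
      rcases lt_or_eq_of_le (hz r) with h | h
      · exact h
      · exfalso
        have h2 : ∑ c, w r c * (z c + δ * d c) = b r := by
          rw [expand, hdp r h, h]; ring
        rw [h2] at hr
        exact lt_irrefl _ hr.2
    · intro hsub
      have hr0slack : ∑ c, w r0 c * z c < b r0 := by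
        rcases lt_or_eq_of_le (hz r0) with h | h
        · exact h
        · exfalso
          have := hdp r0 h
          linarith
      have hmem : r0 ∈ Finset.univ.filter (fun r => ∑ c, w r c * z c < b r) := by
        simp [hr0slack]
      have := hsub hmem
      rw [Finset.mem_filter] at this
      rw [hr0tight] at this
      exact lt_irrefl _ this.2

/-- Main moving lemma: from any feasible point, reach a feasible point whose
tight rows span, keeping previously tight rows tight. -/
lemma exists_tight_span (C : ℝ)
    (hbd : ∀ z : Fin N → ℝ, (∀ r, ∑ c, w r c * z c ≤ b r) → ∀ c, |z c| ≤ C)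
    (z : Fin N → ℝ) (hz : ∀ r, ∑ c, w r c * z c ≤ b r) :
    ∃ z' : Fin N → ℝ, (∀ r, ∑ c, w r c * z' c ≤ b r) ∧
      (∀ r, ∑ c, w r c * z c = b r → ∑ c, w r c * z' c = b r) ∧
      Submodule.span ℝ (w '' {r | ∑ c, w r c * z' c = b r}) = ⊤ := by
  classical
  suffices H : ∀ (k : ℕ) (z : Fin N → ℝ), (∀ r, ∑ c, w r c * z c ≤ b r) →
      (Finset.univ.filter (fun r => ∑ c, w r c * z c < b r)).card ≤ k →
      ∃ z' : Fin N → ℝ, (∀ r, ∑ c, w r c * z' c ≤ b r) ∧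
        (∀ r, ∑ c, w r c * z c = b r → ∑ c, w r c * z' c = b r) ∧
        Submodule.span ℝ (w '' {r | ∑ c, w r c * z' c = b r}) = ⊤ by
    exact H _ z hz le_rfl
  intro k
  induction k with
  | zero =>
    intro z hz hcard
    by_cases hs : Submodule.span ℝ (w '' {r | ∑ c, w r c * z c = b r}) = ⊤
    · exact ⟨z, hz, fun r hr => hr, hs⟩
    · exfalso
      obtain ⟨z', _, _, hlt⟩ := exists_step w b C hbd z hz hs
      have := Finset.card_lt_card hlt
      omega
  | succ k IH =>
    intro z hz hcard
    by_cases hs : Submodule.span ℝ (w '' {r | ∑ c, w r c * z c = b r}) = ⊤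
    · exact ⟨z, hz, fun r hr => hr, hs⟩
    · obtain ⟨z', hz', htight, hlt⟩ := exists_step w b C hbd z hz hs
      have hcard' : (Finset.univ.filter (fun r => ∑ c, w r c * z' c < b r)).card ≤ k := by
        have := Finset.card_lt_card hlt
        omega
      obtain ⟨z'', h1, h2, h3⟩ := IH z' hz' hcard'
      refine ⟨z'', h1, ?_, h3⟩
      intro r hr
      exact h2 r (htight r hr)
end

lemma aux_37 : ∀ n : ℕ, 3 ≤ n → 9 * 37 ^ n < 9 ^ (2 * n) := by
  intro n hn
  induction n with
  | zero => omega
  | succ m IH =>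
    rcases Nat.lt_or_ge m 3 with hm | hm
    · interval_cases m
      · omega
      · omega
      · norm_num
    · have h1 := IH (by omega)
      have h2 : 9 * 37 ^ (m + 1) = 37 * (9 * 37 ^ m) := by ring
      have h3 : 9 ^ (2 * (m + 1)) = 81 * 9 ^ (2 * m) := by ring
      calc 9 * 37 ^ (m + 1) = 37 * (9 * 37 ^ m) := h2
        _ < 37 * 9 ^ (2 * m) := mul_lt_mul_of_pos_left h1 (by norm_num)
        _ ≤ 81 * 9 ^ (2 * m) := Nat.mul_le_mul_right _ (by norm_num)
        _ = 9 ^ (2 * (m + 1)) := h3.symm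

lemma key_numeric (M n : ℕ) (hM : 3 ≤ M) (hn : 1 ≤ n) :
    M ^ 2 * (max 2 (min 4 (2 * (n - 1)) * M ^ 2 + 1)) ^ n < M ^ (4 * n) := by
  have hM2 : 9 ≤ M ^ 2 := by nlinarith
  rcases Nat.lt_or_ge n 3 with h3 | h3
  · interval_cases n
    · -- n = 1
      have e : (max 2 (min 4 (2 * (1 - 1)) * M ^ 2 + 1)) = 2 := by norm_num
      rw [e, pow_one]
      have e2 : M ^ (4 * 1) = M ^ 2 * M ^ 2 := by ring
      rw [e2]
      nlinarith
    · -- n = 2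
      have hmin : min 4 (2 * (2 - 1)) = 2 := by norm_num
      rw [hmin]
      have hmax : max 2 (2 * M ^ 2 + 1) = 2 * M ^ 2 + 1 := by
        apply max_eq_right; omega
      rw [hmax]
      have hlt : 2 * M ^ 2 + 1 < M ^ 3 := by nlinarith
      have h1 : (2 * M ^ 2 + 1) ^ 2 < (M ^ 3) ^ 2 :=
        Nat.pow_lt_pow_left hlt (by norm_num)
      calc M ^ 2 * (2 * M ^ 2 + 1) ^ 2 < M ^ 2 * (M ^ 3) ^ 2 :=
            mul_lt_mul_of_pos_left h1 (by positivity)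
        _ = M ^ (4 * 2) := by ring
  · -- n ≥ 3
    have hmin : min 4 (2 * (n - 1)) = 4 := by omega
    rw [hmin]
    have hmax : max 2 (4 * M ^ 2 + 1) = 4 * M ^ 2 + 1 := by
      apply max_eq_right; omega
    rw [hmax]
    have h9 : 9 * (4 * M ^ 2 + 1) ≤ 37 * M ^ 2 := by omega
    have key : 9 ^ n * (M ^ 2 * (4 * M ^ 2 + 1) ^ n) < 9 ^ n * M ^ (4 * n) := by
      have l1 : 9 ^ n * (M ^ 2 * (4 * M ^ 2 + 1) ^ n) = M ^ 2 * (9 * (4 * M ^ 2 + 1)) ^ n := by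
        rw [mul_pow]; ring
      have l2 : M ^ 2 * (9 * (4 * M ^ 2 + 1)) ^ n ≤ M ^ 2 * (37 * M ^ 2) ^ n :=
        Nat.mul_le_mul_left _ (Nat.pow_le_pow_left h9 n)
      have l3 : M ^ 2 * (37 * M ^ 2) ^ n = 37 ^ n * (M ^ 2 * (M ^ 2) ^ n) := by
        rw [mul_pow]; ring
      have e1 : M ^ 2 * (M ^ 2) ^ n = M ^ (2 + 2 * n) := by
        rw [← pow_mul, ← pow_add]
      have e2 : M ^ (2 * n - 2) * M ^ (2 + 2 * n) = M ^ (4 * n) := by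
        rw [← pow_add]; congr 1; omega
      have l4 : 9 ^ n * M ^ (2 * n - 2) * (M ^ 2 * (M ^ 2) ^ n) = 9 ^ n * M ^ (4 * n) := by
        calc 9 ^ n * M ^ (2 * n - 2) * (M ^ 2 * (M ^ 2) ^ n)
            = 9 ^ n * (M ^ (2 * n - 2) * (M ^ 2 * (M ^ 2) ^ n)) := by ring
          _ = 9 ^ n * (M ^ (2 * n - 2) * M ^ (2 + 2 * n)) := by rw [e1]
          _ = 9 ^ n * M ^ (4 * n) := by rw [e2]
      have l5 : 37 ^ n < 9 ^ n * M ^ (2 * n - 2) := by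
        have l6 : 9 ^ (n - 1) ≤ M ^ (2 * n - 2) := by
          have h7 : 9 ^ (n - 1) ≤ (M ^ 2) ^ (n - 1) := Nat.pow_le_pow_left hM2 _
          rw [← pow_mul] at h7
          have he : 2 * (n - 1) = 2 * n - 2 := by omega
          rwa [he] at h7
        have l7 : 9 * 37 ^ n < 9 ^ (2 * n) := aux_37 n h3
        have l8 : 9 ^ (2 * n) = 9 * (9 ^ n * 9 ^ (n - 1)) := by
          rw [← pow_add]
          have he : n + (n - 1) = 2 * n - 1 := by omega
          rw [he, ← pow_succ']
          congr 1
          omega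
        have l9 : 37 ^ n < 9 ^ n * 9 ^ (n - 1) := by
          rw [l8] at l7
          omega
        calc 37 ^ n < 9 ^ n * 9 ^ (n - 1) := l9
          _ ≤ 9 ^ n * M ^ (2 * n - 2) := Nat.mul_le_mul_left _ l6
      calc 9 ^ n * (M ^ 2 * (4 * M ^ 2 + 1) ^ n)
          = M ^ 2 * (9 * (4 * M ^ 2 + 1)) ^ n := l1
        _ ≤ M ^ 2 * (37 * M ^ 2) ^ n := l2
        _ = 37 ^ n * (M ^ 2 * (M ^ 2) ^ n) := l3
        _ < (9 ^ n * M ^ (2 * n - 2)) * (M ^ 2 * (M ^ 2) ^ n) :=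
            mul_lt_mul_of_pos_right l5 (by positivity)
        _ = 9 ^ n * M ^ (4 * n) := l4
    exact Nat.lt_of_mul_lt_mul_left key
section H4
open Finset
lemma exists_feasible_move {N : ℕ} {R : Type*} [Fintype R]
    (w : R → (Fin N → ℝ)) (b : R → ℝ)
    (z d : Fin N → ℝ) (hz : ∀ r, ∑ c, w r c * z c ≤ b r)
    (hd : ∀ r, (∑ c, w r c * z c = b r) → ∑ c, w r c * d c ≤ 0) :
    ∃ δ : ℝ, 0 < δ ∧ ∀ r, ∑ c, w r c * (z c + δ * d c) ≤ b r := by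
  classical
  have expand : ∀ (r : R) (δ : ℝ),
      ∑ c, w r c * (z c + δ * d c) = (∑ c, w r c * z c) + δ * ∑ c, w r c * d c := by
    intro r δ
    rw [Finset.mul_sum, ← Finset.sum_add_distrib]
    exact Finset.sum_congr rfl fun c _ => by ring
  set G : Finset R := Finset.univ.filter (fun r => 0 < ∑ c, w r c * d c) with hG
  by_cases hGne : G.Nonempty
  · set δ : ℝ := G.inf' hGne (fun r => (b r - ∑ c, w r c * z c) / (∑ c, w r c * d c)) with hδ
    have hδpos : 0 < δ := by
      rw [hδ, Finset.lt_inf'_iff]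
      intro r hr
      rw [hG, Finset.mem_filter] at hr
      apply div_pos
      · rcases lt_or_eq_of_le (hz r) with h | h
        · linarith
        · exfalso; have := hd r h; linarith [hr.2]
      · exact hr.2
    refine ⟨δ, hδpos, fun r => ?_⟩
    rw [expand]
    by_cases hr : 0 < ∑ c, w r c * d c
    · have hrG : r ∈ G := by simp [hG, hr]
      have hle : δ ≤ (b r - ∑ c, w r c * z c) / (∑ c, w r c * d c) :=
        Finset.inf'_le _ hrG
      have h2 : δ * (∑ c, w r c * d c) ≤ b r - ∑ c, w r c * z c := by
        rw [← le_div_iff₀ hr]; exact hle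
      linarith
    · push_neg at hr
      nlinarith [hz r]
  · refine ⟨1, one_pos, fun r => ?_⟩
    rw [expand]
    have hr : ¬ (0 < ∑ c, w r c * d c) := by
      intro h
      exact hGne ⟨r, by simp [hG, h]⟩
    push_neg at hr
    nlinarith [hz r]
end H4
open Finset

section MegaDefs
variable (n M : ℕ) (szc : Fin n → Fin (n + 1) → ℕ) (cz : Fin n → Fin (n + 1) → ℤ)
  (lb ub : Fin (n + 1) → ℤ) (π : Equiv.Perm (Fin n))

/-- row index type for the polytope -/
def RT (n : ℕ) : Type :=
  (Fin (n + 1) × Bool) ⊕ (Fin n ⊕ ((Fin n × Fin n) ⊕ Unit))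

instance : Fintype (RT n) :=
  inferInstanceAs (Fintype ((Fin (n + 1) × Bool) ⊕ (Fin n ⊕ ((Fin n × Fin n) ⊕ Unit))))

/-- coordinate embedding of cuts -/
def ccf (n : ℕ) (k : Fin (n + 1)) : Fin (n + 2) := k.castSucc

/-- the τ coordinate -/
def τc (n : ℕ) : Fin (n + 2) := Fin.last (n + 1)

/-- integer rows of the constraint system -/
def wZ : RT n → Fin (n + 2) → ℤ
  | Sum.inl (k, true) => fun c => if c = ccf n k then 1 else 0
  | Sum.inl (k, false) => fun c => if c = ccf n k then -1 else 0
  | Sum.inr (Sum.inl k) => fun c =>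
      (if c = ccf n k.castSucc then 1 else 0) - (if c = ccf n k.succ then 1 else 0)
  | Sum.inr (Sum.inr (Sum.inl (i, j))) => fun c =>
      (if c = τc n then 1 else 0)
      - (if c = ccf n (π i).succ then (szc i (π i).succ : ℤ) else 0)
      + (if c = ccf n (π i).castSucc then (szc i (π i).castSucc : ℤ) else 0)
      + (if c = ccf n (π j).succ then (szc i (π j).succ : ℤ) else 0)
      - (if c = ccf n (π j).castSucc then (szc i (π j).castSucc : ℤ) else 0)
  | Sum.inr (Sum.inr (Sum.inr _)) => fun c => if c = τc n then -1 else 0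

/-- integer right-hand sides -/
def bZ : RT n → ℤ
  | Sum.inl (k, true) => ub k
  | Sum.inl (k, false) => -lb k
  | Sum.inr (Sum.inl _) => 0
  | Sum.inr (Sum.inr (Sum.inl (i, j))) =>
      (cz i (π i).succ - cz i (π i).castSucc) - (cz i (π j).succ - cz i (π j).castSucc)
  | Sum.inr (Sum.inr (Sum.inr _)) => 2 * (M : ℤ) ^ 2

/-- the affine (scaled) value of piece `a` for agent `i` -/
def Av (i : Fin n) (a : Fin n) (u : Fin (n + 1) → ℝ) : ℝ :=
  ((cz i a.succ : ℝ) + (szc i a.succ : ℝ) * u a.succ)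
    - ((cz i a.castSucc : ℝ) + (szc i a.castSucc : ℝ) * u a.castSucc)

end MegaDefs

section MegaEval
variable {n M : ℕ} {szc : Fin n → Fin (n + 1) → ℕ} {cz : Fin n → Fin (n + 1) → ℤ}
  {lb ub : Fin (n + 1) → ℤ} {π : Equiv.Perm (Fin n)}

lemma sum_ind {m : ℕ} (a : Fin m) (t : ℝ) (z : Fin m → ℝ) :
    ∑ c, (if c = a then t else 0) * z c = t * z a := by
  rw [Finset.sum_eq_single a]
  · simp
  · intro c _ hc; simp [hc]
  · intro h; exact absurd (Finset.mem_univ a) h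

lemma ccf_ne_τc (k : Fin (n + 1)) : ccf n k ≠ τc n := by
  simpa [ccf, τc] using (Fin.castSucc_lt_last k).ne

lemma ccf_inj : Function.Injective (ccf n) := Fin.castSucc_injective _

/-- real rows -/
noncomputable def wR (szc : Fin n → Fin (n + 1) → ℕ) (π : Equiv.Perm (Fin n)) :
    RT n → Fin (n + 2) → ℝ := fun r c => ((wZ n szc π r c : ℤ) : ℝ)

noncomputable def bR (M : ℕ) (cz : Fin n → Fin (n + 1) → ℤ) (lb ub : Fin (n + 1) → ℤ)
    (π : Equiv.Perm (Fin n)) : RT n → ℝ := fun r => ((bZ n M cz lb ub π r : ℤ) : ℝ)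

lemma evalBoxT (k : Fin (n + 1)) (z : Fin (n + 2) → ℝ) :
    ∑ c, wR szc π (Sum.inl (k, true)) c * z c = z (ccf n k) := by
  simp only [wR, wZ]
  push_cast
  rw [sum_ind]
  ring

lemma evalBoxF (k : Fin (n + 1)) (z : Fin (n + 2) → ℝ) :
    ∑ c, wR szc π (Sum.inl (k, false)) c * z c = -z (ccf n k) := by
  simp only [wR, wZ]
  push_cast
  rw [sum_ind]
  ring

lemma evalOrd (k : Fin n) (z : Fin (n + 2) → ℝ) :
    ∑ c, wR szc π (Sum.inr (Sum.inl k)) c * z c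
      = z (ccf n k.castSucc) - z (ccf n k.succ) := by
  simp only [wR, wZ]
  push_cast
  simp only [sub_mul]
  rw [Finset.sum_sub_distrib, sum_ind, sum_ind]
  ring

lemma evalD (i j : Fin n) (z : Fin (n + 2) → ℝ) :
    ∑ c, wR szc π (Sum.inr (Sum.inr (Sum.inl (i, j)))) c * z c
      = z (τc n)
        - (szc i (π i).succ : ℝ) * z (ccf n (π i).succ)
        + (szc i (π i).castSucc : ℝ) * z (ccf n (π i).castSucc)
        + (szc i (π j).succ : ℝ) * z (ccf n (π j).succ)
        - (szc i (π j).castSucc : ℝ) * z (ccf n (π j).castSucc) := by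
  simp only [wR, wZ]
  push_cast
  simp only [sub_mul, add_mul]
  rw [Finset.sum_sub_distrib, Finset.sum_add_distrib, Finset.sum_add_distrib,
    Finset.sum_sub_distrib]
  rw [sum_ind, sum_ind, sum_ind, sum_ind, sum_ind]
  ring

lemma evalTau (u : Unit) (z : Fin (n + 2) → ℝ) :
    ∑ c, wR szc π (Sum.inr (Sum.inr (Sum.inr u))) c * z c = -z (τc n) := by
  simp only [wR, wZ]
  push_cast
  rw [sum_ind]
  ring

end MegaEval

section M1
variable {n M : ℕ} {szc : Fin n → Fin (n + 1) → ℕ} {cz : Fin n → Fin (n + 1) → ℤ}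
  {lb ub : Fin (n + 1) → ℤ} {π : Equiv.Perm (Fin n)}

lemma sum_abs_ind {m : ℕ} (a : Fin m) (t : ℝ) :
    ∑ c, |if c = a then t else 0| = |t| := by
  rw [Finset.sum_eq_single a]
  · simp
  · intro c _ hc; simp [hc]
  · intro h; exact absurd (Finset.mem_univ a) h

lemma abs5 (a b c d e : ℝ) : |a - b + c + d - e| ≤ |a| + |b| + |c| + |d| + |e| := by
  calc |a - b + c + d - e| ≤ |a - b + c + d| + |e| := abs_sub _ _
    _ ≤ (|a - b + c| + |d|) + |e| := by gcongr; exact abs_add_le _ _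
    _ ≤ ((|a - b| + |c|) + |d|) + |e| := by gcongr; exact abs_add_le _ _
    _ ≤ (((|a| + |b|) + |c|) + |d|) + |e| := by gcongr; exact abs_sub _ _
    _ = |a| + |b| + |c| + |d| + |e| := by ring

/-- The uniform row bound -/
def Kn (n M : ℕ) : ℕ := max 2 (min 4 (2 * (n - 1)) * M ^ 2 + 1)

lemma rowsum_le
    (hpiece : ∀ i (a : Fin n), szc i a.castSucc + szc i a.succ ≤ min 2 (n - 1) * M ^ 2)
    (r : RT n) : ∑ c, |wR szc π r c| ≤ ((Kn n M : ℕ) : ℝ) := by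
  have hKn2 : (2 : ℝ) ≤ ((Kn n M : ℕ) : ℝ) := by
    have : (2 : ℕ) ≤ Kn n M := le_max_left _ _
    exact_mod_cast this
  obtain r | r | ⟨i, j⟩ | u := r
  · -- box
    obtain ⟨k, tb⟩ := r
    cases tb <;>
    · simp only [wR, wZ]
      push_cast
      rw [sum_abs_ind]
      have habs : |(1:ℝ)| ≤ 2 ∧ |(-1:ℝ)| ≤ 2 := by norm_num
      first
      | exact le_trans habs.1 hKn2
      | exact le_trans habs.2 hKn2
  · -- order
    simp only [wR, wZ]
    push_cast
    calc ∑ c, |(if c = ccf n r.castSucc then (1:ℝ) else 0) - (if c = ccf n r.succ then 1 else 0)|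
        ≤ ∑ c, (|if c = ccf n r.castSucc then (1:ℝ) else 0| + |if c = ccf n r.succ then (1:ℝ) else 0|) := by
          apply Finset.sum_le_sum
          intro c _
          exact abs_sub _ _
      _ = 2 := by rw [Finset.sum_add_distrib, sum_abs_ind, sum_abs_ind]; norm_num
      _ ≤ _ := hKn2
  · -- D row
    simp only [wR, wZ]
    push_cast
    have hb : ∀ c : Fin (n + 2),
        |(if c = τc n then (1:ℝ) else 0)
          - (if c = ccf n (π i).succ then (szc i (π i).succ : ℝ) else 0)
          + (if c = ccf n (π i).castSucc then (szc i (π i).castSucc : ℝ) else 0)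
          + (if c = ccf n (π j).succ then (szc i (π j).succ : ℝ) else 0)
          - (if c = ccf n (π j).castSucc then (szc i (π j).castSucc : ℝ) else 0)|
        ≤ |if c = τc n then (1:ℝ) else 0|
          + |if c = ccf n (π i).succ then (szc i (π i).succ : ℝ) else 0|
          + |if c = ccf n (π i).castSucc then (szc i (π i).castSucc : ℝ) else 0|
          + |if c = ccf n (π j).succ then (szc i (π j).succ : ℝ) else 0|
          + |if c = ccf n (π j).castSucc then (szc i (π j).castSucc : ℝ) else 0| := by
      intro c
      exact abs5 _ _ _ _ _
    calc ∑ c, |(if c = τc n then (1:ℝ) else 0)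
          - (if c = ccf n (π i).succ then (szc i (π i).succ : ℝ) else 0)
          + (if c = ccf n (π i).castSucc then (szc i (π i).castSucc : ℝ) else 0)
          + (if c = ccf n (π j).succ then (szc i (π j).succ : ℝ) else 0)
          - (if c = ccf n (π j).castSucc then (szc i (π j).castSucc : ℝ) else 0)|
        ≤ ∑ c, (|if c = τc n then (1:ℝ) else 0|
          + |if c = ccf n (π i).succ then (szc i (π i).succ : ℝ) else 0|
          + |if c = ccf n (π i).castSucc then (szc i (π i).castSucc : ℝ) else 0|
          + |if c = ccf n (π j).succ then (szc i (π j).succ : ℝ) else 0|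
          + |if c = ccf n (π j).castSucc then (szc i (π j).castSucc : ℝ) else 0|) :=
          Finset.sum_le_sum fun c _ => hb c
      _ = 1 + ((szc i (π i).succ : ℝ) + (szc i (π i).castSucc : ℝ)
            + (szc i (π j).succ : ℝ) + (szc i (π j).castSucc : ℝ)) := by
          simp only [Finset.sum_add_distrib, sum_abs_ind]
          rw [abs_one, abs_of_nonneg (by positivity), abs_of_nonneg (by positivity),
            abs_of_nonneg (by positivity), abs_of_nonneg (by positivity)]
          ring
      _ ≤ ((Kn n M : ℕ) : ℝ) := by
          have h1 := hpiece i (π i)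
          have h2 := hpiece i (π j)
          have h3 : 1 + (2 * (min 2 (n - 1) * M ^ 2)) ≤ Kn n M := by
            have he : 2 * (min 2 (n - 1) * M ^ 2) = min 4 (2 * (n - 1)) * M ^ 2 := by
              rcases Nat.le_total 2 (n - 1) with h | h
              · have e1 : min 2 (n - 1) = 2 := by omega
                have e2 : min 4 (2 * (n - 1)) = 4 := by omega
                rw [e1, e2]; ring
              · have e1 : min 2 (n - 1) = n - 1 := by omega
                have e2 : min 4 (2 * (n - 1)) = 2 * (n - 1) := by omega
                rw [e1, e2]; ring
            rw [he, Kn]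
            omega
          have h4 : (szc i (π i).succ : ℝ) + (szc i (π i).castSucc : ℝ)
              + (szc i (π j).succ : ℝ) + (szc i (π j).castSucc : ℝ)
              ≤ 2 * ((min 2 (n - 1) * M ^ 2 : ℕ) : ℝ) := by
            push_cast
            have c1 : ((szc i (π i).castSucc : ℕ) : ℝ) + ((szc i (π i).succ : ℕ) : ℝ)
                ≤ ((min 2 (n - 1) * M ^ 2 : ℕ) : ℝ) := by exact_mod_cast h1
            have c2 : ((szc i (π j).castSucc : ℕ) : ℝ) + ((szc i (π j).succ : ℕ) : ℝ)
                ≤ ((min 2 (n - 1) * M ^ 2 : ℕ) : ℝ) := by exact_mod_cast h2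
            push_cast at c1 c2
            linarith
          have h5 : (1 : ℝ) + 2 * ((min 2 (n - 1) * M ^ 2 : ℕ) : ℝ) ≤ ((Kn n M : ℕ) : ℝ) := by
            exact_mod_cast h3
          linarith
  · -- unit
    simp only [wR, wZ]
    push_cast
    rw [sum_abs_ind]
    have habs : |(-1:ℝ)| ≤ 2 := by norm_num
    exact le_trans habs hKn2

/-- dot product with a fixed vector, as a linear map -/
def dotL {N : ℕ} (d : Fin N → ℝ) : (Fin N → ℝ) →ₗ[ℝ] ℝ where
  toFun := fun v => ∑ c, v c * d c
  map_add' := by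
    intro v w
    simp only [Pi.add_apply, add_mul]
    rw [Finset.sum_add_distrib]
  map_smul' := by
    intro a v
    simp only [Pi.smul_apply, smul_eq_mul, RingHom.id_apply]
    rw [Finset.mul_sum]
    exact Finset.sum_congr rfl fun c _ => by ring

lemma eq_zero_of_dot_self {N : ℕ} (d : Fin N → ℝ) (h : ∑ c, d c * d c = 0) : d = 0 := by
  have h2 : ∀ c ∈ Finset.univ, d c * d c = 0 := by
    rw [← Finset.sum_eq_zero_iff_of_nonneg]
    · exact h
    · intro c _; exact mul_self_nonneg _
  funext c
  exact mul_self_eq_zero.1 (h2 c (Finset.mem_univ c))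

end M1
section M2
variable {n M : ℕ} {szc : Fin n → Fin (n + 1) → ℕ} {cz : Fin n → Fin (n + 1) → ℤ}
  {lb ub : Fin (n + 1) → ℤ} {π : Equiv.Perm (Fin n)}

lemma bD_diag (i : Fin n) : bR M cz lb ub π (Sum.inr (Sum.inr (Sum.inl (i, i)))) = 0 := by
  simp only [bR, bZ]
  push_cast
  ring

lemma coord_bound (hM : 3 ≤ M) (hn : 0 < n)
    (hub : ∀ k, ub k ≤ M) (hlb : ∀ k, 0 ≤ lb k)
    (z : Fin (n + 2) → ℝ)
    (hz : ∀ r, ∑ c, wR szc π r c * z c ≤ bR M cz lb ub π r) :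
    ∀ c, |z c| ≤ 2 * (M : ℝ) ^ 2 := by
  have hMR : (3 : ℝ) ≤ (M : ℝ) := by exact_mod_cast hM
  intro c
  induction c using Fin.lastCases with
  | last =>
    have hτ : (Fin.last (n + 1)) = τc n := rfl
    rw [hτ]
    have h1 := hz (Sum.inr (Sum.inr (Sum.inr ())))
    rw [evalTau] at h1
    have hbu : bR M cz lb ub π (Sum.inr (Sum.inr (Sum.inr ()))) = 2 * (M : ℝ) ^ 2 := by
      simp only [bR, bZ]; push_cast; ring
    rw [hbu] at h1
    -- upper bound via the diagonal D row
    set i0 : Fin n := ⟨0, hn⟩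
    have h2 := hz (Sum.inr (Sum.inr (Sum.inl (i0, i0))))
    rw [evalD, bD_diag] at h2
    have h3 : z (τc n) ≤ 0 := by linarith
    rw [abs_le]
    constructor
    · linarith
    · nlinarith
  | cast k =>
    have h1 := hz (Sum.inl (k, true))
    have h2 := hz (Sum.inl (k, false))
    rw [evalBoxT] at h1
    rw [evalBoxF] at h2
    have hbu : bR M cz lb ub π (Sum.inl (k, true)) = ((ub k : ℤ) : ℝ) := by
      simp only [bR, bZ]
    have hbl : bR M cz lb ub π (Sum.inl (k, false)) = -((lb k : ℤ) : ℝ) := by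
      simp only [bR, bZ]; push_cast; ring
    rw [hbu] at h1
    rw [hbl] at h2
    have hu : ((ub k : ℤ) : ℝ) ≤ (M : ℝ) := by exact_mod_cast hub k
    have hl : (0 : ℝ) ≤ ((lb k : ℤ) : ℝ) := by exact_mod_cast hlb k
    have hcc : (Fin.castSucc k) = ccf n k := rfl
    rw [hcc, abs_le]
    constructor
    · nlinarith
    · nlinarith
end M2
section M3
open Finset

set_option maxHeartbeats 2000000 in
theorem mega (n M : ℕ) (hM : 3 ≤ M) (hn : 0 < n)
    (szc : Fin n → Fin (n + 1) → ℕ) (cz : Fin n → Fin (n + 1) → ℤ)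
    (lb ub : Fin (n + 1) → ℤ) (π : Equiv.Perm (Fin n))
    (hlb0 : lb 0 = 0) (hub0 : ub 0 = 0)
    (hlbl : lb (Fin.last n) = M) (hubl : ub (Fin.last n) = M)
    (hlbnn : ∀ k, 0 ≤ lb k) (huble : ∀ k, ub k ≤ M)
    (hpiece : ∀ i (a : Fin n), szc i a.castSucc + szc i a.succ ≤ min 2 (n - 1) * M ^ 2)
    (u0 : Fin (n + 1) → ℝ) (hu0m : Monotone u0)
    (hu0box : ∀ k, (lb k : ℝ) ≤ u0 k ∧ u0 k ≤ (ub k : ℝ))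
    (hu0EF : ∀ i j, Av n szc cz i (π i) u0 ≥
      Av n szc cz i (π j) u0 - (M : ℝ) ^ 2 * ((M : ℝ) ^ (4 * n))⁻¹) :
    ∃ u' : Fin (n + 1) → ℝ, Monotone u' ∧
      (∀ k, (lb k : ℝ) ≤ u' k ∧ u' k ≤ (ub k : ℝ)) ∧
      (∀ i j, Av n szc cz i (π i) u' ≥ Av n szc cz i (π j) u') := by
  classical
  have hMR : (3 : ℝ) ≤ (M : ℝ) := by exact_mod_cast hM
  set ε : ℝ := (M : ℝ) ^ 2 * ((M : ℝ) ^ (4 * n))⁻¹ with hε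
  have hMpow : (1 : ℝ) ≤ (M : ℝ) ^ (4 * n) := one_le_pow₀ (by linarith : (1:ℝ) ≤ (M:ℝ))
  have hεpos : 0 < ε := by
    rw [hε]; positivity
  have hεle : ε ≤ (M : ℝ) ^ 2 := by
    rw [hε]
    have h1 : ((M : ℝ) ^ (4 * n))⁻¹ ≤ 1 := by
      rw [inv_le_one_iff₀]; right; exact hMpow
    nlinarith
  -- the feasible set
  set w : RT n → Fin (n + 2) → ℝ := wR szc π with hw
  set bb : RT n → ℝ := bR M cz lb ub π with hbb
  set Feas : (Fin (n + 2) → ℝ) → Prop := fun z => ∀ r, ∑ c, w r c * z c ≤ bb r with hFeas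
  -- the lifted initial point
  set z0 : Fin (n + 2) → ℝ := fun c => Fin.lastCases (-ε) u0 c with hz0
  have hz0cc : ∀ k : Fin (n + 1), z0 (ccf n k) = u0 k := fun k => by
    simp [hz0, ccf, Fin.lastCases_castSucc]
  have hz0τ : z0 (τc n) = -ε := by simp [hz0, τc, Fin.lastCases_last]
  have hFeas0 : Feas z0 := by
    rintro (⟨k, tb⟩ | r | ⟨i, j⟩ | u)
    · cases tb
      · rw [evalBoxF, hz0cc]
        simp only [hbb, bR, bZ]
        push_cast
        linarith [(hu0box k).1]
      · rw [evalBoxT, hz0cc]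
        simpa only [hbb, bR, bZ] using (hu0box k).2
    · rw [evalOrd, hz0cc, hz0cc]
      simp only [hbb, bR, bZ]
      push_cast
      have := hu0m (Fin.castSucc_le_succ r)
      linarith
    · rw [evalD, hz0cc, hz0cc, hz0cc, hz0cc, hz0τ]
      have h1 := hu0EF i j
      simp only [Av] at h1
      simp only [hbb, bR, bZ]
      push_cast
      linarith
    · rw [evalTau, hz0τ]
      simp only [hbb, bR, bZ]
      push_cast
      nlinarith
  -- compactness of the feasible region
  set QC : Set (Fin (n + 2) → ℝ) := {z | Feas z} with hQC
  have hQclosed : IsClosed QC := by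
    have : QC = ⋂ r, {z : Fin (n + 2) → ℝ | ∑ c, w r c * z c ≤ bb r} := by
      ext z; simp [hQC, hFeas, Set.mem_iInter]
    rw [this]
    refine isClosed_iInter fun r => ?_
    exact isClosed_le (by continuity) continuous_const
  have hQsub : QC ⊆ Set.Icc (fun _ => -(2 * (M : ℝ) ^ 2)) (fun _ => 2 * (M : ℝ) ^ 2) := by
    intro z hzQ
    have := coord_bound hM hn huble hlbnn z hzQ
    constructor
    · intro c; have := abs_le.1 (this c); exact this.1
    · intro c; have := abs_le.1 (this c); exact this.2
  have hQcomp : IsCompact QC :=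
    IsCompact.of_isClosed_subset isCompact_Icc hQclosed hQsub
  have hQne : QC.Nonempty := ⟨z0, hFeas0⟩
  -- maximize the τ coordinate
  obtain ⟨z1, hz1Q, hz1max⟩ := hQcomp.exists_isMaxOn hQne
    ((continuous_apply (τc n)).continuousOn)
  set T : ℝ := z1 (τc n) with hT
  have hTge : -ε ≤ T := by
    have hz0mem : z0 ∈ QC := hFeas0
    have h2 := hz1max hz0mem
    simp only [Set.mem_setOf_eq] at h2
    rw [hz0τ] at h2
    exact h2
  -- the F-system: add the two rows fixing the τ coordinate to T
  set wF : (RT n ⊕ Bool) → Fin (n + 2) → ℝ :=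
    Sum.elim w (fun s c => if c = τc n then (if s then (1 : ℝ) else -1) else 0) with hwF
  set bF : (RT n ⊕ Bool) → ℝ := Sum.elim bb (fun s => if s then T else -T) with hbF
  have hwFt : ∀ z : Fin (n + 2) → ℝ,
      ∑ c, wF (Sum.inr true) c * z c = z (τc n) := by
    intro z
    simp only [hwF, Sum.elim_inr, if_true]
    rw [sum_ind]; ring
  have hwFf : ∀ z : Fin (n + 2) → ℝ,
      ∑ c, wF (Sum.inr false) c * z c = -z (τc n) := by
    intro z
    simp only [hwF, Sum.elim_inr, Bool.false_eq_true, if_false]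
    rw [sum_ind]; ring
  have hFeasF1 : ∀ r, ∑ c, wF r c * z1 c ≤ bF r := by
    rintro (r | s)
    · exact hz1Q r
    · cases s
      · rw [hwFf]
        simp only [hbF, Sum.elim_inr, Bool.false_eq_true, if_false, ← hT]
        exact le_refl _
      · rw [hwFt]
        simp only [hbF, Sum.elim_inr, if_true, ← hT]
        exact le_refl _
  have hbdF : ∀ z : Fin (n + 2) → ℝ, (∀ r, ∑ c, wF r c * z c ≤ bF r) →
      ∀ c, |z c| ≤ 2 * (M : ℝ) ^ 2 := by
    intro z hzF
    exact coord_bound hM hn huble hlbnn z (fun r => hzF (Sum.inl r))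
  obtain ⟨zs, hzsF, hzsTight, hzsSpan⟩ :=
    exists_tight_span wF bF (2 * (M : ℝ) ^ 2) hbdF z1 hFeasF1
  have hzsQ : Feas zs := fun r => hzsF (Sum.inl r)
  have hzsτ : zs (τc n) = T := by
    have h1 := hzsF (Sum.inr true)
    have h2 := hzsF (Sum.inr false)
    rw [hwFt] at h1
    rw [hwFf] at h2
    simp only [hbF, Sum.elim_inr, if_true, Bool.false_eq_true, if_false] at h1 h2
    linarith
  -- the R-tight rows at zs span everything
  set S0 : Set (RT n) := {r | ∑ c, w r c * zs c = bb r} with hS0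
  have hspan0 : Submodule.span ℝ (w '' S0) = ⊤ := by
    by_contra hne
    obtain ⟨d, hd0, hdperp⟩ := perp_of_span_ne_top _ hne
    by_cases hdτ : d (τc n) = 0
    · have hperpF : ∀ v ∈ wF '' {r | ∑ c, wF r c * zs c = bF r}, ∑ c, v c * d c = 0 := by
        rintro v ⟨r, hrT, rfl⟩
        simp only [Set.mem_setOf_eq] at hrT
        match r with
        | Sum.inl r' =>
          refine hdperp _ ⟨r', ?_, rfl⟩
          simpa only [hwF, Sum.elim_inl, hbF, hS0, Set.mem_setOf_eq] using hrT
        | Sum.inr true =>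
          have := hwFt d
          rw [this, hdτ]
        | Sum.inr false =>
          have := hwFf d
          rw [this, hdτ, neg_zero]
      have hker : Submodule.span ℝ (wF '' {r | ∑ c, wF r c * zs c = bF r})
          ≤ LinearMap.ker (dotL d) := by
        rw [Submodule.span_le]
        intro v hv
        rw [SetLike.mem_coe, LinearMap.mem_ker]
        exact hperpF v hv
      rw [hzsSpan, top_le_iff] at hker
      have hdd : dotL d d = 0 := by
        have : d ∈ LinearMap.ker (dotL d) := by rw [hker]; trivial
        exact LinearMap.mem_ker.1 this
      exact hd0 (eq_zero_of_dot_self d hdd)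
    · -- move in the direction of ±d to increase τ beyond T: contradiction
      set d' : Fin (n + 2) → ℝ := if 0 < d (τc n) then d else -d with hd'
      have hd'τ : 0 < d' (τc n) := by
        rcases lt_trichotomy 0 (d (τc n)) with h | h | h
        · rw [hd', if_pos h]; exact h
        · exact absurd h.symm hdτ
        · rw [hd', if_neg (by linarith)]
          simp only [Pi.neg_apply]
          linarith
      have hd'perp : ∀ r, (∑ c, w r c * zs c = bb r) → ∑ c, w r c * d' c ≤ 0 := by
        intro r hr
        have h1 : ∑ c, w r c * d c = 0 := hdperp _ ⟨r, hr, rfl⟩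
        rcases lt_or_ge 0 (d (τc n)) with h | h
        · rw [hd', if_pos h]; rw [h1]
        · rw [hd', if_neg (by linarith)]
          have : ∑ c, w r c * (-d) c = -∑ c, w r c * d c := by
            rw [← Finset.sum_neg_distrib]
            exact Finset.sum_congr rfl fun c _ => by simp
          rw [this, h1, neg_zero]
      obtain ⟨δ, hδpos, hδfeas⟩ := exists_feasible_move w bb zs d' hzsQ hd'perp
      have hmem : (fun c => zs c + δ * d' c) ∈ QC := hδfeas
      have hle := hz1max hmem
      simp only [Set.mem_setOf_eq] at hle
      have : zs (τc n) + δ * d' (τc n) ≤ T := hle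
      rw [hzsτ] at this
      nlinarith
  -- distinguished indicator vectors
  set e0v : Fin (n + 2) → ℝ := fun c => if c = ccf n 0 then (1 : ℝ) else 0 with he0v
  set elv : Fin (n + 2) → ℝ := fun c => if c = ccf n (Fin.last n) then (1 : ℝ) else 0 with helv
  have hcc0l : ccf n (0 : Fin (n + 1)) ≠ ccf n (Fin.last n) := by
    intro h
    have h2 := ccf_inj h
    have h3 : (0 : Fin (n + 1)).val = (Fin.last n).val := by rw [h2]
    simp [Fin.last] at h3
    omega
  have hzs0 : zs (ccf n 0) = 0 := by
    have h1 := hzsQ (Sum.inl (0, true))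
    have h2 := hzsQ (Sum.inl (0, false))
    rw [evalBoxT] at h1
    rw [evalBoxF] at h2
    simp only [hbb, bR, bZ, hub0, hlb0] at h1 h2
    push_cast at h1 h2
    linarith
  have hzsl : zs (ccf n (Fin.last n)) = (M : ℝ) := by
    have h1 := hzsQ (Sum.inl (Fin.last n, true))
    have h2 := hzsQ (Sum.inl (Fin.last n, false))
    rw [evalBoxT] at h1
    rw [evalBoxF] at h2
    simp only [hbb, bR, bZ, hubl, hlbl] at h1 h2
    push_cast at h1 h2
    linarith
  have hwe0 : w (Sum.inl ((0 : Fin (n + 1)), true)) = e0v := by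
    funext c
    simp only [hw, wR, wZ, he0v]
    split <;> simp
  have hwel : w (Sum.inl (Fin.last n, true)) = elv := by
    funext c
    simp only [hw, wR, wZ, helv]
    split <;> simp
  have he0S : e0v ∈ w '' S0 := by
    refine ⟨Sum.inl (0, true), ?_, hwe0⟩
    simp only [hS0, Set.mem_setOf_eq]
    show ∑ c, w (Sum.inl ((0 : Fin (n + 1)), true)) c * zs c = bb (Sum.inl ((0 : Fin (n + 1)), true))
    rw [evalBoxT, hzs0]
    simp only [hbb, bR, bZ, hub0]
    norm_num
  have helS : elv ∈ w '' S0 := by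
    refine ⟨Sum.inl (Fin.last n, true), ?_, hwel⟩
    simp only [hS0, Set.mem_setOf_eq]
    show ∑ c, w (Sum.inl (Fin.last n, true)) c * zs c = bb (Sum.inl (Fin.last n, true))
    rw [evalBoxT, hzsl]
    simp only [hbb, bR, bZ, hubl]
    norm_num
  have he0ne : e0v ≠ elv := by
    intro h
    have := congrFun h (ccf n 0)
    simp only [he0v, helv, if_pos rfl, if_neg hcc0l] at this
    norm_num at this
  have hs2sub : ({e0v, elv} : Set (Fin (n + 2) → ℝ)) ⊆ w '' S0 := by
    intro v hv
    rcases hv with h | h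
    · rw [h]; exact he0S
    · rw [h]; exact helS
  have hs2ind : LinearIndependent ℝ (fun x : ({e0v, elv} : Set (Fin (n + 2) → ℝ)) =>
      (x : Fin (n + 2) → ℝ)) := by
    have hnm : e0v ∉ ({elv} : Set (Fin (n + 2) → ℝ)) := by
      simp only [Set.mem_singleton_iff]; exact he0ne
    rw [show ({e0v, elv} : Set (Fin (n + 2) → ℝ)) = insert e0v {elv} from rfl]
    refine (linearIndepOn_id_insert hnm).2 ?_
    refine ⟨(linearIndepOn_singleton_iff (R := ℝ) (v := fun x => x)).2 ?_, ?_⟩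
    · intro h
      have := congrFun h (ccf n (Fin.last n))
      simp only [helv, if_pos rfl, Pi.zero_apply] at this
      norm_num at this
    · intro hmem
      rw [Submodule.mem_span_singleton] at hmem
      obtain ⟨a, ha⟩ := hmem
      have := congrFun ha (ccf n 0)
      simp only [Pi.smul_apply, he0v, helv, smul_eq_mul, if_pos rfl,
        if_neg hcc0l, mul_zero] at this
      exact absurd this zero_ne_one
  -- extend to a basis inside the tight rows
  have hs2ind' : LinearIndepOn ℝ id ({e0v, elv} : Set (Fin (n + 2) → ℝ)) := hs2ind
  set bset : Set (Fin (n + 2) → ℝ) := hs2ind'.extend hs2sub with hbset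
  have hbsub : bset ⊆ w '' S0 := hs2ind'.extend_subset hs2sub
  have hs2b : ({e0v, elv} : Set (Fin (n + 2) → ℝ)) ⊆ bset := hs2ind'.subset_extend hs2sub
  have hbind : LinearIndependent ℝ (fun x : bset => (x : Fin (n + 2) → ℝ)) :=
    hs2ind'.linearIndepOn_extend hs2sub
  have hbspan : Submodule.span ℝ bset = ⊤ := by
    apply le_antisymm le_top
    rw [← hspan0, Submodule.span_le]
    exact hs2ind'.subset_span_extend hs2sub
  have hbfin : bset.Finite := hbind.setFinite
  haveI : Fintype bset := hbfin.fintype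
  have hcard : Fintype.card bset = n + 2 := by
    have hb : Module.Basis bset ℝ (Fin (n + 2) → ℝ) := Module.Basis.mk hbind (by
      rw [Subtype.range_coe]
      exact hbspan.ge)
    have h1 := Module.finrank_eq_card_basis hb
    rw [Module.finrank_pi ℝ] at h1
    simp only [Fintype.card_fin] at h1
    omega
  set eqv : bset ≃ Fin (n + 2) := Fintype.equivFinOfCardEq hcard with heqv
  have hsel : ∀ v : bset, ∃ r : RT n, r ∈ S0 ∧ w r = (v : Fin (n + 2) → ℝ) := by
    intro v
    obtain ⟨r, hr, hrw⟩ := hbsub v.2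
    exact ⟨r, hr, hrw⟩
  choose rsel hrsel1 hrsel2 using hsel
  -- the matrices
  set AR : Matrix (Fin (n + 2)) (Fin (n + 2)) ℝ :=
    fun q c => w (rsel (eqv.symm q)) c with hAR
  set Az : Matrix (Fin (n + 2)) (Fin (n + 2)) ℤ :=
    fun q c => wZ n szc π (rsel (eqv.symm q)) c with hAz
  set bv : Fin (n + 2) → ℝ := fun q => bb (rsel (eqv.symm q)) with hbv
  set bvZ : Fin (n + 2) → ℤ := fun q => bZ n M cz lb ub π (rsel (eqv.symm q)) with hbvZ
  have hmap : (Int.castRingHom ℝ).mapMatrix Az = AR := by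
    ext q c
    simp only [RingHom.mapMatrix_apply, Matrix.map_apply, hAz, hAR, hw, wR]
    norm_num
    rfl
  have hbvmap : ((Int.castRingHom ℝ) : ℤ → ℝ) ∘ bvZ = bv := by
    funext q
    simp only [Function.comp_apply, hbvZ, hbv, hbb, bR]
    norm_num
  have hmulvec : AR.mulVec zs = bv := by
    funext q
    simp only [Matrix.mulVec, dotProduct, hAR, hbv]
    exact hrsel1 (eqv.symm q)
  have hrows : LinearIndependent ℝ (fun q : Fin (n + 2) => AR q) := by
    have hfn : (fun q : Fin (n + 2) => AR q)
        = (fun x : bset => (x : Fin (n + 2) → ℝ)) ∘ ⇑eqv.symm := by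
      funext q
      simp only [Function.comp_apply, hAR]
      exact hrsel2 (eqv.symm q)
    rw [hfn]
    exact hbind.comp _ eqv.symm.injective
  have hdet : AR.det ≠ 0 := by
    intro hdet0
    have hdt : AR.transpose.det = 0 := by rw [Matrix.det_transpose]; exact hdet0
    obtain ⟨v, hv0, hvmul⟩ := Matrix.exists_mulVec_eq_zero_iff.2 hdt
    have hcomb : ∑ q, v q • AR q = 0 := by
      funext c
      rw [Finset.sum_apply, Pi.zero_apply]
      have h2 := congrFun hvmul c
      simp only [Matrix.mulVec, dotProduct, Matrix.transpose_apply, Pi.zero_apply] at h2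
      rw [← h2]
      exact Finset.sum_congr rfl fun q _ => by simp [mul_comm]
    have := Fintype.linearIndependent_iff.1 hrows v hcomb
    exact hv0 (funext this)
  have hdetunit : IsUnit AR.det := isUnit_iff_ne_zero.2 hdet
  have hinj : Function.Injective AR.mulVec := by
    intro x y hxy
    have h2 := congrArg (fun v => (AR⁻¹).mulVec v) hxy
    simp only [Matrix.mulVec_mulVec, Matrix.nonsing_inv_mul AR hdetunit,
      Matrix.one_mulVec] at h2
    exact h2
  have hcr : AR.det • zs = AR.cramer bv := by
    apply hinj
    rw [Matrix.mulVec_cramer, Matrix.mulVec_smul, hmulvec]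
  have hTP : AR.det * T = (AR.updateCol (τc n) bv).det := by
    have h1 := congrFun hcr (τc n)
    simp only [Pi.smul_apply, smul_eq_mul] at h1
    rw [hzsτ] at h1
    rw [h1, Matrix.cramer_apply]
  -- integrality
  have hdetZ : AR.det = ((Az.det : ℤ) : ℝ) := by
    rw [← hmap]
    rw [← RingHom.map_det]
    rfl
  have hupdmap : (Int.castRingHom ℝ).mapMatrix (Az.updateCol (τc n) bvZ)
      = AR.updateCol (τc n) bv := by
    have h1 := Matrix.map_updateCol (M := Az) (j := τc n) (c := bvZ)
      ((Int.castRingHom ℝ) : ℤ → ℝ)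
    calc (Int.castRingHom ℝ).mapMatrix (Az.updateCol (τc n) bvZ)
        = (Az.updateCol (τc n) bvZ).map ((Int.castRingHom ℝ) : ℤ → ℝ) := rfl
      _ = (Az.map ((Int.castRingHom ℝ) : ℤ → ℝ)).updateCol (τc n)
            (((Int.castRingHom ℝ) : ℤ → ℝ) ∘ bvZ) := h1
      _ = AR.updateCol (τc n) bv := by
          rw [hbvmap]
          congr 1
  have hupdZ : (AR.updateCol (τc n) bv).det
      = (((Az.updateCol (τc n) bvZ).det : ℤ) : ℝ) := by
    rw [← hupdmap, ← RingHom.map_det]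
    rfl
  have hQd0 : Az.det ≠ 0 := by
    intro h
    apply hdet
    rw [hdetZ, h]
    norm_num
  -- row-sum bounds on the determinant
  have hrowle : ∀ q, ∑ c, |AR q c| ≤ ((Kn n M : ℕ) : ℝ) := by
    intro q
    have := rowsum_le (szc := szc) (π := π) (M := M) hpiece (rsel (eqv.symm q))
    simpa only [hAR, hw] using this
  set v0 : bset := ⟨e0v, hs2b (by left; rfl)⟩ with hv0def
  set vl : bset := ⟨elv, hs2b (by right; rfl)⟩ with hvldef
  set q0 : Fin (n + 2) := eqv v0 with hq0def
  set ql : Fin (n + 2) := eqv vl with hqldef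
  have hq0ne : q0 ≠ ql := by
    intro h
    have h2 : v0 = vl := eqv.injective h
    have h3 : e0v = elv := congrArg Subtype.val h2
    exact he0ne h3
  have hARq0 : AR q0 = e0v := by
    funext c
    rw [hAR]
    simp only [hq0def, Equiv.symm_apply_apply]
    rw [hrsel2 v0]
  have hARql : AR ql = elv := by
    funext c
    rw [hAR]
    simp only [hqldef, Equiv.symm_apply_apply]
    rw [hrsel2 vl]
  have hq0sum : ∑ c, |AR q0 c| = 1 := by
    rw [hARq0]
    simp only [he0v]
    rw [sum_abs_ind]
    norm_num
  have hqlsum : ∑ c, |AR ql c| = 1 := by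
    rw [hARql]
    simp only [helv]
    rw [sum_abs_ind]
    norm_num
  have hKnnn : (0 : ℝ) ≤ ((Kn n M : ℕ) : ℝ) := by positivity
  have hdetle : |AR.det| ≤ ((Kn n M : ℕ) : ℝ) ^ n := by
    have h1 := abs_det_le_prod_sum_row AR
    have h2 : ∏ q, ∑ c, |AR q c|
        = (∏ q ∈ ({q0, ql} : Finset (Fin (n + 2))), ∑ c, |AR q c|)
          * ∏ q ∈ ({q0, ql} : Finset (Fin (n + 2)))ᶜ, ∑ c, |AR q c| :=
      (Finset.prod_mul_prod_compl _ _).symm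
    have h3 : ∏ q ∈ ({q0, ql} : Finset (Fin (n + 2))), ∑ c, |AR q c| = 1 := by
      rw [Finset.prod_pair hq0ne, hq0sum, hqlsum]
      norm_num
    have h4 : ∏ q ∈ ({q0, ql} : Finset (Fin (n + 2)))ᶜ, ∑ c, |AR q c|
        ≤ ((Kn n M : ℕ) : ℝ) ^ n := by
      have h5 : ∏ q ∈ ({q0, ql} : Finset (Fin (n + 2)))ᶜ, ∑ c, |AR q c|
          ≤ ∏ q ∈ ({q0, ql} : Finset (Fin (n + 2)))ᶜ, ((Kn n M : ℕ) : ℝ) := by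
        apply Finset.prod_le_prod
        · intro q _
          exact Finset.sum_nonneg fun c _ => abs_nonneg _
        · intro q _
          exact hrowle q
      rw [Finset.prod_const] at h5
      have h6 : (({q0, ql} : Finset (Fin (n + 2)))ᶜ).card = n := by
        rw [Finset.card_compl]
        rw [Finset.card_pair hq0ne]
        simp only [Fintype.card_fin]
        omega
      rw [h6] at h5
      exact h5
    calc |AR.det| ≤ ∏ q, ∑ c, |AR q c| := h1
      _ = 1 * ∏ q ∈ ({q0, ql} : Finset (Fin (n + 2)))ᶜ, ∑ c, |AR q c| := by rw [h2, h3]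
      _ ≤ 1 * ((Kn n M : ℕ) : ℝ) ^ n := by
          rw [one_mul, one_mul]
          exact h4
      _ = ((Kn n M : ℕ) : ℝ) ^ n := one_mul _
  have hdetge : (1 : ℝ) ≤ |AR.det| := by
    rw [hdetZ]
    have h1 : (1 : ℤ) ≤ |Az.det| := Int.one_le_abs hQd0
    have h2 : ((|Az.det| : ℤ) : ℝ) = |((Az.det : ℤ) : ℝ)| := by push_cast; ring
    have h3 : ((1 : ℤ) : ℝ) ≤ ((|Az.det| : ℤ) : ℝ) := by exact_mod_cast h1
    rw [h2] at h3
    exact_mod_cast h3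
  -- conclude T ≥ 0
  have hTnonneg : 0 ≤ T := by
    by_contra hTneg
    push_neg at hTneg
    set P : ℤ := (Az.updateCol (τc n) bvZ).det with hP
    have hPT : AR.det * T = ((P : ℤ) : ℝ) := by rw [hTP, hupdZ]
    have hPne : P ≠ 0 := by
      intro h
      rw [h] at hPT
      simp only [Int.cast_zero] at hPT
      rcases mul_eq_zero.1 hPT with h' | h'
      · exact hdet h'
      · exact absurd h' (ne_of_lt hTneg)
    have hPabs : (1 : ℝ) ≤ |((P : ℤ) : ℝ)| := by
      have h1 : (1 : ℤ) ≤ |P| := Int.one_le_abs hPne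
      have h2 : ((|P| : ℤ) : ℝ) = |((P : ℤ) : ℝ)| := by push_cast; ring
      have h3 : ((1 : ℤ) : ℝ) ≤ ((|P| : ℤ) : ℝ) := by exact_mod_cast h1
      rw [h2] at h3
      exact_mod_cast h3
    have habs : |AR.det * T| = |AR.det| * |T| := abs_mul _ _
    have hTabs : |T| ≤ ε := by
      rw [abs_of_neg hTneg]
      linarith
    have hchain : (1 : ℝ) ≤ ((Kn n M : ℕ) : ℝ) ^ n * ε := by
      have h1 : (1 : ℝ) ≤ |AR.det| * |T| := by
        rw [← habs, hPT]
        exact hPabs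
      have h2 : |AR.det| * |T| ≤ ((Kn n M : ℕ) : ℝ) ^ n * ε := by
        apply mul_le_mul hdetle hTabs (abs_nonneg _) (by positivity)
      linarith
    -- contradiction with key_numeric
    have hkey := key_numeric M n hM hn
    have hkeyR : ((M : ℝ)) ^ 2 * ((Kn n M : ℕ) : ℝ) ^ n < (M : ℝ) ^ (4 * n) := by
      have := hkey
      rw [Kn] at hchain ⊢
      exact_mod_cast this
    have hMpowpos : (0 : ℝ) < (M : ℝ) ^ (4 * n) := by positivity
    rw [hε] at hchain
    have h5 : (M : ℝ) ^ (4 * n) ≤ ((Kn n M : ℕ) : ℝ) ^ n * (M : ℝ) ^ 2 := by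
      have h6 : (1 : ℝ) ≤ ((Kn n M : ℕ) : ℝ) ^ n * ((M : ℝ) ^ 2 * ((M : ℝ) ^ (4 * n))⁻¹) :=
        hchain
      have h7 := mul_le_mul_of_nonneg_right h6 (le_of_lt hMpowpos)
      rw [one_mul] at h7
      calc (M : ℝ) ^ (4 * n) ≤ ((Kn n M : ℕ) : ℝ) ^ n * ((M : ℝ) ^ 2 * ((M : ℝ) ^ (4 * n))⁻¹)
            * (M : ℝ) ^ (4 * n) := h7
        _ = ((Kn n M : ℕ) : ℝ) ^ n * (M : ℝ) ^ 2
            * (((M : ℝ) ^ (4 * n))⁻¹ * (M : ℝ) ^ (4 * n)) := by ring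
        _ = ((Kn n M : ℕ) : ℝ) ^ n * (M : ℝ) ^ 2 := by
            rw [inv_mul_cancel₀ (ne_of_gt hMpowpos), mul_one]
    nlinarith [hkeyR]
  -- construct the final cut vector
  refine ⟨fun k => zs (ccf n k), ?_, ?_, ?_⟩
  · rw [Fin.monotone_iff_le_succ]
    intro k
    have h1 := hzsQ (Sum.inr (Sum.inl k))
    rw [evalOrd] at h1
    simp only [hbb, bR, bZ] at h1
    push_cast at h1
    linarith
  · intro k
    have h1 := hzsQ (Sum.inl (k, true))
    have h2 := hzsQ (Sum.inl (k, false))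
    rw [evalBoxT] at h1
    rw [evalBoxF] at h2
    simp only [hbb, bR, bZ] at h1 h2
    push_cast at h1 h2
    constructor <;> linarith
  · intro i j
    have h1 := hzsQ (Sum.inr (Sum.inr (Sum.inl (i, j))))
    rw [evalD] at h1
    rw [hzsτ] at h1
    simp only [hbb, bR, bZ] at h1
    simp only [Av]
    push_cast at h1 ⊢
    linarith
end M3
open Finset MeasureTheory

lemma partB (M : ℕ) (hM : 1 ≤ M) (F : ℝ → ℝ)
    (p : ℕ) (c : Fin (p + 1) → ℚ) (h : Fin p → ℚ)
    (hmono : Monotone c) (hc0 : c 0 = 0) (hc1 : c (Fin.last p) = 1)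
    (hh0 : ∀ j, 0 ≤ h j)
    (hstep : ∀ (j : Fin p) (x : ℝ),
      ((c j.castSucc : ℚ) : ℝ) < x → x < ((c j.succ : ℚ) : ℝ) → F x = ((h j : ℚ) : ℝ))
    (hcz : ∀ j, ∃ z : ℤ, (c j : ℚ) = (z : ℚ) / (M : ℚ))
    (hhz : ∀ j, ∃ z : ℤ, (h j : ℚ) = (z : ℚ) / (M : ℚ)) :
    (∀ a b : ℝ, a ∈ Set.Icc (0 : ℝ) 1 → b ∈ Set.Icc (0 : ℝ) 1 →
      IntervalIntegrable F volume a b) ∧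
    (∀ m : ℕ, m < M → ∃ zz : ℕ, ∀ x : ℝ,
      (m : ℝ) / (M : ℝ) ≤ x → x ≤ ((m : ℝ) + 1) / (M : ℝ) →
      (∫ t in (0 : ℝ)..x, F t) =
        (∫ t in (0 : ℝ)..((m : ℝ) / (M : ℝ)), F t) + ((zz : ℝ) / (M : ℝ)) * (x - (m : ℝ) / (M : ℝ))) := by
  classical
  have hMQ : (0 : ℚ) < (M : ℚ) := by exact_mod_cast hM
  have hMR : (0 : ℝ) < (M : ℝ) := by exact_mod_cast hM
  -- the breakpoint set is finite, hence null
  set B : Set ℝ := Set.range (fun j : Fin (p + 1) => ((c j : ℚ) : ℝ)) with hB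
  have hBnull : volume B = 0 := (Set.finite_range _).measure_zero _
  -- the step function
  set G : ℝ → ℝ := fun x => ∑ j : Fin p,
    Set.indicator (Set.Ioo ((c j.castSucc : ℚ) : ℝ) ((c j.succ : ℚ) : ℝ))
      (fun _ => ((h j : ℚ) : ℝ)) x with hG
  have hGint : IntegrableOn G (Set.Ioc (0 : ℝ) 1) volume := by
    apply integrable_finset_sum
    intro j _
    apply Integrable.indicator
    · exact integrableOn_const measure_Ioc_lt_top.ne
    · exact measurableSet_Ioo
  -- find the piece containing a non-breakpoint x
  have hfind : ∀ x : ℝ, 0 < x → x ≤ 1 → x ∉ B → ∃ jp : Fin p,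
      ((c jp.castSucc : ℚ) : ℝ) < x ∧ x < ((c jp.succ : ℚ) : ℝ) := by
    intro x hx0 hx1 hxB
    set S : Finset (Fin (p + 1)) := Finset.univ.filter (fun j => ((c j : ℚ) : ℝ) ≤ x) with hS
    have hS0 : (0 : Fin (p + 1)) ∈ S := by
      simp only [hS, Finset.mem_filter, Finset.mem_univ, true_and, hc0]
      push_cast
      linarith
    have hSne : S.Nonempty := ⟨0, hS0⟩
    set jm : Fin (p + 1) := S.max' hSne with hjm
    have hjmS : jm ∈ S := S.max'_mem hSne
    have hjmle : ((c jm : ℚ) : ℝ) ≤ x := by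
      simp only [hS, Finset.mem_filter] at hjmS
      exact hjmS.2
    have hjmlt : ((c jm : ℚ) : ℝ) < x := by
      rcases lt_or_eq_of_le hjmle with h' | h'
      · exact h'
      · exact absurd ⟨jm, h'⟩ hxB
    have hjmne : jm ≠ Fin.last p := by
      intro he
      rw [he, hc1] at hjmlt
      norm_num at hjmlt
      linarith
    have hjmval : jm.val < p := by
      have := jm.isLt
      have : jm.val ≠ p := fun hv => hjmne (Fin.ext hv)
      omega
    refine ⟨⟨jm.val, hjmval⟩, ?_, ?_⟩
    · have : Fin.castSucc ⟨jm.val, hjmval⟩ = jm := Fin.ext rfl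
      rw [this]
      exact hjmlt
    · by_contra hle
      push_neg at hle
      have hmem : Fin.succ ⟨jm.val, hjmval⟩ ∈ S := by
        simp only [hS, Finset.mem_filter, Finset.mem_univ, true_and]
        exact hle
      have := S.le_max' _ hmem
      rw [← hjm] at this
      have hv : jm.val + 1 ≤ jm.val := this
      omega
  -- uniqueness of the piece
  have huniq : ∀ (x : ℝ) (j j' : Fin p),
      ((c j.castSucc : ℚ) : ℝ) < x → x < ((c j.succ : ℚ) : ℝ) →
      ((c j'.castSucc : ℚ) : ℝ) < x → x < ((c j'.succ : ℚ) : ℝ) → j = j' := by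
    intro x j j' h1 h2 h1' h2'
    by_contra hne
    rcases Nat.lt_or_ge j.val j'.val with hlt | hge
    · have hle : j.succ ≤ j'.castSucc := by
        simp only [Fin.le_def, Fin.val_succ, Fin.coe_castSucc]
        omega
      have := hmono hle
      have hc : ((c j.succ : ℚ) : ℝ) ≤ ((c j'.castSucc : ℚ) : ℝ) := by exact_mod_cast this
      linarith
    · have hne' : j.val ≠ j'.val := fun hv => hne (Fin.ext hv)
      have hlt : j'.val < j.val := by omega
      have hle : j'.succ ≤ j.castSucc := by
        simp only [Fin.le_def, Fin.val_succ, Fin.coe_castSucc]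
        omega
      have := hmono hle
      have hc : ((c j'.succ : ℚ) : ℝ) ≤ ((c j.castSucc : ℚ) : ℝ) := by exact_mod_cast this
      linarith
  -- F agrees a.e. with G on (0,1]
  have hFG : F =ᵐ[volume.restrict (Set.Ioc (0 : ℝ) 1)] G := by
    rw [Filter.eventuallyEq_iff_exists_mem]
    refine ⟨{x | x ∉ B} ∩ Set.Ioc (0 : ℝ) 1, ?_, ?_⟩
    · rw [mem_ae_iff]
      have hcompl : ({x | x ∉ B} ∩ Set.Ioc (0 : ℝ) 1)ᶜ = B ∪ (Set.Ioc (0 : ℝ) 1)ᶜ := by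
        rw [Set.compl_inter]
        congr 1
        ext x
        simp
      rw [hcompl]
      have h1 : volume.restrict (Set.Ioc (0 : ℝ) 1) (B ∪ (Set.Ioc (0 : ℝ) 1)ᶜ)
          ≤ volume.restrict (Set.Ioc (0 : ℝ) 1) B
            + volume.restrict (Set.Ioc (0 : ℝ) 1) (Set.Ioc (0 : ℝ) 1)ᶜ :=
        measure_union_le _ _
      have h2 : volume.restrict (Set.Ioc (0 : ℝ) 1) B ≤ volume B :=
        Measure.restrict_le_self _
      have h3 : volume.restrict (Set.Ioc (0 : ℝ) 1) (Set.Ioc (0 : ℝ) 1)ᶜ = 0 := by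
        rw [Measure.restrict_apply' measurableSet_Ioc, Set.compl_inter_self]
        exact measure_empty
      rw [hBnull] at h2
      rw [h3] at h1
      have h4 := le_trans h1 (by rw [le_antisymm h2 zero_le, add_zero] : volume.restrict (Set.Ioc (0 : ℝ) 1) B + 0 ≤ 0)
      exact le_antisymm h4 zero_le
    · intro x hx
      obtain ⟨hxB, hx01⟩ := hx
      simp only [Set.mem_setOf_eq] at hxB
      obtain ⟨jp, hj1, hj2⟩ := hfind x hx01.1 hx01.2 hxB
      have hFx : F x = ((h jp : ℚ) : ℝ) := hstep jp x hj1 hj2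
      have hGx : G x = ((h jp : ℚ) : ℝ) := by
        simp only [hG]
        rw [Finset.sum_eq_single jp]
        · rw [Set.indicator_of_mem (Set.mem_Ioo.2 ⟨hj1, hj2⟩)]
        · intro j _ hjne
          apply Set.indicator_of_notMem
          intro hmem
          exact hjne (huniq x j jp hmem.1 hmem.2 hj1 hj2)
        · intro habs
          exact absurd (Finset.mem_univ jp) habs
      rw [hFx, hGx]
  have hFint : IntegrableOn F (Set.Ioc (0 : ℝ) 1) volume := hGint.congr hFG.symm
  have hpart1 : ∀ a b : ℝ, a ∈ Set.Icc (0 : ℝ) 1 → b ∈ Set.Icc (0 : ℝ) 1 →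
      IntervalIntegrable F volume a b := by
    intro a b ha hb
    rw [intervalIntegrable_iff]
    apply hFint.mono_set
    rw [Set.uIoc]
    apply Set.Ioc_subset_Ioc
    · exact le_min ha.1 hb.1
    · exact max_le ha.2 hb.2
  refine ⟨hpart1, ?_⟩
  intro m hm
  -- find the piece containing the grid cell [m/M, (m+1)/M]
  set S : Finset (Fin (p + 1)) := Finset.univ.filter (fun j => c j ≤ (m : ℚ) / (M : ℚ)) with hS
  have hS0 : (0 : Fin (p + 1)) ∈ S := by
    simp only [hS, Finset.mem_filter, Finset.mem_univ, true_and, hc0]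
    positivity
  have hSne : S.Nonempty := ⟨0, hS0⟩
  set jm : Fin (p + 1) := S.max' hSne with hjm
  have hjmS : jm ∈ S := S.max'_mem hSne
  have hjmle : c jm ≤ (m : ℚ) / (M : ℚ) := by
    simp only [hS, Finset.mem_filter] at hjmS
    exact hjmS.2
  have hmMlt : (m : ℚ) / (M : ℚ) < 1 := by
    rw [div_lt_one hMQ]
    exact_mod_cast hm
  have hjmne : jm ≠ Fin.last p := by
    intro he
    rw [he, hc1] at hjmle
    linarith
  have hjmval : jm.val < p := by
    have h1 := jm.isLt
    have h2 : jm.val ≠ p := fun hv => hjmne (Fin.ext hv)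
    omega
  set jp : Fin p := ⟨jm.val, hjmval⟩ with hjp
  have hcastjm : jp.castSucc = jm := Fin.ext rfl
  have hsucc_not : jp.succ ∉ S := by
    intro hmem
    have h1 := S.le_max' _ hmem
    rw [← hjm] at h1
    have h2 : jm.val + 1 ≤ jm.val := h1
    omega
  have hsuccgt : (m : ℚ) / (M : ℚ) < c jp.succ := by
    by_contra hle
    push_neg at hle
    exact hsucc_not (by simp only [hS, Finset.mem_filter, Finset.mem_univ, true_and]; exact hle)
  have hsuccge : ((m : ℚ) + 1) / (M : ℚ) ≤ c jp.succ := by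
    obtain ⟨z, hz⟩ := hcz jp.succ
    rw [hz] at hsuccgt ⊢
    rw [div_lt_div_iff_of_pos_right hMQ] at hsuccgt
    rw [div_le_div_iff_of_pos_right hMQ]
    have h1 : (m : ℤ) < z := by exact_mod_cast hsuccgt
    have h2 : (m : ℤ) + 1 ≤ z := h1
    exact_mod_cast h2
  -- the slope
  obtain ⟨zh, hzh⟩ := hhz jp
  have hzh0 : 0 ≤ zh := by
    have h1 := hh0 jp
    rw [hzh] at h1
    by_contra hneg
    push_neg at hneg
    have h2 : (zh : ℚ) < 0 := by exact_mod_cast hneg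
    have h3 : (zh : ℚ) / (M : ℚ) < 0 := div_neg_of_neg_of_pos h2 hMQ
    linarith
  refine ⟨zh.toNat, ?_⟩
  intro x hx1 hx2
  have hm1M : ((m : ℝ) + 1) / (M : ℝ) ≤ 1 := by
    rw [div_le_one hMR]
    have : (m : ℝ) + 1 ≤ (M : ℝ) := by exact_mod_cast hm
    linarith
  have hmM0 : (0 : ℝ) ≤ (m : ℝ) / (M : ℝ) := by positivity
  have hxIcc : x ∈ Set.Icc (0 : ℝ) 1 := ⟨le_trans hmM0 hx1, le_trans hx2 hm1M⟩
  have hmIcc : (m : ℝ) / (M : ℝ) ∈ Set.Icc (0 : ℝ) 1 := by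
    refine ⟨hmM0, ?_⟩
    rw [div_le_one hMR]
    have h1 : (m : ℝ) ≤ (M : ℝ) := by exact_mod_cast le_of_lt hm
    linarith
  -- the interval integral of F over [m/M, x] is that of the constant h jp
  have hcastR : ((c jp.castSucc : ℚ) : ℝ) ≤ (m : ℝ) / (M : ℝ) := by
    rw [hcastjm]
    have h1 : ((c jm : ℚ) : ℝ) ≤ (((m : ℚ) / (M : ℚ) : ℚ) : ℝ) := by exact_mod_cast hjmle
    rw [Rat.cast_div] at h1
    push_cast at h1
    exact h1
  have hsuccR : ((m : ℝ) + 1) / (M : ℝ) ≤ ((c jp.succ : ℚ) : ℝ) := by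
    have h1 : ((((m : ℚ) + 1) / (M : ℚ) : ℚ) : ℝ) ≤ ((c jp.succ : ℚ) : ℝ) := by
      exact_mod_cast hsuccge
    rw [Rat.cast_div] at h1
    push_cast at h1
    exact h1
  have hconst : (∫ t in ((m : ℝ) / (M : ℝ))..x, F t)
      = ((h jp : ℚ) : ℝ) * (x - (m : ℝ) / (M : ℝ)) := by
    have hae : ∀ᵐ t ∂volume, t ∈ Set.uIoc ((m : ℝ) / (M : ℝ)) x → F t = ((h jp : ℚ) : ℝ) := by
      have hnull : volume {((c jp.succ : ℚ) : ℝ)} = 0 := measure_singleton _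
      rw [ae_iff]
      apply measure_mono_null _ hnull
      intro t ht
      simp only [Set.mem_setOf_eq, not_forall] at ht
      obtain ⟨htI, htne⟩ := ht
      rw [Set.uIoc_of_le hx1] at htI
      by_contra htc
      simp only [Set.mem_singleton_iff] at htc
      have h1 : ((c jp.castSucc : ℚ) : ℝ) < t := lt_of_le_of_lt hcastR htI.1
      have h2 : t < ((c jp.succ : ℚ) : ℝ) := by
        rcases lt_or_eq_of_le (le_trans htI.2 (le_trans hx2 hsuccR)) with h' | h'
        · exact h'
        · exact absurd h' htc
      exact htne (hstep jp t h1 h2)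
    rw [intervalIntegral.integral_congr_ae hae]
    rw [intervalIntegral.integral_const]
    rw [smul_eq_mul]
    ring
  have hsub : (∫ t in (0 : ℝ)..x, F t) - (∫ t in (0 : ℝ)..((m : ℝ) / (M : ℝ)), F t)
      = ∫ t in ((m : ℝ) / (M : ℝ))..x, F t :=
    intervalIntegral.integral_interval_sub_left (hpart1 0 x ⟨le_refl 0, zero_le_one⟩ hxIcc)
      (hpart1 0 _ ⟨le_refl 0, zero_le_one⟩ hmIcc)
  have hzzh : ((zh.toNat : ℕ) : ℝ) = ((zh : ℤ) : ℝ) := by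
    exact_mod_cast congrArg (fun z : ℤ => ((z : ℤ) : ℝ)) (Int.toNat_of_nonneg hzh0)
  have hhR : ((h jp : ℚ) : ℝ) = ((zh.toNat : ℕ) : ℝ) / (M : ℝ) := by
    rw [hzzh]
    rw [hzh]
    push_cast
    ring
  rw [hhR] at hconst
  linarith [hconst, hsub]
section Main
open Finset MeasureTheory

set_option maxHeartbeats 2000000 in
/-- Let `M ≥ 3` and let `v 1, …, v n` be normalized piecewise constant
valuations on `[0,1]` such that every breakpoint and every step value of every density is
an integer multiple of `1/M`. If there exists a contiguous `M^(-4n)`-envy-free allocation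
with permutation `π`, then there exists a contiguous exactly envy-free allocation with the
same permutation `π`. -/
theorem envy_free_from_approx_envy_free_multiples_of_one_over_M
    (n M : ℕ) (hM : 3 ≤ M) (hn : 0 < n)
    (f : Fin n → ℝ → ℝ)
    (hnn : ∀ i x, 0 ≤ f i x)
    (hpc : ∀ i : Fin n, ∃ (p : ℕ) (c : Fin (p + 1) → ℚ) (h : Fin p → ℚ),
      Monotone c ∧ c 0 = 0 ∧ c (Fin.last p) = 1 ∧ (∀ j, 0 ≤ h j) ∧
      (∀ (j : Fin p) (x : ℝ),
        (c j.castSucc : ℝ) < x → x < (c j.succ : ℝ) → f i x = (h j : ℝ)) ∧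
      (∀ j, ∃ z : ℤ, (c j : ℚ) = (z : ℚ) / (M : ℚ)) ∧
      (∀ j, ∃ z : ℤ, (h j : ℚ) = (z : ℚ) / (M : ℚ)))
    (hnorm : ∀ i, (∫ x in (0 : ℝ)..1, f i x) = 1)
    (y : Fin (n + 1) → ℝ) (π : Equiv.Perm (Fin n))
    (hy : Monotone y) (hy0 : y 0 = 0) (hy1 : y (Fin.last n) = 1)
    (hEF : ∀ i j : Fin n,
      (∫ x in (y (π i).castSucc)..(y (π i).succ), f i x) ≥
        (∫ x in (y (π j).castSucc)..(y (π j).succ), f i x) - ((M : ℝ) ^ (4 * n))⁻¹) :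
    ∃ y' : Fin (n + 1) → ℝ,
      Monotone y' ∧ y' 0 = 0 ∧ y' (Fin.last n) = 1 ∧
      (∀ i j : Fin n,
        (∫ x in (y' (π i).castSucc)..(y' (π i).succ), f i x) ≥
          (∫ x in (y' (π j).castSucc)..(y' (π j).succ), f i x)) := by
  classical
  have hM1 : 1 ≤ M := by omega
  have hMR : (0 : ℝ) < (M : ℝ) := by positivity
  have hMR3 : (3 : ℝ) ≤ (M : ℝ) := by exact_mod_cast hM
  have hMne : (M : ℝ) ≠ 0 := ne_of_gt hMR
  -- Part B data for each agent
  have hB : ∀ i : Fin n,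
      (∀ a b : ℝ, a ∈ Set.Icc (0 : ℝ) 1 → b ∈ Set.Icc (0 : ℝ) 1 →
        IntervalIntegrable (f i) volume a b) ∧
      (∀ m : ℕ, m < M → ∃ zz : ℕ, ∀ x : ℝ,
        (m : ℝ) / (M : ℝ) ≤ x → x ≤ ((m : ℝ) + 1) / (M : ℝ) →
        (∫ t in (0 : ℝ)..x, f i t) =
          (∫ t in (0 : ℝ)..((m : ℝ) / (M : ℝ)), f i t)
            + ((zz : ℝ) / (M : ℝ)) * (x - (m : ℝ) / (M : ℝ))) := by
    intro i
    obtain ⟨p, c, h, h1, h2, h3, h4, h5, h6, h7⟩ := hpc i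
    exact partB M hM1 (f i) p c h h1 h2 h3 h4 h5 h6 h7
  have hInt := fun i => (hB i).1
  have hCell : ∀ (i : Fin n) (m : Fin M), ∃ zz : ℕ, ∀ x : ℝ,
      ((m : ℕ) : ℝ) / (M : ℝ) ≤ x → x ≤ (((m : ℕ) : ℝ) + 1) / (M : ℝ) →
      (∫ t in (0 : ℝ)..x, f i t) =
        (∫ t in (0 : ℝ)..(((m : ℕ) : ℝ) / (M : ℝ)), f i t)
          + ((zz : ℝ) / (M : ℝ)) * (x - ((m : ℕ) : ℝ) / (M : ℝ)) :=
    fun i m => (hB i).2 m m.isLt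
  choose szn hszn using hCell
  set szn' : Fin n → ℕ → ℕ := fun i m => if h : m < M then szn i ⟨m, h⟩ else 0 with hszn'def
  have hszn' : ∀ (i : Fin n) (m : ℕ), m < M → ∀ x : ℝ,
      (m : ℝ) / (M : ℝ) ≤ x → x ≤ ((m : ℝ) + 1) / (M : ℝ) →
      (∫ t in (0 : ℝ)..x, f i t) =
        (∫ t in (0 : ℝ)..((m : ℝ) / (M : ℝ)), f i t)
          + ((szn' i m : ℝ) / (M : ℝ)) * (x - (m : ℝ) / (M : ℝ)) := by
    intro i m hm x h1 h2
    have := hszn i ⟨m, hm⟩ x h1 h2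
    simp only [hszn'def, dif_pos hm]
    exact this
  -- V values at grid points
  set Vz : Fin n → ℕ → ℕ := fun i m => ∑ m' ∈ Finset.range m, szn' i m' with hVzdef
  have hVgrid : ∀ (i : Fin n) (m : ℕ), m ≤ M →
      (∫ t in (0 : ℝ)..((m : ℝ) / (M : ℝ)), f i t) = ((Vz i m : ℕ) : ℝ) / (M : ℝ) ^ 2 := by
    intro i m
    induction m with
    | zero =>
      intro _
      simp only [Nat.cast_zero, zero_div, intervalIntegral.integral_same, hVzdef,
        Finset.range_zero, Finset.sum_empty]
    | succ m IH =>
      intro hm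
      have hmM : m < M := by omega
      have h1 := hszn' i m hmM (((m : ℝ) + 1) / (M : ℝ))
        (by gcongr <;> linarith)
        (le_refl _)
      have h2 := IH (by omega)
      have hcast : (((m + 1 : ℕ) : ℝ)) = (m : ℝ) + 1 := by push_cast; ring
      rw [hcast, h1, h2]
      have h3 : (Vz i (m + 1) : ℝ) = (Vz i m : ℝ) + (szn' i m : ℝ) := by
        simp only [hVzdef, Finset.sum_range_succ]
        push_cast
        ring
      rw [h3]
      field_simp
      ring
  have hVzM : ∀ i, (Vz i M : ℝ) = (M : ℝ) ^ 2 := by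
    intro i
    have h1 := hVgrid i M (le_refl M)
    have h2 : ((M : ℕ) : ℝ) / (M : ℝ) = 1 := div_self hMne
    rw [h2, hnorm i] at h1
    field_simp at h1
    linarith
  have hsznle : ∀ (i : Fin n) (m : ℕ), m < M → szn' i m ≤ M ^ 2 := by
    intro i m hm
    have h1 : szn' i m ≤ Vz i M := by
      apply Finset.single_le_sum (f := fun m' => szn' i m')
      · intro k _; exact Nat.zero_le _
      · exact Finset.mem_range.2 hm
    have h2 : (Vz i M : ℕ) = M ^ 2 := by
      have := hVzM i
      exact_mod_cast this
    omega
  -- the grid cells of the given cuts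
  have hy01 : ∀ k, 0 ≤ y k ∧ y k ≤ 1 := by
    intro k
    constructor
    · rw [← hy0]; exact hy (Fin.zero_le k)
    · rw [← hy1]; exact hy (Fin.le_last k)
  set g : Fin (n + 1) → ℕ := fun k => min (M - 1) ⌊(M : ℝ) * y k⌋₊ with hgdef
  have hgM : ∀ k, g k < M := by
    intro k
    have : g k ≤ M - 1 := min_le_left _ _
    omega
  have hglow : ∀ k, (g k : ℝ) ≤ (M : ℝ) * y k := by
    intro k
    have h1 : (g k : ℕ) ≤ ⌊(M : ℝ) * y k⌋₊ := min_le_right _ _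
    have h2 : (⌊(M : ℝ) * y k⌋₊ : ℝ) ≤ (M : ℝ) * y k :=
      Nat.floor_le (by have := (hy01 k).1; positivity)
    calc (g k : ℝ) ≤ (⌊(M : ℝ) * y k⌋₊ : ℝ) := by exact_mod_cast h1
      _ ≤ (M : ℝ) * y k := h2
  have hghigh : ∀ k, (M : ℝ) * y k ≤ (g k : ℝ) + 1 := by
    intro k
    rcases Nat.le_total ⌊(M : ℝ) * y k⌋₊ (M - 1) with h' | h'
    · have hg : g k = ⌊(M : ℝ) * y k⌋₊ := by simp only [hgdef]; omega
      rw [hg]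
      exact le_of_lt (Nat.lt_floor_add_one _)
    · have hg : g k = M - 1 := by simp only [hgdef]; omega
      rw [hg]
      have h2 : ((M - 1 : ℕ) : ℝ) + 1 = (M : ℝ) := by
        have : (1 : ℕ) ≤ M := hM1
        push_cast [this]
        ring
      rw [h2]
      calc (M : ℝ) * y k ≤ (M : ℝ) * 1 := by
            have := (hy01 k).2
            nlinarith
        _ = (M : ℝ) := mul_one _
  -- the data for the mega lemma
  have hlastne0 : (Fin.last n : Fin (n + 1)) ≠ 0 := by
    intro h
    have := congrArg Fin.val h
    simp [Fin.last] at this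
    omega
  set szc : Fin n → Fin (n + 1) → ℕ :=
    fun i k => if k = 0 ∨ k = Fin.last n then 0 else szn' i (g k) with hszcdef
  set cz : Fin n → Fin (n + 1) → ℤ :=
    fun i k => if k = 0 then 0 else if k = Fin.last n then (M : ℤ) ^ 2
      else (Vz i (g k) : ℤ) - (szn' i (g k) : ℤ) * (g k : ℤ) with hczdef
  set lb : Fin (n + 1) → ℤ :=
    fun k => if k = 0 then 0 else if k = Fin.last n then (M : ℤ) else (g k : ℤ) with hlbdef
  set ub : Fin (n + 1) → ℤ :=
    fun k => if k = 0 then 0 else if k = Fin.last n then (M : ℤ) else (g k : ℤ) + 1 with hubdef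
  -- the key translation: the CDF at points inside cell k
  have hVW : ∀ (i : Fin n) (k : Fin (n + 1)) (t : ℝ),
      (lb k : ℝ) ≤ t → t ≤ (ub k : ℝ) →
      (∫ s in (0 : ℝ)..(t / (M : ℝ)), f i s)
        = ((cz i k : ℝ) + (szc i k : ℝ) * t) / (M : ℝ) ^ 2 := by
    intro i k t h1 h2
    by_cases hk0 : k = 0
    · have hlb' : (lb k : ℝ) = 0 := by simp [hlbdef, hk0]
      have hub' : (ub k : ℝ) = 0 := by simp [hubdef, hk0]
      rw [hlb'] at h1
      rw [hub'] at h2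
      have ht : t = 0 := le_antisymm h2 h1
      rw [ht]
      simp only [zero_div, intervalIntegral.integral_same]
      simp [hczdef, hszcdef, hk0]
    · by_cases hkl : k = Fin.last n
      · have hlb' : (lb k : ℝ) = (M : ℝ) := by simp [hlbdef, hkl, hlastne0]
        have hub' : (ub k : ℝ) = (M : ℝ) := by simp [hubdef, hkl, hlastne0]
        rw [hlb'] at h1
        rw [hub'] at h2
        have ht : t = (M : ℝ) := le_antisymm h2 h1
        rw [ht, div_self hMne]
        rw [hnorm i]
        have hcz' : (cz i k : ℝ) = (M : ℝ) ^ 2 := by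
          simp only [hczdef, if_neg hk0, if_pos hkl]
          push_cast
          ring
        have hszc' : (szc i k : ℝ) = 0 := by
          simp [hszcdef, hkl]
        rw [hcz', hszc']
        field_simp
        ring
      · have hlb' : (lb k : ℝ) = (g k : ℝ) := by
          simp only [hlbdef, if_neg hk0, if_neg hkl]
          push_cast
          ring
        have hub' : (ub k : ℝ) = (g k : ℝ) + 1 := by
          simp only [hubdef, if_neg hk0, if_neg hkl]
          push_cast
          ring
        rw [hlb'] at h1
        rw [hub'] at h2
        have hx1 : ((g k : ℕ) : ℝ) / (M : ℝ) ≤ t / (M : ℝ) := by gcongr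
        have hx2 : t / (M : ℝ) ≤ (((g k : ℕ) : ℝ) + 1) / (M : ℝ) := by gcongr
        have h3 := hszn' i (g k) (hgM k) (t / (M : ℝ)) hx1 hx2
        rw [h3, hVgrid i (g k) (le_of_lt (hgM k))]
        have hcz' : (cz i k : ℝ) = (Vz i (g k) : ℝ) - (szn' i (g k) : ℝ) * (g k : ℝ) := by
          simp only [hczdef, if_neg hk0, if_neg hkl]
          push_cast
          ring
        have hszc' : (szc i k : ℝ) = (szn' i (g k) : ℝ) := by
          simp only [hszcdef]
          rw [if_neg (by tauto)]
        rw [hcz', hszc']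
        field_simp
        ring
  -- integrals of pieces as differences of CDF values
  have hpieceInt : ∀ (i : Fin n) (a : Fin n) (yy : Fin (n + 1) → ℝ),
      (∀ k, 0 ≤ yy k ∧ yy k ≤ 1) →
      (∫ x in (yy a.castSucc)..(yy a.succ), f i x)
        = (∫ t in (0 : ℝ)..(yy a.succ), f i t) - (∫ t in (0 : ℝ)..(yy a.castSucc), f i t) := by
    intro i a yy hyy
    rw [intervalIntegral.integral_interval_sub_left
      (hInt i 0 (yy a.succ) ⟨le_refl 0, zero_le_one⟩ ⟨(hyy _).1, (hyy _).2⟩)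
      (hInt i 0 (yy a.castSucc) ⟨le_refl 0, zero_le_one⟩ ⟨(hyy _).1, (hyy _).2⟩)]
  -- hypotheses of the mega lemma
  have hlb0 : lb 0 = 0 := by simp [hlbdef]
  have hub0 : ub 0 = 0 := by simp [hubdef]
  have hlbl : lb (Fin.last n) = (M : ℤ) := by simp [hlbdef, hlastne0]
  have hubl : ub (Fin.last n) = (M : ℤ) := by simp [hubdef, hlastne0]
  have hlbnn : ∀ k, 0 ≤ lb k := by
    intro k
    simp only [hlbdef]
    split
    · exact le_refl 0
    · split
      · positivity
      · positivity
  have huble : ∀ k, ub k ≤ (M : ℤ) := by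
    intro k
    simp only [hubdef]
    split
    · positivity
    · split
      · exact le_refl _
      · have := hgM k
        omega
  have hpiece : ∀ (i : Fin n) (a : Fin n),
      szc i a.castSucc + szc i a.succ ≤ min 2 (n - 1) * M ^ 2 := by
    intro i a
    have hcsl : a.castSucc ≠ Fin.last n := ne_of_lt (Fin.castSucc_lt_last a)
    have hsn0 : a.succ ≠ (0 : Fin (n + 1)) := Fin.succ_ne_zero a
    have hMsq : 0 < M ^ 2 := by positivity
    by_cases h0 : a.castSucc = 0
    · by_cases hl : a.succ = Fin.last n
      · have e1 : szc i a.castSucc = 0 := by simp [hszcdef, h0]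
        have e2 : szc i a.succ = 0 := by simp [hszcdef, hl]
        rw [e1, e2]
        exact Nat.zero_le _
      · -- n ≥ 2 here
        have hn2 : 2 ≤ n := by
          have hv1 : a.val = 0 := by
            have := congrArg Fin.val h0
            simpa using this
          have hv2 : a.val + 1 ≠ n := by
            intro hv
            apply hl
            rw [Fin.ext_iff]
            simp [Fin.last, hv]
          have := a.isLt
          omega
        have e1 : szc i a.castSucc = 0 := by simp [hszcdef, h0]
        have e2 : szc i a.succ ≤ M ^ 2 := by
          simp only [hszcdef]
          split
          · exact Nat.zero_le _
          · exact hsznle i _ (hgM _)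
        have e3 : 1 * M ^ 2 ≤ min 2 (n - 1) * M ^ 2 := by
          apply Nat.mul_le_mul_right
          omega
        omega
    · by_cases hl : a.succ = Fin.last n
      · have hn2 : 2 ≤ n := by
          have hv1 : a.val ≠ 0 := by
            intro hv
            apply h0
            rw [Fin.ext_iff]
            simpa using hv
          have := a.isLt
          omega
        have e1 : szc i a.succ = 0 := by simp [hszcdef, hl]
        have e2 : szc i a.castSucc ≤ M ^ 2 := by
          simp only [hszcdef]
          split
          · exact Nat.zero_le _
          · exact hsznle i _ (hgM _)
        have e3 : 1 * M ^ 2 ≤ min 2 (n - 1) * M ^ 2 := by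
          apply Nat.mul_le_mul_right
          omega
        omega
      · -- n ≥ 3 here
        have hn3 : 3 ≤ n := by
          have hv1 : a.val ≠ 0 := by
            intro hv
            apply h0
            rw [Fin.ext_iff]
            simpa using hv
          have hv2 : a.val + 1 ≠ n := by
            intro hv
            apply hl
            rw [Fin.ext_iff]
            simp [Fin.last, hv]
          have := a.isLt
          omega
        have e1 : szc i a.castSucc ≤ M ^ 2 := by
          simp only [hszcdef]
          split
          · exact Nat.zero_le _
          · exact hsznle i _ (hgM _)
        have e2 : szc i a.succ ≤ M ^ 2 := by
          simp only [hszcdef]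
          split
          · exact Nat.zero_le _
          · exact hsznle i _ (hgM _)
        have e3 : 2 * M ^ 2 ≤ min 2 (n - 1) * M ^ 2 := by
          apply Nat.mul_le_mul_right
          omega
        omega
  -- the initial scaled cut vector
  set u0 : Fin (n + 1) → ℝ := fun k => (M : ℝ) * y k with hu0def
  have hu0m : Monotone u0 := by
    intro k k' hkk
    simp only [hu0def]
    have := hy hkk
    nlinarith
  have hu0box : ∀ k, (lb k : ℝ) ≤ u0 k ∧ u0 k ≤ (ub k : ℝ) := by
    intro k
    by_cases hk0 : k = 0
    · subst hk0
      simp only [hu0def, hy0, mul_zero]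
      rw [hlb0, hub0]
      norm_num
    · by_cases hkl : k = Fin.last n
      · subst hkl
        simp only [hu0def, hy1, mul_one]
        rw [hlbl, hubl]
        norm_num
      · have hlb' : (lb k : ℝ) = (g k : ℝ) := by
          simp only [hlbdef, if_neg hk0, if_neg hkl]; push_cast; ring
        have hub' : (ub k : ℝ) = (g k : ℝ) + 1 := by
          simp only [hubdef, if_neg hk0, if_neg hkl]; push_cast; ring
        rw [hlb', hub']
        exact ⟨hglow k, hghigh k⟩
  have hu0val : ∀ (i : Fin n) (k : Fin (n + 1)),
      (∫ s in (0 : ℝ)..(y k), f i s)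
        = ((cz i k : ℝ) + (szc i k : ℝ) * u0 k) / (M : ℝ) ^ 2 := by
    intro i k
    have h1 := hVW i k (u0 k) (hu0box k).1 (hu0box k).2
    have h2 : u0 k / (M : ℝ) = y k := by
      simp only [hu0def]
      field_simp
    rw [h2] at h1
    exact h1
  have hu0EF : ∀ i j : Fin n, Av n szc cz i (π i) u0 ≥
      Av n szc cz i (π j) u0 - (M : ℝ) ^ 2 * ((M : ℝ) ^ (4 * n))⁻¹ := by
    intro i j
    have h1 := hEF i j
    have hMsq : (0 : ℝ) < (M : ℝ) ^ 2 := by positivity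
    have h2 : ∀ a : Fin n, (∫ x in (y a.castSucc)..(y a.succ), f i x)
        = Av n szc cz i a u0 / (M : ℝ) ^ 2 := by
      intro a
      rw [hpieceInt i a y hy01, hu0val i a.succ, hu0val i a.castSucc]
      simp only [Av]
      field_simp
    rw [h2 (π i), h2 (π j)] at h1
    have h4 : Av n szc cz i (π j) u0 / (M : ℝ) ^ 2 - (M : ℝ) ^ 2 * ((M : ℝ) ^ (4 * n))⁻¹ / (M : ℝ) ^ 2
        ≤ Av n szc cz i (π i) u0 / (M : ℝ) ^ 2 := by
      have h5 : (M : ℝ) ^ 2 * ((M : ℝ) ^ (4 * n))⁻¹ / (M : ℝ) ^ 2 = ((M : ℝ) ^ (4 * n))⁻¹ := by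
        field_simp
      rw [h5]
      linarith
    have h6 := mul_le_mul_of_nonneg_right h4 (le_of_lt hMsq)
    calc Av n szc cz i (π i) u0
        = Av n szc cz i (π i) u0 / (M : ℝ) ^ 2 * (M : ℝ) ^ 2 := by field_simp
      _ ≥ (Av n szc cz i (π j) u0 / (M : ℝ) ^ 2
            - (M : ℝ) ^ 2 * ((M : ℝ) ^ (4 * n))⁻¹ / (M : ℝ) ^ 2) * (M : ℝ) ^ 2 := h6
      _ = Av n szc cz i (π j) u0 - (M : ℝ) ^ 2 * ((M : ℝ) ^ (4 * n))⁻¹ := by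
          field_simp
  -- apply the mega lemma
  obtain ⟨u', hu'm, hu'box, hu'EF⟩ := mega n M hM hn szc cz lb ub π
    hlb0 hub0 hlbl hubl hlbnn huble hpiece u0 hu0m hu0box hu0EF
  -- final cuts
  refine ⟨fun k => u' k / (M : ℝ), ?_, ?_, ?_, ?_⟩
  · intro k k' hkk
    have := hu'm hkk
    exact div_le_div_of_nonneg_right this (le_of_lt hMR)
  · show u' 0 / (M : ℝ) = 0
    have h1 := (hu'box 0).1
    have h2 := (hu'box 0).2
    rw [hlb0] at h1
    rw [hub0] at h2
    push_cast at h1 h2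
    have : u' 0 = 0 := le_antisymm h2 h1
    rw [this, zero_div]
  · show u' (Fin.last n) / (M : ℝ) = 1
    have h1 := (hu'box (Fin.last n)).1
    have h2 := (hu'box (Fin.last n)).2
    rw [hlbl] at h1
    rw [hubl] at h2
    push_cast at h1 h2
    have : u' (Fin.last n) = (M : ℝ) := le_antisymm h2 h1
    rw [this, div_self hMne]
  · intro i j
    have hy'01 : ∀ k, 0 ≤ u' k / (M : ℝ) ∧ u' k / (M : ℝ) ≤ 1 := by
      intro k
      have h1 := (hu'box k).1
      have h2 := (hu'box k).2
      have h3 : (0 : ℝ) ≤ (lb k : ℝ) := by exact_mod_cast hlbnn k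
      have h4 : (ub k : ℝ) ≤ (M : ℝ) := by exact_mod_cast huble k
      constructor
      · apply div_nonneg (by linarith) (le_of_lt hMR)
      · rw [div_le_one hMR]
        linarith
    have hval : ∀ k : Fin (n + 1), (∫ s in (0 : ℝ)..(u' k / (M : ℝ)), f i s)
        = ((cz i k : ℝ) + (szc i k : ℝ) * u' k) / (M : ℝ) ^ 2 :=
      fun k => hVW i k (u' k) ((hu'box k).1) ((hu'box k).2)
    have h2 : ∀ a : Fin n, (∫ x in (u' a.castSucc / (M : ℝ))..(u' a.succ / (M : ℝ)), f i x)
        = Av n szc cz i a u' / (M : ℝ) ^ 2 := by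
      intro a
      rw [hpieceInt i a (fun k => u' k / (M : ℝ)) hy'01, hval a.succ, hval a.castSucc]
      simp only [Av]
      field_simp
    rw [h2 (π i), h2 (π j)]
    have h5 := hu'EF i j
    have hMsq : (0 : ℝ) < (M : ℝ) ^ 2 := by positivity
    exact div_le_div_of_nonneg_right h5 (le_of_lt hMsq)
end Main
end
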